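/- arXiv:1908.02894 — 14 statements merged into one kernel-verified Lean document; each statement's English description precedes it below -/
import Mathlib

section
/- Fix a set X of problem instances, a parameter set P, and for each ρ ∈ P a utility function u_ρ : X → ℝ; let U = {u_ρ : ρ ∈ P} and let U* be its dual class. Suppose U* is (F, G, k)-piecewise decomposable with k ≥ 1 and that the dual class G* of the boundary class has VC dimension at most v. Then for every N ≥ 1 and all instances x_1, …, x_N ∈ X, there exist M ≤ (e·k·N)^v subsets P_1, …, P_M partitioning P such that for each j ∈ [M] there are piece functions f_1, …, f_N ∈ F with u_ρ(x_i) = f_i(u_ρ) for all ρ ∈ P_j and all i ∈ [N] (e is Euler's number). -/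
/-- If the dual class `U*` of `U = {u_ρ : ρ ∈ P}` is `(F, G, k)`-piecewise
decomposable with `k ≥ 1` and the dual `G*` of the boundary class has VC dimension at most
`v`, then for any `N ≥ 1` instances `x₁, …, x_N`, there is a partition of the parameter
space `P` into `M ≤ (e·k·N)^v` subsets on each of which the dual functions
`u*_{x₁}, …, u*_{x_N}` are simultaneously given by fixed piece functions from `F`. -/
theorem stmt_2 {X P : Type*} (u : P → X → ℝ)
    (F : Set ({f // f ∈ Set.range u} → ℝ)) (G : Set ({f // f ∈ Set.range u} → Bool))
    (k v : ℕ) (hk : 1 ≤ k)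
    (hdecomp : ∀ x : X, ∃ g : Fin k → ({f // f ∈ Set.range u} → Bool),
      (∀ i, g i ∈ G) ∧ ∃ f : (Fin k → Bool) → ({f // f ∈ Set.range u} → ℝ),
        (∀ b, f b ∈ F) ∧
        ∀ w : {f // f ∈ Set.range u}, w.1 x = f (fun i => g i w) w)
    (hVCdual : ∀ s : Finset G,
      (∀ b : G → Bool, ∃ w : {f // f ∈ Set.range u}, ∀ g ∈ s, g.1 w = b g) →
      s.card ≤ v)
    (N : ℕ) (hN : 1 ≤ N) (x : Fin N → X) :
    ∃ (M : ℕ) (Q : Fin M → Set P),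
      (M : ℝ) ≤ (Real.exp 1 * k * N) ^ v ∧
      (∀ ρ : P, ∃! j : Fin M, ρ ∈ Q j) ∧
      ∀ j : Fin M, ∃ f : Fin N → ({f // f ∈ Set.range u} → ℝ),
        (∀ i, f i ∈ F) ∧
        ∀ ρ ∈ Q j, ∀ i : Fin N, u ρ (x i) = f i ⟨u ρ, ρ, rfl⟩ := by
  classical
  choose g hg f hf hval using hdecomp
  -- the signature map
  set σ : P → (Fin N × Fin k → Bool) :=
    fun ρ p => g (x p.1) p.2 ⟨u ρ, ρ, rfl⟩ with hσdef
  -- the finset of realized patterns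
  set T : Finset (Fin N × Fin k → Bool) :=
    Finset.univ.filter (fun b => ∃ ρ, σ ρ = b) with hTdef
  have hmemT : ∀ ρ : P, σ ρ ∈ T := fun ρ => by
    simp [hTdef]
  -- realized patterns as subsets of coordinates
  set supp : (Fin N × Fin k → Bool) → Finset (Fin N × Fin k) :=
    fun b => Finset.univ.filter (fun p => b p = true) with hsuppdef
  have hsupp_inj : Function.Injective supp := by
    intro b b' h
    funext p
    have : (p ∈ supp b) = (p ∈ supp b') := by rw [h]
    simp only [hsuppdef, Finset.mem_filter, Finset.mem_univ, true_and, eq_iff_iff] at this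
    cases hb : b p <;> cases hb' : b' p <;> rw [hb, hb'] at this <;> simp at this ⊢
  set 𝒜 : Finset (Finset (Fin N × Fin k)) := T.image supp with h𝒜def
  have hcard𝒜 : 𝒜.card = T.card := Finset.card_image_of_injective _ hsupp_inj
  -- every set shattered by 𝒜 has cardinality at most v
  have hshat : ∀ t : Finset (Fin N × Fin k), 𝒜.Shatters t → t.card ≤ v := by
    intro t ht
    set φ : Fin N × Fin k → G := fun p => ⟨g (x p.1) p.2, hg (x p.1) p.2⟩ with hφdef
    -- φ is injective on t
    have hinj : Set.InjOn φ t := by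
      intro p hp q hq hpq
      by_contra hne
      obtain ⟨A, hA, hAt⟩ := ht (t := {p}) (Finset.singleton_subset_iff.2 hp)
      obtain ⟨b, hb, rfl⟩ := Finset.mem_image.1 hA
      obtain ⟨ρ, rfl⟩ := (Finset.mem_filter.1 hb).2
      have hpA : p ∈ supp (σ ρ) := by
        have : p ∈ t ∩ supp (σ ρ) := hAt ▸ Finset.mem_singleton_self p
        exact (Finset.mem_inter.1 this).2
      have hqA : q ∉ supp (σ ρ) := by
        intro hq'
        have hmem : q ∈ t ∩ supp (σ ρ) := Finset.mem_inter.2 ⟨hq, hq'⟩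
        rw [hAt, Finset.mem_singleton] at hmem
        exact hne (hmem ▸ rfl)
      have hgeq : g (x p.1) p.2 = g (x q.1) q.2 := congrArg Subtype.val hpq
      have hpv : σ ρ p = true := by
        simpa [hsuppdef] using hpA
      have hqv : σ ρ q = true := by
        show g (x q.1) q.2 ⟨u ρ, ρ, rfl⟩ = true
        rw [← hgeq]
        exact hpv
      exact hqA (by simpa [hsuppdef] using hqv)
    have hcardim : (t.image φ).card = t.card := Finset.card_image_iff.2 hinj
    rw [← hcardim]
    apply hVCdual
    intro b
    obtain ⟨A, hA, hAt⟩ := ht (t := t.filter (fun p => b (φ p) = true))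
      (Finset.filter_subset _ _)
    obtain ⟨b', hb', rfl⟩ := Finset.mem_image.1 hA
    obtain ⟨ρ, rfl⟩ := (Finset.mem_filter.1 hb').2
    refine ⟨⟨u ρ, ρ, rfl⟩, ?_⟩
    intro gg hgg
    obtain ⟨p, hp, rfl⟩ := Finset.mem_image.1 hgg
    show σ ρ p = b (φ p)
    cases hb : b (φ p) with
    | true =>
      have hps : p ∈ t ∩ supp (σ ρ) := by
        rw [hAt]
        exact Finset.mem_filter.2 ⟨hp, hb⟩
      have := (Finset.mem_inter.1 hps).2
      simpa [hsuppdef] using this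
    | false =>
      cases hσp : σ ρ p with
      | false => rfl
      | true =>
        have hps : p ∈ supp (σ ρ) := by simp [hsuppdef, hσp]
        have hmem : p ∈ t ∩ supp (σ ρ) := Finset.mem_inter.2 ⟨hp, hps⟩
        rw [hAt, Finset.mem_filter] at hmem
        rw [hmem.2] at hb
        exact Bool.noConfusion hb
  -- cardinality bound
  have hvc : 𝒜.vcDim ≤ v := by
    apply Finset.sup_le
    intro t ht
    exact hshat t (Finset.mem_shatterer.1 ht)
  have hn1 : 1 ≤ N * k := Nat.one_le_iff_ne_zero.2 (by positivity)
  have hcardT : T.card ≤ (v + 1) * (N * k) ^ v := by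
    have h1 : 𝒜.card ≤ 𝒜.shatterer.card := Finset.card_le_card_shatterer 𝒜
    have h2 : 𝒜.shatterer.card ≤
        ∑ i ∈ Finset.Iic 𝒜.vcDim, (Fintype.card (Fin N × Fin k)).choose i :=
      Finset.card_shatterer_le_sum_vcDim
    have h3 : ∑ i ∈ Finset.Iic 𝒜.vcDim, (Fintype.card (Fin N × Fin k)).choose i ≤
        ∑ i ∈ Finset.Iic v, (Fintype.card (Fin N × Fin k)).choose i :=
      Finset.sum_le_sum_of_subset (Finset.Iic_subset_Iic.2 hvc)
    have h4 : ∑ i ∈ Finset.Iic v, (Fintype.card (Fin N × Fin k)).choose i ≤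
        (v + 1) * (N * k) ^ v := by
      have : ∀ i ∈ Finset.Iic v, (Fintype.card (Fin N × Fin k)).choose i ≤ (N * k) ^ v := by
        intro i hi
        calc (Fintype.card (Fin N × Fin k)).choose i
            ≤ (Fintype.card (Fin N × Fin k)) ^ i := Nat.choose_le_pow _ _
          _ = (N * k) ^ i := by simp
          _ ≤ (N * k) ^ v := Nat.pow_le_pow_right hn1 (Finset.mem_Iic.1 hi)
      calc ∑ i ∈ Finset.Iic v, (Fintype.card (Fin N × Fin k)).choose i
          ≤ ∑ _i ∈ Finset.Iic v, (N * k) ^ v := Finset.sum_le_sum this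
        _ = (v + 1) * (N * k) ^ v := by
            rw [Finset.sum_const, Nat.card_Iic, smul_eq_mul]
    omega
  have hM : (T.card : ℝ) ≤ (Real.exp 1 * k * N) ^ v := by
    calc (T.card : ℝ) ≤ (((v + 1) * (N * k) ^ v : ℕ) : ℝ) := by exact_mod_cast hcardT
      _ = ((v : ℝ) + 1) * ((N * k : ℕ) : ℝ) ^ v := by push_cast; ring
      _ ≤ Real.exp 1 ^ v * ((N * k : ℕ) : ℝ) ^ v := by
          apply mul_le_mul_of_nonneg_right _ (by positivity)
          rw [Real.exp_one_pow]
          exact Real.add_one_le_exp (v : ℝ)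
      _ = (Real.exp 1 * k * N) ^ v := by
          rw [← mul_pow]
          congr 1
          push_cast
          ring
  -- build the partition
  have hTcard : Fintype.card ↥T = T.card := Fintype.card_coe T
  set e : ↥T ≃ Fin T.card := Fintype.equivFinOfCardEq hTcard with hedef
  refine ⟨T.card, fun j => {ρ | e ⟨σ ρ, hmemT ρ⟩ = j}, hM, ?_, ?_⟩
  · intro ρ
    exact ⟨e ⟨σ ρ, hmemT ρ⟩, rfl, fun j hj => hj.symm⟩
  · intro j
    refine ⟨fun i => f (x i) (fun j' => (e.symm j).1 (i, j')), fun i => hf _ _, ?_⟩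
    intro ρ hρ i
    have hρ' : e ⟨σ ρ, hmemT ρ⟩ = j := hρ
    have hsub : (⟨σ ρ, hmemT ρ⟩ : ↥T) = e.symm j := by
      rw [← hρ', Equiv.symm_apply_apply]
    have hσρ : σ ρ = (e.symm j).1 := congrArg Subtype.val hsub
    have hv' : u ρ (x i) = f (x i) (fun j' => g (x i) j' ⟨u ρ, ρ, rfl⟩) ⟨u ρ, ρ, rfl⟩ :=
      hval (x i) ⟨u ρ, ρ, rfl⟩
    rw [hv']
    congr 1
    funext j'
    have : g (x i) j' ⟨u ρ, ρ, rfl⟩ = σ ρ (i, j') := rfl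
    rw [this, hσρ]
end

section
/- Fix a set X of problem instances, a parameter set P, and for each ρ ∈ P a utility function u_ρ : X → ℝ; let U = {u_ρ : ρ ∈ P} and let U* be its dual class. Suppose U* is (F, G, k)-piecewise decomposable with k ≥ 1, the dual class G* has VC dimension at most v, and the dual class F* has pseudo-dimension at most p. Then for every N ≥ 1, all x_1, …, x_N ∈ X and all thresholds z_1, …, z_N ∈ ℝ, the number of distinct binary vectors (1{u_ρ(x_1) ≥ z_1}, …, 1{u_ρ(x_N) ≥ z_N}) obtained as ρ ranges over P is at most (e·k·N)^v · (e·N)^p, where e is Euler's number. -/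
lemma sum_choose_le_pow (n d : ℕ) : ∑ j ∈ Finset.Iic d, n.choose j ≤ (n + 1) ^ d := by
  have h : (n + 1) ^ d = ∑ j ∈ Finset.range (d + 1), n ^ j * 1 ^ (d - j) * d.choose j :=
    add_pow n 1 d
  have hr : Finset.Iic d = Finset.range (d + 1) := by ext j; simp [Nat.lt_succ_iff]
  rw [h, ← hr]
  refine Finset.sum_le_sum fun j hj => ?_
  have h1 : 1 ≤ d.choose j := Nat.choose_pos (Finset.mem_Iic.1 hj)
  calc n.choose j ≤ n ^ j := Nat.choose_le_pow n j
    _ = n ^ j * 1 * 1 := by ring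
    _ ≤ n ^ j * 1 ^ (d - j) * d.choose j := by simpa using Nat.mul_le_mul_left (n ^ j) h1

lemma sauer_bool {ι W : Type*} [Fintype ι] [DecidableEq ι] (T : W → ι → Bool) (d : ℕ)
    (h : ∀ s : Finset ι, (∀ b : ι → Bool, ∃ w, ∀ i ∈ s, T w i = b i) → s.card ≤ d) :
    (Set.range T).ncard ≤ (Fintype.card ι + 1) ^ d := by
  classical
  have hfin : (Set.range T).Finite := Set.toFinite _
  set R : Finset (ι → Bool) := hfin.toFinset with hR
  have hncard : (Set.range T).ncard = R.card := Set.ncard_eq_toFinset_card _ hfin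
  set φ : (ι → Bool) → Finset ι := fun b => Finset.univ.filter (fun i => b i = true) with hφ
  have hφinj : Function.Injective φ := by
    intro a b hab
    funext i
    have h2 : (i ∈ φ a) ↔ (i ∈ φ b) := by rw [hab]
    simp only [hφ, Finset.mem_filter, Finset.mem_univ, true_and] at h2
    cases ha : a i <;> cases hb : b i <;> simp_all
  set 𝒜 : Finset (Finset ι) := R.image φ with h𝒜
  have hvc : 𝒜.vcDim ≤ d := by
    apply Finset.sup_le
    intro s hs
    rw [Finset.mem_shatterer] at hs
    apply h
    intro b
    obtain ⟨a, ha, hsa⟩ := hs (Finset.filter_subset (fun i => b i = true) s)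
    obtain ⟨c, hc, rfl⟩ := Finset.mem_image.1 ha
    rw [hR, Set.Finite.mem_toFinset] at hc
    obtain ⟨w, rfl⟩ := hc
    refine ⟨w, fun i hi => ?_⟩
    have hmem : (i ∈ s ∩ φ (T w)) ↔ i ∈ Finset.filter (fun i => b i = true) s := by rw [hsa]
    simp only [hφ, Finset.mem_inter, Finset.mem_filter, Finset.mem_univ, true_and, hi] at hmem
    cases hb : b i <;> cases ht : T w i <;> simp_all
  calc (Set.range T).ncard = R.card := hncard
    _ = 𝒜.card := (Finset.card_image_of_injective _ hφinj).symm
    _ ≤ 𝒜.shatterer.card := Finset.card_le_card_shatterer _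
    _ ≤ ∑ j ∈ Finset.Iic 𝒜.vcDim, (Fintype.card ι).choose j :=
        Finset.card_shatterer_le_sum_vcDim
    _ ≤ ∑ j ∈ Finset.Iic d, (Fintype.card ι).choose j :=
        Finset.sum_le_sum_of_subset (Finset.Iic_subset_Iic.2 hvc)
    _ ≤ (Fintype.card ι + 1) ^ d := sum_choose_le_pow _ _


/-- If the dual class `U*` of `U = {u_ρ : ρ ∈ P}` is `(F, G, k)`-piecewise
decomposable with `k ≥ 1`, `VC(G*) ≤ v` and `pdim(F*) ≤ p`, then for any `N ≥ 1` instances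
`x₁, …, x_N` and thresholds `z₁, …, z_N`, the number of distinct binary vectors
`(1{u_ρ(x₁) ≥ z₁}, …, 1{u_ρ(x_N) ≥ z_N})` obtained as `ρ` ranges over `P` is at most
`(e·k·N)^v · (e·N)^p`. -/
theorem stmt_3 {X P : Type*} (u : P → X → ℝ)
    (F : Set ({f // f ∈ Set.range u} → ℝ)) (G : Set ({f // f ∈ Set.range u} → Bool))
    (k v p : ℕ) (hk : 1 ≤ k)
    (hdecomp : ∀ x : X, ∃ g : Fin k → ({f // f ∈ Set.range u} → Bool),
      (∀ i, g i ∈ G) ∧ ∃ f : (Fin k → Bool) → ({f // f ∈ Set.range u} → ℝ),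
        (∀ b, f b ∈ F) ∧
        ∀ w : {f // f ∈ Set.range u}, w.1 x = f (fun i => g i w) w)
    (hVCdual : ∀ s : Finset G,
      (∀ b : G → Bool, ∃ w : {f // f ∈ Set.range u}, ∀ g ∈ s, g.1 w = b g) →
      s.card ≤ v)
    (hPdimdual : ∀ s : Finset F,
      (∃ z : F → ℝ, ∀ b : F → Bool, ∃ w : {f // f ∈ Set.range u},
        ∀ f ∈ s, (z f ≤ f.1 w ↔ b f = true)) → s.card ≤ p)
    (N : ℕ) (hN : 1 ≤ N) (x : Fin N → X) (z : Fin N → ℝ) :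
    (Set.ncard {vec : Fin N → Bool | ∃ ρ : P, ∀ i, (vec i = true ↔ z i ≤ u ρ (x i))} : ℝ)
      ≤ (Real.exp 1 * k * N) ^ v * (Real.exp 1 * N) ^ p := by
  classical
  choose g hg f hf heq using hdecomp
  set B : {f // f ∈ Set.range u} → (Fin N × Fin k) → Bool :=
    fun w q => g (x q.1) q.2 w with hB
  set T : ((Fin N × Fin k) → Bool) → {f // f ∈ Set.range u} → Fin N → Bool :=
    fun β w i => decide (z i ≤ f (x i) (fun j => β (i, j)) w) with hT
  -- bound on the number of boundary patterns
  have hBcount : (Set.range B).ncard ≤ (N * k + 1) ^ v := by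
    have := sauer_bool B v ?_
    · simpa using this
    intro s hs
    set ψ : (Fin N × Fin k) → G := fun q => ⟨g (x q.1) q.2, hg _ _⟩ with hψ
    have hinj : Set.InjOn ψ s := by
      intro q₁ h₁ q₂ h₂ hψeq
      by_contra hne
      obtain ⟨w, hw⟩ := hs (fun q => decide (q = q₁))
      have e₁ := hw q₁ h₁
      have e₂ := hw q₂ h₂
      have hval : g (x q₁.1) q₁.2 = g (x q₂.1) q₂.2 := congrArg Subtype.val hψeq
      simp only [hB] at e₁ e₂
      rw [← hval, e₁] at e₂
      simp only [decide_eq_decide] at e₂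
      exact hne (e₂.mp trivial).symm
    have hcard : s.card = (s.image ψ).card := (Finset.card_image_of_injOn hinj).symm
    rw [hcard]
    apply hVCdual
    intro b
    obtain ⟨w, hw⟩ := hs (fun q => b (ψ q))
    refine ⟨w, fun g' hg' => ?_⟩
    obtain ⟨q, hq, rfl⟩ := Finset.mem_image.1 hg'
    exact hw q hq
  -- bound on the number of sign patterns for each fixed boundary pattern
  have hTcount : ∀ β, (Set.range (T β)).ncard ≤ (N + 1) ^ p := by
    intro β
    have := sauer_bool (T β) p ?_
    · simpa using this
    intro s hs
    set ψ : Fin N → F := fun i => ⟨f (x i) (fun j => β (i, j)), hf _ _⟩ with hψ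
    have hinj : Set.InjOn ψ s := by
      intro i₁ h₁ i₂ h₂ hψeq
      by_contra hne
      have hval : f (x i₁) (fun j => β (i₁, j)) = f (x i₂) (fun j => β (i₂, j)) :=
        congrArg Subtype.val hψeq
      have hne' : i₂ ≠ i₁ := fun h => hne h.symm
      obtain ⟨w₁, hw₁⟩ := hs (fun i => decide (i = i₁))
      obtain ⟨w₂, hw₂⟩ := hs (fun i => decide (i = i₂))
      have b₁ : z i₁ ≤ f (x i₁) (fun j => β (i₁, j)) w₁ := by
        simpa [hT] using hw₁ i₁ h₁
      have b₂ : ¬ z i₂ ≤ f (x i₂) (fun j => β (i₂, j)) w₁ := by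
        simpa [hT, hne'] using hw₁ i₂ h₂
      have b₃ : ¬ z i₁ ≤ f (x i₁) (fun j => β (i₁, j)) w₂ := by
        simpa [hT, hne] using hw₂ i₁ h₁
      have b₄ : z i₂ ≤ f (x i₂) (fun j => β (i₂, j)) w₂ := by
        simpa [hT] using hw₂ i₂ h₂
      rw [hval] at b₁ b₃
      push_neg at b₂ b₃
      linarith
    have hcard : s.card = (s.image ψ).card := (Finset.card_image_of_injOn hinj).symm
    rw [hcard]
    apply hPdimdual
    refine ⟨fun f' => if h : ∃ i, i ∈ s ∧ ψ i = f' then z h.choose else 0, ?_⟩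
    intro b
    obtain ⟨w, hw⟩ := hs (fun i => b (ψ i))
    refine ⟨w, fun f' hf' => ?_⟩
    obtain ⟨i₀, hi₀, rfl⟩ := Finset.mem_image.1 hf'
    have hex : ∃ i, i ∈ s ∧ ψ i = ψ i₀ := ⟨i₀, hi₀, rfl⟩
    have hch : hex.choose = i₀ := hinj hex.choose_spec.1 hi₀ hex.choose_spec.2
    have hz : (if h : ∃ i, i ∈ s ∧ ψ i = ψ i₀ then z h.choose else 0) = z i₀ := by
      rw [dif_pos hex, hch]
    show (if h : ∃ i, i ∈ s ∧ ψ i = ψ i₀ then z h.choose else 0) ≤ (ψ i₀).1 w ↔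
      b (ψ i₀) = true
    rw [hz, ← hw i₀ hi₀]
    simp [hT, hψ]
  -- assemble
  set S : Set (Fin N → Bool) :=
    {vec : Fin N → Bool | ∃ ρ : P, ∀ i, (vec i = true ↔ z i ≤ u ρ (x i))} with hS
  set A : Finset ((Fin N × Fin k) → Bool) := (Set.toFinite (Set.range B)).toFinset with hA
  set t : ((Fin N × Fin k) → Bool) → Finset (Fin N → Bool) :=
    fun β => (Set.toFinite (Set.range (T β))).toFinset with ht
  have hsub : S ⊆ ↑(A.biUnion t) := by
    rintro vec ⟨ρ, hvec⟩
    set w : {f // f ∈ Set.range u} := ⟨u ρ, ⟨ρ, rfl⟩⟩ with hw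
    have hveq : vec = T (B w) w := by
      funext i
      have h1 : f (x i) (fun j => B w (i, j)) w = u ρ (x i) := (heq (x i) w).symm
      have h2 := hvec i
      simp only [hT, h1]
      cases hvi : vec i
      · simp only [hvi, Bool.false_eq_true, false_iff] at h2
        simp [h2]
      · simp only [hvi, true_iff] at h2
        simp [h2]
    simp only [Finset.coe_biUnion, Set.mem_iUnion, Finset.mem_coe]
    refine ⟨B w, ?_, ?_⟩
    · rw [hA, Set.Finite.mem_toFinset]
      exact ⟨w, rfl⟩
    · simp only [ht, Set.Finite.mem_toFinset]
      exact ⟨w, hveq.symm⟩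
  have hcount : S.ncard ≤ (N * k + 1) ^ v * (N + 1) ^ p := by
    calc S.ncard ≤ (↑(A.biUnion t) : Set (Fin N → Bool)).ncard :=
          Set.ncard_le_ncard hsub (Set.toFinite _)
      _ = (A.biUnion t).card := Set.ncard_coe_finset _
      _ ≤ ∑ β ∈ A, (t β).card := Finset.card_biUnion_le
      _ ≤ ∑ β ∈ A, (N + 1) ^ p := by
          refine Finset.sum_le_sum fun β _ => ?_
          have := hTcount β
          rwa [Set.ncard_eq_toFinset_card _ (Set.toFinite _)] at this
      _ = A.card * (N + 1) ^ p := by rw [Finset.sum_const, smul_eq_mul]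
      _ ≤ (N * k + 1) ^ v * (N + 1) ^ p := by
          have := hBcount
          rw [Set.ncard_eq_toFinset_card _ (Set.toFinite _)] at this
          exact Nat.mul_le_mul_right _ this
  have hcast : (S.ncard : ℝ) ≤ ((N * k + 1 : ℕ) : ℝ) ^ v * ((N + 1 : ℕ) : ℝ) ^ p := by
    exact_mod_cast hcount
  refine hcast.trans ?_
  have he : (2 : ℝ) ≤ Real.exp 1 := by
    have := Real.add_one_le_exp 1
    linarith
  have hN1 : (1 : ℝ) ≤ (N : ℝ) := by exact_mod_cast hN
  have hk1 : (1 : ℝ) ≤ (k : ℝ) := by exact_mod_cast hk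
  have hkN : (1 : ℝ) ≤ (k : ℝ) * (N : ℝ) := by nlinarith
  have h1 : ((N * k + 1 : ℕ) : ℝ) ≤ Real.exp 1 * k * N := by
    push_cast
    nlinarith [mul_nonneg (by linarith : (0:ℝ) ≤ Real.exp 1 - 2)
      (by linarith : (0:ℝ) ≤ (k : ℝ) * (N : ℝ))]
  have h2 : ((N + 1 : ℕ) : ℝ) ≤ Real.exp 1 * N := by
    push_cast
    nlinarith [mul_nonneg (by linarith : (0:ℝ) ≤ Real.exp 1 - 2)
      (by linarith : (0:ℝ) ≤ (N : ℝ))]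
  gcongr
end

section
/- Let B ≥ 0 be a natural number and let H be a class of functions from ℝ to ℝ, each having at most B oscillations. If there exist h_1, …, h_N ∈ H and thresholds z_1, …, z_N ∈ ℝ such that all 2^N binary patterns (1{h_1(ρ) ≥ z_1}, …, 1{h_N(ρ) ≥ z_N}) are realized as ρ ranges over ℝ (i.e., the dual class H* pseudo-shatters a set of size N), then 2^N ≤ B·N + 1. -/
/-!
Sweep the line from left to right. The sign pattern `ρ ↦ (1{h_i(ρ) ≥ z_i})_i` can only change
at a breakpoint of some `h_i`. Passing a point `d` that is a breakpoint of exactly `k` of the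
functions adds at most two patterns (the one at `d` and the one just after `d`), hence at most `k`
new ones when `k ≥ 2`; when `k = 1` both agree with the pattern just before `d` outside one Boolean
coordinate, so at most one of them is new. So at most `1 + ∑ᵢ |Dᵢ| ≤ 1 + BN` patterns occur,
while shattering needs `2^N`.
-/

/-- `h : ℝ → ℝ` has at most `B` oscillations: for every threshold `z`, the indicator
`ρ ↦ 1{h(ρ) ≥ z}` is piecewise constant with at most `B` discontinuities, i.e. it is
constant on every connected component of `ℝ ∖ D` for some finite set `D` with `|D| ≤ B`. -/
def AtMostBOscillations (B : ℕ) (h : ℝ → ℝ) : Prop :=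
  ∀ z : ℝ, ∃ D : Finset ℝ, D.card ≤ B ∧
    ∀ ρ₁ ρ₂ : ℝ, ρ₁ ≤ ρ₂ → (∀ d ∈ D, ¬ (ρ₁ ≤ d ∧ d ≤ ρ₂)) →
      ((z ≤ h ρ₁) ↔ (z ≤ h ρ₂))

open Set
open scoped Finset

theorem Function.eq_or_eq_update_not_of_forall_ne {ι : Type*} [DecidableEq ι] {f g : ι → Bool}
    {i : ι} (h : ∀ j ≠ i, g j = f j) : g = f ∨ g = Function.update f i (!f i) := by
  by_cases hi : g i = f i
  · left
    funext j
    by_cases hj : j = i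
    · exact hj ▸ hi
    · exact h j hj
  · right
    funext j
    by_cases hj : j = i
    · subst hj
      simpa [Bool.eq_not] using hi
    · simp [hj, h j hj]

theorem Set.ncard_insert_insert_le_of_forall_ne {ι : Type*} [Finite ι] [DecidableEq ι]
    {S : Set (ι → Bool)} {p q r : ι → Bool} {i : ι} (hp : p ∈ S) (hq : ∀ j ≠ i, q j = p j)
    (hr : ∀ j ≠ i, r j = p j) :
    (insert q (insert r S)).ncard ≤ S.ncard + 1 := by
  have hflip : ∀ g : ι → Bool, (∀ j ≠ i, g j = p j) → g ∈ insert (Function.update p i (!p i)) S :=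
    fun g hg => (Function.eq_or_eq_update_not_of_forall_ne hg).elim
      (fun h => mem_insert_of_mem _ (h ▸ hp)) (fun h => h ▸ mem_insert _ _)
  refine (ncard_le_ncard (t := insert (Function.update p i (!p i)) S) ?_).trans
    (ncard_insert_le _ S)
  exact insert_subset (hflip q hq) (insert_subset (hflip r hr) (subset_insert _ _))

theorem Finset.exists_lt_forall_notMem_Ico {α : Type*} [LinearOrder α] [DenselyOrdered α]
    [NoMinOrder α] (s : Finset α) (d : α) : ∃ c < d, ∀ e ∈ s, e ∉ Set.Ico c d := by
  induction s using Finset.induction_on with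
  | empty =>
    obtain ⟨c, hc⟩ := exists_lt d
    exact ⟨c, hc, by simp⟩
  | insert a s _ ih =>
    obtain ⟨c, hcd, hc⟩ := ih
    rcases lt_or_ge a d with had | hda
    · obtain ⟨c', hc', hc'd⟩ := _root_.exists_between (max_lt had hcd)
      refine ⟨c', hc'd, ?_⟩
      rw [Finset.forall_mem_insert]
      refine ⟨fun ha => ((le_max_left a c).trans_lt hc').not_ge ha.1, fun e he hmem => ?_⟩
      exact hc e he ⟨((le_max_right a c).trans hc'.le).trans hmem.1, hmem.2⟩
    · refine ⟨c, hcd, ?_⟩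
      rw [Finset.forall_mem_insert]
      exact ⟨fun ha => hda.not_gt ha.2, hc⟩

theorem Finset.card_filter_le_eq_add_ite {α : Type*} [LinearOrder α] {s : Finset α} {c d t : α}
    (hcd : c < d) (hdt : d ≤ t) (hs : ∀ e ∈ s, e ≤ t → e ≤ c ∨ e = d) :
    #{e ∈ s | e ≤ t} = #{e ∈ s | e ≤ c} + if d ∈ s then 1 else 0 := by
  have hsplit : {e ∈ s | e ≤ t} = {e ∈ s | e ≤ c} ∪ {e ∈ s | e = d} := by
    ext e
    simp only [Finset.mem_union, Finset.mem_filter]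
    constructor
    · rintro ⟨he, het⟩
      exact (hs e he het).imp (⟨he, ·⟩) (⟨he, ·⟩)
    · rintro (⟨he, hec⟩ | ⟨he, rfl⟩)
      · exact ⟨he, hec.trans (hcd.le.trans hdt)⟩
      · exact ⟨he, hdt⟩
  rw [hsplit, Finset.card_union_of_disjoint, Finset.filter_eq']
  · split_ifs <;> simp
  · exact Finset.disjoint_filter.2 fun e _ hec hed => (hed ▸ hcd).not_ge hec

abbrev IsPiecewiseConst {α β : Type*} [Preorder α] (D : Finset α) (g : α → β) : Prop :=
  ∀ a b, a ≤ b → (∀ d ∈ D, d ∉ Icc a b) → g a = g b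

theorem IsPiecewiseConst.ncard_image_Iic_le_one {α β : Type*} [LinearOrder α] {f : α → β}
    {U : Finset α} {t : α} (hf : IsPiecewiseConst U f) (hU : ∀ e ∈ U, t < e) :
    (f '' Iic t).ncard ≤ 1 := by
  have hsingle : f '' Iic t ⊆ {f t} := by
    rintro _ ⟨x, hxt, rfl⟩
    exact hf x t hxt fun e he hmem => (hU e he).not_ge hmem.2
  exact (ncard_le_ncard hsingle).trans (ncard_singleton _).le

theorem IsPiecewiseConst.image_Iic_subset {α β : Type*} [LinearOrder α] {f : α → β}
    {U : Finset α} {c d t : α} (hf : IsPiecewiseConst U f)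
    (hgap : ∀ e ∈ U, e ∈ Icc c t → e = d) :
    f '' Iic t ⊆ insert (f d) (insert (f t) (f '' Iic c)) := by
  rintro _ ⟨x, hxt, rfl⟩
  rcases le_or_gt x c with hxc | hcx
  · exact mem_insert_of_mem _ (mem_insert_of_mem _ (mem_image_of_mem f hxc))
  rcases lt_trichotomy x d with hxd | rfl | hdx
  · refine mem_insert_of_mem _ (mem_insert_of_mem _ ⟨c, le_rfl, ?_⟩)
    refine hf c x hcx.le fun e he hmem => ?_
    exact (hmem.2.trans_lt hxd).ne (hgap e he ⟨hmem.1, hmem.2.trans hxt⟩)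
  · exact mem_insert _ _
  · refine mem_insert_of_mem _ (mem_insert_iff.2 (Or.inl ?_))
    refine hf x t hxt fun e he hmem => ?_
    exact (hdx.trans_le hmem.1).ne' (hgap e he ⟨hcx.le.trans hmem.1, hmem.2⟩)

section Patterns

variable {α ι : Type*} [LinearOrder α] [Fintype ι] {D : ι → Finset α} {f : α → ι → Bool}

theorem IsPiecewiseConst.pi [DecidableEq α] (hf : ∀ i, IsPiecewiseConst (D i) (f · i)) :
    IsPiecewiseConst (Finset.univ.biUnion D) f := fun a b hab hD =>
  funext fun i => hf i a b hab fun d hd =>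
    hD d (Finset.mem_biUnion.2 ⟨i, Finset.mem_univ i, hd⟩)

theorem ncard_image_Iic_le [DenselyOrdered α] [NoMinOrder α]
    (hf : ∀ i, IsPiecewiseConst (D i) (f · i)) (t : α) :
    (f '' Iic t).ncard ≤ ∑ i, #{e ∈ D i | e ≤ t} + 1 := by
  classical
  have hconst := IsPiecewiseConst.pi hf
  set U := Finset.univ.biUnion D
  induction hn : ∑ i, #{e ∈ D i | e ≤ t} using Nat.strong_induction_on generalizing t with
  | _ n ih =>
  rcases ({e ∈ U | e ≤ t} : Finset α).eq_empty_or_nonempty with hU | hU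
  · exact (hconst.ncard_image_Iic_le_one fun e he =>
      not_le.1 (Finset.filter_eq_empty_iff.1 hU he)).trans (by omega)
  set d := ({e ∈ U | e ≤ t} : Finset α).max' hU
  obtain ⟨hdU, hdt⟩ := Finset.mem_filter.1 (Finset.max'_mem _ hU)
  obtain ⟨c, hcd, hc⟩ := U.exists_lt_forall_notMem_Ico d
  have hgap : ∀ e ∈ U, e ∈ Icc c t → e = d := fun e he hmem =>
    (Finset.le_max' _ e (Finset.mem_filter.2 ⟨he, hmem.2⟩)).eq_of_not_lt fun hed =>
      hc e he ⟨hmem.1, hed⟩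
  have hmemU : ∀ {i e}, e ∈ D i → e ∈ U := fun he =>
    Finset.mem_biUnion.2 ⟨_, Finset.mem_univ _, he⟩
  set K : Finset ι := {i | d ∈ D i}
  have hn_eq : n = ∑ i, #{e ∈ D i | e ≤ c} + #K := by
    rw [← hn, Finset.card_filter, ← Finset.sum_add_distrib]
    refine Finset.sum_congr rfl fun i _ =>
      Finset.card_filter_le_eq_add_ite hcd hdt fun e he het => ?_
    exact (le_or_gt e c).imp_right fun hce => hgap e (hmemU he) ⟨hce.le, het⟩
  have hK : 0 < #K := by
    obtain ⟨i, -, hi⟩ := Finset.mem_biUnion.1 hdU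
    exact Finset.card_pos.2 ⟨i, Finset.mem_filter.2 ⟨Finset.mem_univ i, hi⟩⟩
  have hcover := hconst.image_Iic_subset hgap
  have hIH := ih _ (by omega) c rfl
  rcases Nat.lt_or_ge 1 #K with hK2 | hK1
  · calc (f '' Iic t).ncard ≤ (f '' Iic c).ncard + 1 + 1 :=
          (ncard_le_ncard hcover).trans ((ncard_insert_le _ _).trans
            (Nat.add_le_add_right (ncard_insert_le _ _) 1))
      _ ≤ n + 1 := by omega
  · obtain ⟨i₀, hKi₀⟩ := Finset.card_eq_one.1 (by omega : #K = 1)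
    have hoff : ∀ x ∈ Icc c t, ∀ j ≠ i₀, f x j = f c j := by
      intro x hx j hj
      refine (hf j c x hx.1 fun e he hmem => hj ?_).symm
      have hed : e = d := hgap e (hmemU he) ⟨hmem.1, hmem.2.trans hx.2⟩
      have hjK : j ∈ K := Finset.mem_filter.2 ⟨Finset.mem_univ j, hed ▸ he⟩
      simpa [hKi₀] using hjK
    calc (f '' Iic t).ncard ≤ (f '' Iic c).ncard + 1 :=
          (ncard_le_ncard hcover).trans <| ncard_insert_insert_le_of_forall_ne
            ⟨c, le_rfl, rfl⟩ (hoff d ⟨hcd.le, hdt⟩) (hoff t ⟨hcd.le.trans hdt, le_rfl⟩)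
      _ ≤ n + 1 := by omega

theorem ncard_range_le [DenselyOrdered α] [NoMinOrder α] [NoMaxOrder α]
    (hf : ∀ i, IsPiecewiseConst (D i) (f · i)) : (range f).ncard ≤ ∑ i, #(D i) + 1 := by
  classical
  cases isEmpty_or_nonempty α
  · simp [range_eq_empty]
  obtain ⟨M, hM⟩ := (Finset.univ.biUnion D).exists_le
  obtain ⟨t, hMt⟩ := exists_gt M
  have hrange : range f ⊆ f '' Iic t := by
    rintro _ ⟨x, rfl⟩
    rcases le_or_gt x t with hxt | htx
    · exact mem_image_of_mem f hxt
    · exact ⟨t, le_rfl, IsPiecewiseConst.pi hf t x htx.le fun e he hmem =>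
        ((hM e he).trans_lt hMt).not_ge hmem.1⟩
  calc (range f).ncard ≤ (f '' Iic t).ncard := ncard_le_ncard hrange
    _ ≤ ∑ i, #{e ∈ D i | e ≤ t} + 1 := ncard_image_Iic_le hf t
    _ ≤ ∑ i, #(D i) + 1 := by gcongr; exact Finset.filter_subset _ _

end Patterns

/-- if every function in `H` has at most `B` oscillations and the dual class
`H*` pseudo-shatters `h₁, …, h_N ∈ H` (with thresholds `z₁, …, z_N`, all `2^N` sign patterns
being realized as `ρ` ranges over `ℝ`), then `2^N ≤ B·N + 1`. -/
theorem stmt_5 (B : ℕ) (H : Set (ℝ → ℝ)) (hH : ∀ h ∈ H, AtMostBOscillations B h)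
    (N : ℕ) (h : Fin N → ℝ → ℝ) (hmem : ∀ i, h i ∈ H) (z : Fin N → ℝ)
    (hshatter : ∀ b : Fin N → Bool, ∃ ρ : ℝ, ∀ i, (z i ≤ h i ρ ↔ b i = true)) :
    2 ^ N ≤ B * N + 1 := by
  choose D hDcard hD using fun i => hH (h i) (hmem i) (z i)
  set f : ℝ → Fin N → Bool := fun ρ i => decide (z i ≤ h i ρ)
  have hf : ∀ i, IsPiecewiseConst (D i) (f · i) := fun i a b hab hDab =>
    decide_eq_decide.2 (hD i a b hab hDab)
  have hrange : range f = univ := eq_univ_of_forall fun b =>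
    (hshatter b).imp fun ρ hρ => funext fun i => by simp [f, hρ i]
  calc 2 ^ N = (range f).ncard := by simp [hrange, Set.ncard_univ]
    _ ≤ ∑ i, #(D i) + 1 := ncard_range_le hf
    _ ≤ B * N + 1 := by
      grw [Finset.sum_le_sum fun i _ => hDcard i]
      simp [mul_comm]
end

section
/- Let X be a set and, for each ρ ∈ ℝ, let u_ρ : X → ℝ; put U = {u_ρ : ρ ∈ ℝ}. Let k ≥ 1 and B ≥ 2 be integers, and suppose that for every instance x ∈ X there exist reals a_1 ≤ a_2 ≤ … ≤ a_k and functions f_0, f_1, …, f_k : ℝ → ℝ, each having at most B oscillations, such that ρ ↦ u_ρ(x) agrees with f_i on the i-th interval of the partition of ℝ induced by the points a_1, …, a_k (with the convention that each breakpoint a_i belongs to the interval on its right). Then there is a universal constant C > 0 such that pdim(U) ≤ C·(1 + ln B)·(1 + ln k + ln(1 + ln B)); in particular pdim(U) = O((ln B)·ln(k·ln B)). -/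
universe u₁

/-- The finset `s` is pseudo-shattered by the family of functions `{g p : p ∈ I}`. -/
def PShattersFam {I A : Type*} (g : I → A → ℝ) (s : Finset A) : Prop :=
  ∃ z : A → ℝ, ∀ b : A → Bool, ∃ p : I, ∀ a ∈ s, (z a ≤ g p a ↔ b a = true)

/-- Per-instance breakpoint set: the indicator `ρ ↦ 1{z ≤ g ρ}` is piecewise constant
with at most `k + (k+1)·B` breakpoints. -/
lemma keyx {k B : ℕ} (g : ℝ → ℝ) (z : ℝ)
    (h : ∃ a : Fin k → ℝ, Monotone a ∧
      ∃ f : Fin (k + 1) → ℝ → ℝ, (∀ i, AtMostBOscillations B (f i)) ∧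
        ∀ ρ : ℝ, ∃ i : Fin (k + 1), g ρ = f i ρ ∧
          ∀ j : Fin k, (a j ≤ ρ ↔ (j : ℕ) < (i : ℕ))) :
    ∃ D : Finset ℝ, D.card ≤ k + (k + 1) * B ∧
      ∀ ρ₁ ρ₂ : ℝ, ρ₁ ≤ ρ₂ → (∀ d ∈ D, ¬ (ρ₁ ≤ d ∧ d ≤ ρ₂)) →
        ((z ≤ g ρ₁) ↔ (z ≤ g ρ₂)) := by
  classical
  obtain ⟨a, -, f, hf, hpc⟩ := h
  choose Di hDicard hDi using fun i => hf i z
  refine ⟨(Finset.univ.image a) ∪ Finset.univ.biUnion Di, ?_, ?_⟩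
  · calc ((Finset.univ.image a) ∪ Finset.univ.biUnion Di).card
        ≤ (Finset.univ.image a).card + (Finset.univ.biUnion Di).card :=
          Finset.card_union_le _ _
      _ ≤ k + (k + 1) * B := by
          have h1 : (Finset.univ.image a).card ≤ k := by
            calc (Finset.univ.image a).card ≤ (Finset.univ : Finset (Fin k)).card :=
                  Finset.card_image_le
              _ = k := by simp
          have h2 : (Finset.univ.biUnion Di).card ≤ (k + 1) * B := by
            calc (Finset.univ.biUnion Di).card ≤ ∑ i, (Di i).card :=
                  Finset.card_biUnion_le
              _ ≤ ∑ _i : Fin (k + 1), B := Finset.sum_le_sum fun i _ => hDicard i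
              _ = (k + 1) * B := by simp [Finset.sum_const, mul_comm]
          omega
  · intro ρ₁ ρ₂ hle hno
    obtain ⟨i₁, he₁, hc₁⟩ := hpc ρ₁
    obtain ⟨i₂, he₂, hc₂⟩ := hpc ρ₂
    have hiff : ∀ j : Fin k, (a j ≤ ρ₁ ↔ a j ≤ ρ₂) := by
      intro j
      have hmem : a j ∈ (Finset.univ.image a) ∪ Finset.univ.biUnion Di := by
        exact Finset.mem_union_left _ (Finset.mem_image_of_mem a (Finset.mem_univ j))
      have hn := hno _ hmem
      constructor
      · intro h'; exact h'.trans hle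
      · intro h'; by_contra hcon; push_neg at hcon
        exact hn ⟨le_of_lt hcon, h'⟩
    have hi : i₁ = i₂ := by
      by_contra hne
      rcases Nat.lt_or_ge (i₁ : ℕ) (i₂ : ℕ) with hlt | hge
      · have hk : (i₁ : ℕ) < k := lt_of_lt_of_le hlt (Nat.lt_succ_iff.mp i₂.isLt)
        have h2 : a ⟨(i₁ : ℕ), hk⟩ ≤ ρ₂ := (hc₂ ⟨(i₁ : ℕ), hk⟩).mpr hlt
        have h1 : a ⟨(i₁ : ℕ), hk⟩ ≤ ρ₁ := (hiff _).mpr h2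
        have := (hc₁ ⟨(i₁ : ℕ), hk⟩).mp h1
        exact lt_irrefl _ this
      · have hlt : (i₂ : ℕ) < (i₁ : ℕ) :=
          lt_of_le_of_ne hge (fun h => hne (Fin.ext h.symm))
        have hk : (i₂ : ℕ) < k := lt_of_lt_of_le hlt (Nat.lt_succ_iff.mp i₁.isLt)
        have h1 : a ⟨(i₂ : ℕ), hk⟩ ≤ ρ₁ := (hc₁ ⟨(i₂ : ℕ), hk⟩).mpr hlt
        have h2 : a ⟨(i₂ : ℕ), hk⟩ ≤ ρ₂ := (hiff _).mp h1
        have := (hc₂ ⟨(i₂ : ℕ), hk⟩).mp h2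
        exact lt_irrefl _ this
    rw [he₁, he₂, ← hi]
    refine hDi i₁ ρ₁ ρ₂ hle ?_
    intro d hd
    refine hno d ?_
    exact Finset.mem_union_right _ (Finset.mem_biUnion.mpr ⟨i₁, Finset.mem_univ _, hd⟩)

/-- `log x ≤ x / 2` for nonnegative `x`. -/
lemma log_le_half {x : ℝ} (hx : 0 ≤ x) : Real.log x ≤ x / 2 := by
  rcases eq_or_lt_of_le hx with rfl | hx'
  · simp
  · have hs : 0 < Real.sqrt x := Real.sqrt_pos.mpr hx'
    have h1 : Real.log (Real.sqrt x) ≤ Real.sqrt x - 1 :=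
      Real.log_le_sub_one_of_pos hs
    have h2 : Real.log (Real.sqrt x) = Real.log x / 2 := Real.log_sqrt hx
    nlinarith [Real.sq_sqrt hx, sq_nonneg (Real.sqrt x - 2)]

/-- there is a universal constant `C > 0` such that, whenever each dual
function `ρ ↦ u_ρ(x)` is piecewise structured with `k ≥ 1` threshold boundaries
`a₁ ≤ … ≤ a_k` (each breakpoint belonging to the interval on its right) and piece
functions `f₀, …, f_k` each having at most `B ≥ 2` oscillations, then
`pdim(U) ≤ C·(1 + ln B)·(1 + ln k + ln(1 + ln B))`, i.e. every pseudo-shattered set of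
instances has size at most this bound. -/
theorem stmt_7 :
    ∃ C : ℝ, 0 < C ∧
      ∀ {X : Type u₁} (u : ℝ → X → ℝ) (k B : ℕ), 1 ≤ k → 2 ≤ B →
        (∀ x : X, ∃ a : Fin k → ℝ, Monotone a ∧
          ∃ f : Fin (k + 1) → ℝ → ℝ, (∀ i, AtMostBOscillations B (f i)) ∧
            ∀ ρ : ℝ, ∃ i : Fin (k + 1), u ρ x = f i ρ ∧
              ∀ j : Fin k, (a j ≤ ρ ↔ (j : ℕ) < (i : ℕ))) →
        ∀ s : Finset X, PShattersFam u s →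
          (s.card : ℝ) ≤ C * (1 + Real.log B) *
            (1 + Real.log k + Real.log (1 + Real.log B)) := by
  classical
  refine ⟨100, by norm_num, ?_⟩
  intro X u k B hk hB hstruct s hshatt
  -- basic log facts
  have hB1 : (1 : ℝ) ≤ (B : ℝ) := by exact_mod_cast Nat.one_le_of_lt hB
  have hk1 : (1 : ℝ) ≤ (k : ℝ) := by exact_mod_cast hk
  have hlB : 0 ≤ Real.log B := Real.log_nonneg hB1
  have hlk : 0 ≤ Real.log k := Real.log_nonneg hk1
  have hm : 0 ≤ Real.log (1 + Real.log B) := Real.log_nonneg (by linarith)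
  obtain ⟨z, hz⟩ := hshatt
  choose Dx hDxcard hDxkey using fun x : X => keyx (fun ρ => u ρ x) (z x) (hstruct x)
  set D : Finset ℝ := s.biUnion Dx with hD
  have hM : D.card ≤ s.card * (k + (k + 1) * B) := by
    calc D.card ≤ ∑ x ∈ s, (Dx x).card := Finset.card_biUnion_le
      _ ≤ ∑ _x ∈ s, (k + (k + 1) * B) := Finset.sum_le_sum fun x _ => hDxcard x
      _ = s.card * (k + (k + 1) * B) := by simp [Finset.sum_const, mul_comm]
  have hkey : ∀ ρ₁ ρ₂ : ℝ, ρ₁ ≤ ρ₂ → (∀ d ∈ D, ¬ (ρ₁ ≤ d ∧ d ≤ ρ₂)) →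
      ∀ x ∈ s, ((z x ≤ u ρ₁ x) ↔ (z x ≤ u ρ₂ x)) := by
    intro ρ₁ ρ₂ hle hno x hx
    exact hDxkey x ρ₁ ρ₂ hle fun d hd => hno d (Finset.mem_biUnion.mpr ⟨x, hx, hd⟩)
  have hφ : ∀ ρ₁ ρ₂ : ℝ,
      (D.filter (· ≤ ρ₁)).card = (D.filter (· ≤ ρ₂)).card → ((ρ₁ ∈ D) ↔ (ρ₂ ∈ D)) →
      ∀ x ∈ s, ((z x ≤ u ρ₁ x) ↔ (z x ≤ u ρ₂ x)) := by
    have main : ∀ ρ₁ ρ₂ : ℝ, ρ₁ ≤ ρ₂ →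
        (D.filter (· ≤ ρ₁)).card = (D.filter (· ≤ ρ₂)).card → ((ρ₁ ∈ D) ↔ (ρ₂ ∈ D)) →
        ∀ x ∈ s, ((z x ≤ u ρ₁ x) ↔ (z x ≤ u ρ₂ x)) := by
      intro ρ₁ ρ₂ hle hcnt hmem x hx
      rcases eq_or_lt_of_le hle with rfl | hlt
      · exact Iff.rfl
      refine hkey ρ₁ ρ₂ hle ?_ x hx
      rintro d hd ⟨hd1, hd2⟩
      have hsub : D.filter (· ≤ ρ₁) ⊆ D.filter (· ≤ ρ₂) := by
        intro y hy
        rw [Finset.mem_filter] at hy ⊢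
        exact ⟨hy.1, hy.2.trans hle⟩
      rcases eq_or_lt_of_le hd1 with rfl | hlt1
      · -- d = ρ₁, so ρ₁ ∈ D, hence ρ₂ ∈ D, giving a strict subset
        have hρ₂D : ρ₂ ∈ D := hmem.mp hd
        have hss : D.filter (· ≤ ρ₁) ⊂ D.filter (· ≤ ρ₂) := by
          refine (Finset.ssubset_iff_of_subset hsub).mpr ⟨ρ₂, ?_, ?_⟩
          · exact Finset.mem_filter.mpr ⟨hρ₂D, le_refl _⟩
          · intro hmem'
            have := (Finset.mem_filter.mp hmem').2
            linarith
        exact absurd hcnt (Finset.card_lt_card hss).ne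
      · have hss : D.filter (· ≤ ρ₁) ⊂ D.filter (· ≤ ρ₂) := by
          refine (Finset.ssubset_iff_of_subset hsub).mpr ⟨d, ?_, ?_⟩
          · exact Finset.mem_filter.mpr ⟨hd, hd2⟩
          · intro hmem'
            have := (Finset.mem_filter.mp hmem').2
            linarith
        exact absurd hcnt (Finset.card_lt_card hss).ne
    intro ρ₁ ρ₂ h1 h2 x hx
    rcases le_total ρ₁ ρ₂ with h | h
    · exact main ρ₁ ρ₂ h h1 h2 x hx
    · exact (main ρ₂ ρ₁ h h1.symm h2.symm x hx).symm
  -- the counting argument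
  set M := D.card with hMdef
  let ext : (↥s → Bool) → X → Bool := fun b x => if h : x ∈ s then b ⟨x, h⟩ else false
  let ρf : (↥s → Bool) → ℝ := fun b => (hz (ext b)).choose
  have hρf : ∀ b, ∀ x ∈ s, (z x ≤ u (ρf b) x ↔ ext b x = true) :=
    fun b => (hz (ext b)).choose_spec
  let emb : (↥s → Bool) → Fin (M + 1) × Bool := fun b =>
    (⟨(D.filter (· ≤ ρf b)).card, Nat.lt_succ_of_le (Finset.card_filter_le _ _)⟩,
      if ρf b ∈ D then true else false)
  have hinj : Function.Injective emb := by
    intro b₁ b₂ hbe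
    have h1 : (D.filter (· ≤ ρf b₁)).card = (D.filter (· ≤ ρf b₂)).card := by
      have := congrArg (fun p => (p.1 : ℕ)) hbe
      simpa [emb] using this
    have h2 : (ρf b₁ ∈ D) ↔ (ρf b₂ ∈ D) := by
      have := congrArg Prod.snd hbe
      simp only [emb] at this
      split_ifs at this <;> tauto
    funext x
    have hx := x.2
    have hiff := hφ _ _ h1 h2 x.1 hx
    have e1 := hρf b₁ x.1 hx
    have e2 := hρf b₂ x.1 hx
    have hxt : (ext b₁ x.1 = true) ↔ (ext b₂ x.1 = true) := by
      rw [← e1, ← e2]; exact hiff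
    have hx1 : ext b₁ (x : X) = b₁ x := dif_pos x.2
    have hx2 : ext b₂ (x : X) = b₂ x := dif_pos x.2
    have hb : (b₁ x = true) ↔ (b₂ x = true) := by
      rw [← hx1, ← hx2]; exact hxt
    revert hb
    cases b₁ x <;> cases b₂ x <;> simp
  have hcard : 2 ^ s.card ≤ (M + 1) * 2 := by
    have hle := Fintype.card_le_of_injective emb hinj
    simpa [Fintype.card_fun, Fintype.card_coe, mul_comm] using hle
  -- now the arithmetic
  rcases Nat.eq_zero_or_pos s.card with h0 | hN
  · rw [h0]
    push_cast
    have : (0:ℝ) ≤ 100 * (1 + Real.log B) := by linarith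
    nlinarith
  · set N := s.card with hNdef
    have hN1 : (1 : ℝ) ≤ (N : ℝ) := by exact_mod_cast hN
    have hnat : 2 ^ N ≤ 8 * (N * (k * B)) := by
      have h3 : k + (k + 1) * B ≤ 3 * (k * B) := by nlinarith
      have h4 : 1 ≤ N * (k * B) :=
        Nat.one_le_iff_ne_zero.mpr
          (Nat.mul_ne_zero (by omega) (Nat.mul_ne_zero (by omega) (by omega)))
      calc 2 ^ N ≤ (M + 1) * 2 := hcard
        _ ≤ (N * (k + (k + 1) * B) + 1) * 2 := by
            have := hM
            omega
        _ ≤ 8 * (N * (k * B)) := by nlinarith [Nat.mul_le_mul_left N h3]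
    have hreal : (2 : ℝ) ^ N ≤ 8 * (N * (k * B)) := by exact_mod_cast hnat
    have hBpos : (0:ℝ) < (B:ℝ) := by linarith
    have hkpos : (0:ℝ) < (k:ℝ) := by linarith
    have hNpos : (0:ℝ) < (N:ℝ) := by linarith
    have hlog : (N : ℝ) * Real.log 2 ≤
        Real.log 8 + (Real.log N + (Real.log k + Real.log B)) := by
      have h2pos : (0:ℝ) < 2 ^ N := by positivity
      have := Real.log_le_log h2pos hreal
      rw [Real.log_pow] at this
      rw [Real.log_mul (by norm_num) (by positivity),
        Real.log_mul (ne_of_gt hNpos) (by positivity),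
        Real.log_mul (ne_of_gt hkpos) (ne_of_gt hBpos)] at this
      exact_mod_cast this
    have hlog8 : Real.log 8 = 3 * Real.log 2 := by
      rw [show (8:ℝ) = 2 ^ (3:ℕ) by norm_num, Real.log_pow]
      norm_num
    have hlogN : Real.log N ≤ (N : ℝ) / 2 := log_le_half (le_of_lt hNpos)
    have hL1 : 0.6931471803 < Real.log 2 := Real.log_two_gt_d9
    have hL2 : Real.log 2 < 0.6931471808 := Real.log_two_lt_d9
    have hmain : (N : ℝ) * (Real.log 2 - 1/2) ≤
        3 * Real.log 2 + Real.log k + Real.log B := by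
      rw [hlog8] at hlog
      linarith
    have h100 : (N : ℝ) ≤ 100 * (1 + Real.log k + Real.log B) := by
      by_contra hcon
      push_neg at hcon
      have hLpos : (0:ℝ) < Real.log 2 - 1/2 := by linarith
      have hprod := mul_lt_mul_of_pos_right hcon hLpos
      nlinarith [mul_nonneg hlk (le_of_lt hLpos), mul_nonneg hlB (le_of_lt hLpos)]
    calc (N : ℝ) ≤ 100 * (1 + Real.log k + Real.log B) := h100
      _ ≤ 100 * (1 + Real.log B) * (1 + Real.log k + Real.log (1 + Real.log B)) := by
          nlinarith [mul_nonneg hlB hlk, mul_nonneg hlB hm]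
end

section
/- Let X be a set, d ≥ 1, P ⊆ ℝ^d, and for each ρ ∈ P let u_ρ : X → ℝ; put U = {u_ρ : ρ ∈ P}. Let k ≥ 1 and suppose that for every instance x ∈ X there exist k pairs (a_1, θ_1), …, (a_k, θ_k) ∈ ℝ^d × ℝ and, for each bit vector b ∈ {0,1}^k, a pair (w_b, c_b) ∈ ℝ^d × ℝ, such that for all ρ ∈ P, u_ρ(x) = w_{b(ρ)}·ρ + c_{b(ρ)}, where b(ρ) = (1{a_1·ρ ≤ θ_1}, …, 1{a_k·ρ ≤ θ_k}). Then there is a universal constant C > 0 such that pdim(U) ≤ C·d·ln(d·k + 1); in particular pdim(U) = O(d·ln(dk)). -/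
universe u₁

lemma no_linear_shatter {m : ℕ} {ι : Type*} (v : ι → Fin m → ℝ) (t : ι → ℝ)
    (T : Finset ι)
    (h : ∀ b : ι → Bool, ∃ ρ : Fin m → ℝ, ∀ i ∈ T, (t i ≤ ∑ j, v i j * ρ j ↔ b i = true)) :
    T.card ≤ m := by
  classical
  by_contra hc
  push_neg at hc
  have hnli : ¬ LinearIndependent ℝ (fun i : T => v i) := by
    intro hli
    have h1 := hli.fintype_card_le_finrank
    rw [Module.finrank_fintype_fun_eq_card, Fintype.card_coe, Fintype.card_fin] at h1
    omega
  obtain ⟨g, hsum, i₀, hi₀⟩ := Fintype.not_linearIndependent_iff.1 hnli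
  set lam : ι → ℝ := fun i => if h : i ∈ T then g ⟨i, h⟩ else 0 with hlam
  have hlamT : ∀ i : T, lam i = g i := fun i => by simp [hlam]
  have hzero : ∀ j, ∑ i ∈ T, lam i * v i j = 0 := by
    intro j
    have := congrFun hsum j
    simp only [Finset.sum_apply, Pi.zero_apply, Pi.smul_apply, smul_eq_mul] at this
    rw [← Finset.sum_attach T (fun i => lam i * v i j)]
    simpa [hlamT] using this
  have key : ∀ ρ : Fin m → ℝ,
      ∑ i ∈ T, lam i * ((∑ j, v i j * ρ j) - t i) = -∑ i ∈ T, lam i * t i := by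
    intro ρ
    have : ∑ i ∈ T, lam i * ∑ j, v i j * ρ j = 0 := by
      calc ∑ i ∈ T, lam i * ∑ j, v i j * ρ j
          = ∑ i ∈ T, ∑ j, lam i * v i j * ρ j := by
            refine Finset.sum_congr rfl fun i _ => ?_
            rw [Finset.mul_sum]; ring_nf
        _ = ∑ j, ∑ i ∈ T, lam i * v i j * ρ j := Finset.sum_comm
        _ = ∑ j : Fin m, (0:ℝ) := by
            refine Finset.sum_congr rfl fun j _ => ?_
            rw [← Finset.sum_mul, hzero j, zero_mul]
        _ = 0 := by simp
    simp only [mul_sub]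
    rw [Finset.sum_sub_distrib, this, zero_sub]
  obtain ⟨ρp, hρp⟩ := h (fun i => decide (0 < lam i))
  obtain ⟨ρn, hρn⟩ := h (fun i => decide (lam i ≤ 0))
  set S : ℝ := ∑ i ∈ T, lam i * t i with hS
  -- from ρp : each term nonneg
  have hp : ∀ i ∈ T, 0 ≤ lam i * ((∑ j, v i j * ρp j) - t i) := by
    intro i hi
    rcases le_or_gt (lam i) 0 with hl | hl
    · have : ¬ (t i ≤ ∑ j, v i j * ρp j) := by
        intro hle
        have := (hρp i hi).1 hle
        simp at this; exact absurd this (not_lt.2 hl)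
      have hneg : (∑ j, v i j * ρp j) - t i < 0 := by linarith [lt_of_not_ge this]
      nlinarith
    · have : t i ≤ ∑ j, v i j * ρp j := (hρp i hi).2 (by simp [hl])
      exact mul_nonneg hl.le (by linarith)
  have hpstrict : lam (i₀:ι) < 0 → 0 < lam (i₀:ι) * ((∑ j, v (i₀:ι) j * ρp j) - t i₀) := by
    intro hl
    have : ¬ (t (i₀:ι) ≤ ∑ j, v (i₀:ι) j * ρp j) := by
      intro hle
      have := (hρp i₀ i₀.2).1 hle
      simp at this
      exact absurd this (not_lt.2 hl.le)
    have hneg : (∑ j, v (i₀:ι) j * ρp j) - t (i₀:ι) < 0 := by linarith [lt_of_not_ge this]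
    exact mul_pos_of_neg_of_neg hl hneg
  -- from ρn : each term nonpos
  have hn : ∀ i ∈ T, lam i * ((∑ j, v i j * ρn j) - t i) ≤ 0 := by
    intro i hi
    rcases le_or_gt (lam i) 0 with hl | hl
    · have : t i ≤ ∑ j, v i j * ρn j := (hρn i hi).2 (by simp [hl])
      exact mul_nonpos_of_nonpos_of_nonneg hl (by linarith)
    · have : ¬ (t i ≤ ∑ j, v i j * ρn j) := by
        intro hle
        have := (hρn i hi).1 hle
        simp at this; exact absurd this (not_le.2 hl)
      have hneg : (∑ j, v i j * ρn j) - t i < 0 := by linarith [lt_of_not_ge this]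
      exact (mul_neg_of_pos_of_neg hl hneg).le
  have hnstrict : 0 < lam (i₀:ι) → lam (i₀:ι) * ((∑ j, v (i₀:ι) j * ρn j) - t i₀) < 0 := by
    intro hl
    have : ¬ (t (i₀:ι) ≤ ∑ j, v (i₀:ι) j * ρn j) := by
      intro hle
      have := (hρn i₀ i₀.2).1 hle
      simp at this
      exact absurd this (not_le.2 hl)
    have hneg : (∑ j, v (i₀:ι) j * ρn j) - t (i₀:ι) < 0 := by linarith [lt_of_not_ge this]
    exact mul_neg_of_pos_of_neg hl hneg
  have hSp : 0 ≤ -S := by rw [hS, ← key ρp]; exact Finset.sum_nonneg hp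
  have hSn : -S ≤ 0 := by rw [hS, ← key ρn]; exact Finset.sum_nonpos hn
  have hlam0 : lam (i₀:ι) ≠ 0 := by rw [hlamT]; exact hi₀
  rcases hlam0.lt_or_gt with hl | hl
  · -- lam i₀ < 0 : strict from ρp
    have : 0 < -S := by
      rw [hS, ← key ρp]
      have := Finset.sum_lt_sum hp ⟨(i₀:ι), i₀.2, by
        have := hpstrict hl
        exact this⟩
      simpa using this
    linarith
  · have : -S < 0 := by
      rw [hS, ← key ρn]
      have := Finset.sum_lt_sum hn ⟨(i₀:ι), i₀.2, hnstrict hl⟩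
      simpa using this
    linarith


lemma choose_le_pow' (M : ℕ) : ∀ k, M.choose k ≤ M^k := by
  induction M with
  | zero => intro k; cases k <;> simp
  | succ m ih =>
    intro k
    cases k with
    | zero => simp
    | succ k =>
      rw [Nat.choose_succ_succ]
      calc m.choose k + m.choose (k+1) ≤ m^k + m^(k+1) := Nat.add_le_add (ih k) (ih (k+1))
        _ = m^k * (1 + m) := by ring
        _ ≤ (m+1)^k * (1+m) := Nat.mul_le_mul_right _ (Nat.pow_le_pow_left (by omega) _)
        _ = (m+1)^(k+1) := by ring

lemma sum_choose_le (M n : ℕ) : ∑ i ∈ Finset.range (n+1), M.choose i ≤ (M+1)^n := by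
  induction n with
  | zero => simp
  | succ n ih =>
    rw [Finset.sum_range_succ]
    have h1 : M.choose (n+1) ≤ M^(n+1) := choose_le_pow' _ _
    have h2 : M^(n+1) ≤ M * (M+1)^n := by
      rw [pow_succ']
      exact Nat.mul_le_mul_left _ (Nat.pow_le_pow_left (Nat.le_succ M) _)
    calc ∑ i ∈ Finset.range (n+1), M.choose i + M.choose (n+1)
        ≤ (M+1)^n + M * (M+1)^n := Nat.add_le_add ih (h1.trans h2)
      _ = (M+1)^(n+1) := by ring

lemma pattern_count {ι : Type*} [Fintype ι] [DecidableEq ι] {Ω : Type*}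
    (F : Ω → ι → Bool) (n : ℕ)
    (𝒜 : Finset (ι → Bool)) (h𝒜 : ∀ p ∈ 𝒜, ∃ ω, F ω = p)
    (hvc : ∀ T : Finset ι, (∀ b : ι → Bool, ∃ ω, ∀ i ∈ T, F ω i = b i) → T.card ≤ n) :
    𝒜.card ≤ (Fintype.card ι + 1)^n := by
  classical
  set toSet : (ι → Bool) → Finset ι := fun p => Finset.univ.filter (fun i => p i = true)
    with htoSet
  have hinj : Function.Injective toSet := by
    intro p q hpq
    funext i
    have h1 : (i ∈ toSet p) ↔ (i ∈ toSet q) := by rw [hpq]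
    simp only [htoSet, Finset.mem_filter, Finset.mem_univ, true_and] at h1
    cases hp : p i <;> cases hq : q i <;> simp_all
  set ℬ := 𝒜.image toSet with hℬ
  have hcard : ℬ.card = 𝒜.card := Finset.card_image_of_injective _ hinj
  have hsub : ℬ.shatterer ⊆
      (Finset.range (n+1)).biUnion (fun i => Finset.powersetCard i Finset.univ) := by
    intro sset hs
    rw [Finset.mem_shatterer] at hs
    have hcard_s : sset.card ≤ n := by
      apply hvc
      intro b
      obtain ⟨uu, huu, hint⟩ :=
        hs (Finset.filter_subset (fun i => b i = true) sset)
      obtain ⟨p, hp, rfl⟩ := Finset.mem_image.1 huu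
      obtain ⟨ω, rfl⟩ := h𝒜 p hp
      refine ⟨ω, fun i hi => ?_⟩
      have h1 : (i ∈ sset ∩ toSet (F ω)) ↔ (i ∈ sset.filter (fun i => b i = true)) := by
        rw [hint]
      simp only [Finset.mem_inter, Finset.mem_filter, Finset.mem_univ, true_and, htoSet,
        hi] at h1
      cases hb : b i <;> cases hF : F ω i <;> simp_all
    simp only [Finset.mem_biUnion, Finset.mem_range, Finset.mem_powersetCard]
    exact ⟨sset.card, by omega, Finset.subset_univ _, rfl⟩
  have hbu : ((Finset.range (n+1)).biUnion
      fun i => Finset.powersetCard i (Finset.univ : Finset ι)).card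
      ≤ ∑ i ∈ Finset.range (n+1), (Fintype.card ι).choose i := by
    calc ((Finset.range (n+1)).biUnion fun i => Finset.powersetCard i (Finset.univ : Finset ι)).card
        ≤ ∑ i ∈ Finset.range (n+1), (Finset.powersetCard i (Finset.univ : Finset ι)).card :=
          Finset.card_biUnion_le
      _ ≤ ∑ i ∈ Finset.range (n+1), (Fintype.card ι).choose i :=
          Finset.sum_le_sum fun i _ => by rw [Finset.card_powersetCard, Finset.card_univ]
  calc 𝒜.card = ℬ.card := hcard.symm
    _ ≤ ℬ.shatterer.card := Finset.card_le_card_shatterer ℬ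
    _ ≤ _ := Finset.card_le_card hsub
    _ ≤ ∑ i ∈ Finset.range (n+1), (Fintype.card ι).choose i := hbu
    _ ≤ (Fintype.card ι + 1)^n := sum_choose_le _ _

lemma main_count {X : Type u₁} (d : ℕ) (P : Set (Fin d → ℝ)) (u : (Fin d → ℝ) → X → ℝ)
    (k : ℕ)
    (a : X → Fin k → Fin d → ℝ) (θ : X → Fin k → ℝ)
    (w : X → (Fin k → Bool) → Fin d → ℝ) (c : X → (Fin k → Bool) → ℝ)
    (hpw : ∀ x, ∀ ρ ∈ P, ∀ b : Fin k → Bool,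
        (∀ i, b i = true ↔ ∑ j, a x i j * ρ j ≤ θ x i) →
        u ρ x = (∑ j, w x b j * ρ j) + c x b)
    (s : Finset X) (z : X → ℝ)
    (hz : ∀ b : X → Bool, ∃ p : P, ∀ x ∈ s, (z x ≤ u p.1 x ↔ b x = true)) :
    2^s.card ≤ (s.card * k + 1)^(d+1) * (s.card + 1)^(d+1) := by
  classical
  set N := s.card with hN
  set F : P → (({x // x ∈ s} × Fin k) ⊕ {x // x ∈ s}) → Bool := fun ρ =>
    Sum.elim (fun xi => decide (∑ j, a xi.1.1 xi.2 j * ρ.1 j ≤ θ xi.1.1 xi.2))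
             (fun x => decide (z x.1 ≤ u ρ.1 x.1)) with hF
  choose ρsel hρsel using hz
  set ext : ({x // x ∈ s} → Bool) → (X → Bool) :=
    fun q x => if h : x ∈ s then q ⟨x, h⟩ else false with hext
  set Φ : ({x // x ∈ s} → Bool) → ((({x // x ∈ s} × Fin k) ⊕ {x // x ∈ s}) → Bool) :=
    fun q => F (ρsel (ext q)) with hΦdef
  have hΦ : ∀ q x, Φ q (Sum.inr x) = q x := by
    intro q x
    have h1 := hρsel (ext q) x.1 x.2
    have h2 : ext q x.1 = q x := dif_pos x.2
    rw [h2] at h1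
    simp only [hΦdef, hF, Sum.elim_inr]
    cases hqx : q x
    · simp only [hqx, Bool.false_eq_true, iff_false] at h1
      simpa using h1
    · simp only [hqx, iff_true] at h1
      simpa using h1
  have hΦinj : Function.Injective Φ := by
    intro q q' hqq
    funext x
    rw [← hΦ q x, ← hΦ q' x, hqq]
  set 𝒜 := (Finset.univ : Finset ({x // x ∈ s} → Bool)).image Φ with h𝒜def
  have hcard𝒜 : 𝒜.card = 2^N := by
    rw [h𝒜def, Finset.card_image_of_injective _ hΦinj, Finset.card_univ, Fintype.card_fun,
      Fintype.card_coe, Fintype.card_bool]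
  have h𝒜F : ∀ p ∈ 𝒜, ∃ ω, F ω = p := by
    intro p hp
    obtain ⟨q, _, rfl⟩ := Finset.mem_image.1 hp
    exact ⟨ρsel (ext q), rfl⟩
  set r : ((({x // x ∈ s} × Fin k) ⊕ {x // x ∈ s}) → Bool) → (({x // x ∈ s} × Fin k) → Bool) :=
    fun p => p ∘ Sum.inl with hr
  have hfib : 𝒜.card = ∑ β ∈ 𝒜.image r, (𝒜.filter (fun p => r p = β)).card :=
    Finset.card_eq_sum_card_fiberwise (fun p hp => Finset.mem_image_of_mem r hp)
  -- Bound 1 : number of cells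
  have himg1 : (𝒜.image r).card ≤ (N * k + 1)^(d+1) := by
    have := pattern_count (F := fun (ρ : P) xi => F ρ (Sum.inl xi)) (n := d+1) (𝒜 := 𝒜.image r)
      (by
        intro p hp
        obtain ⟨p', hp', rfl⟩ := Finset.mem_image.1 hp
        obtain ⟨ω, rfl⟩ := h𝒜F p' hp'
        exact ⟨ω, rfl⟩)
      (by
        intro T hT
        apply no_linear_shatter
          (v := fun xi => Fin.snoc (fun j => -(a xi.1.1 xi.2 j)) (θ xi.1.1 xi.2))
          (t := fun _ => 0)
        intro b
        obtain ⟨ω, hω⟩ := hT b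
        refine ⟨Fin.snoc ω.1 1, fun i hi => ?_⟩
        have hsum : ∑ j, (Fin.snoc (fun j => -(a i.1.1 i.2 j)) (θ i.1.1 i.2) : Fin (d+1) → ℝ) j
              * (Fin.snoc ω.1 1 : Fin (d+1) → ℝ) j
            = (∑ j, -(a i.1.1 i.2 j * ω.1 j)) + θ i.1.1 i.2 := by
          rw [Fin.sum_univ_castSucc]
          simp [Fin.snoc_castSucc, Fin.snoc_last, neg_mul]
        rw [hsum]
        have hFi := hω i hi
        simp only [hF, Sum.elim_inl] at hFi
        rw [← hFi, decide_eq_true_iff, Finset.sum_neg_distrib]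
        constructor
        · intro h0; linarith
        · intro h0; linarith)
    rwa [Fintype.card_prod, Fintype.card_coe, Fintype.card_fin] at this
  -- Bound 2 : each fiber
  have hfibbd : ∀ β ∈ 𝒜.image r, (𝒜.filter (fun p => r p = β)).card ≤ (N + 1)^(d+1) := by
    intro β _
    set bbits : {x // x ∈ s} → Fin k → Bool := fun x i => β (x, i) with hbbits
    set G : (Fin d → ℝ) → {x // x ∈ s} → Bool :=
      fun ρ x => decide (z x.1 ≤ (∑ j, w x.1 (bbits x) j * ρ j) + c x.1 (bbits x)) with hG
    set fib := 𝒜.filter (fun p => r p = β) with hfibdef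
    have hinj2 : Set.InjOn (fun (p : (({x // x ∈ s} × Fin k) ⊕ {x // x ∈ s}) → Bool) => p ∘ Sum.inr) ↑fib := by
      intro p hp p' hp' hpp
      have hpβ : r p = β := (Finset.mem_filter.1 hp).2
      have hp'β : r p' = β := (Finset.mem_filter.1 hp').2
      funext y
      cases y with
      | inl y => rw [show p (Sum.inl y) = β y from congrFun hpβ y,
          show p' (Sum.inl y) = β y from congrFun hp'β y]
      | inr y => exact congrFun hpp y
    have hcard2 : fib.card = (fib.image (fun p => p ∘ Sum.inr)).card :=
      (Finset.card_image_of_injOn hinj2).symm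
    rw [hcard2]
    have := pattern_count (F := G) (n := d+1) (𝒜 := fib.image (fun p => p ∘ Sum.inr))
      (by
        intro q hq
        obtain ⟨p, hp, rfl⟩ := Finset.mem_image.1 hq
        have hpβ : r p = β := (Finset.mem_filter.1 hp).2
        obtain ⟨ω, rfl⟩ := h𝒜F p (Finset.mem_filter.1 hp).1
        refine ⟨ω.1, ?_⟩
        funext x
        have hb : ∀ i, bbits x i = true ↔ ∑ j, a x.1 i j * ω.1 j ≤ θ x.1 i := by
          intro i
          have : bbits x i = F ω (Sum.inl (x, i)) := by
            rw [hbbits, ← hpβ]; rfl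
          rw [this]
          simp only [hF, Sum.elim_inl]
          exact decide_eq_true_iff
        have hux := hpw x.1 ω.1 ω.2 (bbits x) hb
        simp only [hG, Function.comp_apply, hF, Sum.elim_inr, hux])
      (by
        intro T hT
        apply no_linear_shatter
          (v := fun x => Fin.snoc (w x.1 (bbits x)) (c x.1 (bbits x)))
          (t := fun x => z x.1)
        intro b
        obtain ⟨ρ, hρ⟩ := hT b
        refine ⟨Fin.snoc ρ 1, fun x hx => ?_⟩
        have hsum : ∑ j, (Fin.snoc (w x.1 (bbits x)) (c x.1 (bbits x)) : Fin (d+1) → ℝ) j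
              * (Fin.snoc ρ 1 : Fin (d+1) → ℝ) j
            = (∑ j, w x.1 (bbits x) j * ρ j) + c x.1 (bbits x) := by
          rw [Fin.sum_univ_castSucc]
          simp [Fin.snoc_castSucc, Fin.snoc_last]
        rw [hsum, ← hρ x hx]
        simp only [hG]
        exact (decide_eq_true_iff).symm)
    rwa [Fintype.card_coe] at this
  calc 2^N = 𝒜.card := hcard𝒜.symm
    _ = ∑ β ∈ 𝒜.image r, (𝒜.filter (fun p => r p = β)).card := hfib
    _ ≤ ∑ _β ∈ 𝒜.image r, (N + 1)^(d+1) := Finset.sum_le_sum hfibbd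
    _ = (𝒜.image r).card * (N + 1)^(d+1) := by rw [Finset.sum_const, smul_eq_mul]
    _ ≤ (N * k + 1)^(d+1) * (N + 1)^(d+1) := Nat.mul_le_mul_right _ himg1

set_option maxHeartbeats 2000000 in
/-- there is a universal constant `C > 0` such that, whenever `d ≥ 1`,
`P ⊆ ℝ^d`, `k ≥ 1`, and each dual function `ρ ↦ u_ρ(x)` is piecewise linear with `k`
halfspace boundaries `1{aᵢ·ρ ≤ θᵢ}` (with a linear piece `ρ ↦ w_b·ρ + c_b` on the region
labeled by each bit vector `b ∈ {0,1}^k`), then `pdim(U) ≤ C·d·ln(d·k + 1)`, i.e. every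
pseudo-shattered set of instances has size at most this bound. -/
theorem stmt_8 :
    ∃ C : ℝ, 0 < C ∧
      ∀ {X : Type u₁} (d : ℕ) (P : Set (Fin d → ℝ)) (u : (Fin d → ℝ) → X → ℝ) (k : ℕ),
        1 ≤ d → 1 ≤ k →
        (∀ x : X, ∃ (a : Fin k → Fin d → ℝ) (θ : Fin k → ℝ)
            (w : (Fin k → Bool) → Fin d → ℝ) (c : (Fin k → Bool) → ℝ),
          ∀ ρ ∈ P, ∀ b : Fin k → Bool,
            (∀ i, b i = true ↔ ∑ j, a i j * ρ j ≤ θ i) →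
            u ρ x = (∑ j, w b j * ρ j) + c b) →
        ∀ s : Finset X, PShattersFam (fun (ρ : P) (x : X) => u ρ.1 x) s →
          (s.card : ℝ) ≤ C * d * Real.log (d * k + 1) := by
  refine ⟨300, by norm_num, ?_⟩
  intro X d P u k hd hk hpw s hsh
  classical
  obtain ⟨z, hz⟩ := hsh
  choose a θ w c hpw using hpw
  have hcomb := main_count d P u k a θ w c hpw s z hz
  set N := s.card with hNdef
  -- numeric constants
  have hlog2 : (0.6931471803 : ℝ) < Real.log 2 := Real.log_two_gt_d9
  have hlog2' : Real.log 2 < 0.6931471808 := Real.log_two_lt_d9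
  have hd1 : (1:ℝ) ≤ (d:ℝ) := by exact_mod_cast hd
  have hk1 : (1:ℝ) ≤ (k:ℝ) := by exact_mod_cast hk
  set L := Real.log ((d:ℝ) * (k:ℝ) + 1) with hLdef
  have hL : Real.log 2 ≤ L := Real.log_le_log (by norm_num) (by nlinarith)
  have hLpos : (0:ℝ) < L := lt_of_lt_of_le (by linarith) hL
  have hL2 : (1:ℝ)/2 ≤ L := by linarith
  -- combinatorial bound, folded
  have h2 : 2^N ≤ (N*k+1)^(2*(d+1)) := by
    refine hcomb.trans ?_
    have hNN : (N+1) ≤ (N*k+1) := by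
      have : N ≤ N * k := Nat.le_mul_of_pos_right N hk
      omega
    calc (N*k+1)^(d+1)*(N+1)^(d+1) ≤ (N*k+1)^(d+1)*(N*k+1)^(d+1) :=
          Nat.mul_le_mul_left _ (Nat.pow_le_pow_left hNN _)
      _ = (N*k+1)^(2*(d+1)) := by rw [← pow_add, ← two_mul]
  have hcast : (2:ℝ)^N ≤ ((N:ℝ)*(k:ℝ)+1)^(2*(d+1)) := by exact_mod_cast h2
  have hQ0 : (0:ℝ) ≤ Real.log ((N:ℝ)*(k:ℝ)+1) := by
    apply Real.log_nonneg
    have : (0:ℝ) ≤ (N:ℝ)*(k:ℝ) := by positivity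
    linarith
  have hlogs : (N:ℝ) * Real.log 2 ≤ (2*(d:ℝ)+2) * Real.log ((N:ℝ)*(k:ℝ)+1) := by
    have h := Real.log_le_log (by positivity) hcast
    rw [Real.log_pow, Real.log_pow] at h
    push_cast at h
    linarith
  set A := 4*(d:ℝ)/Real.log 2 with hAdef
  have hApos : (0:ℝ) < A := by
    rw [hAdef]; positivity
  have hNA : (N:ℝ) ≤ A * Real.log ((N:ℝ)*(k:ℝ)+1) := by
    rw [hAdef, div_mul_eq_mul_div, le_div_iff₀ (by linarith)]
    nlinarith
  have hsplit : Real.log ((N:ℝ)*(k:ℝ)+1) ≤ Real.log ((N:ℝ)+1) + Real.log ((k:ℝ)+1) := by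
    have h1 : (N:ℝ)*(k:ℝ)+1 ≤ ((N:ℝ)+1)*((k:ℝ)+1) := by nlinarith [Nat.cast_nonneg (α := ℝ) N]
    have h2' : Real.log ((N:ℝ)*(k:ℝ)+1) ≤ Real.log (((N:ℝ)+1)*((k:ℝ)+1)) :=
      Real.log_le_log (by positivity) h1
    rwa [Real.log_mul (by positivity) (by positivity)] at h2'
  have hlogN : Real.log ((N:ℝ)+1) ≤ ((N:ℝ)+1)/(2*A) + Real.log (2*A) - 1 := by
    have h1 : Real.log (((N:ℝ)+1)/(2*A)) ≤ ((N:ℝ)+1)/(2*A) - 1 :=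
      Real.log_le_sub_one_of_pos (by positivity)
    rw [Real.log_div (by positivity) (by positivity)] at h1
    linarith
  have step1 : (N:ℝ) ≤ A * (Real.log ((N:ℝ)+1) + Real.log ((k:ℝ)+1)) :=
    hNA.trans (mul_le_mul_of_nonneg_left hsplit hApos.le)
  have step2 : A * (Real.log ((N:ℝ)+1) + Real.log ((k:ℝ)+1)) ≤
      A * (((N:ℝ)+1)/(2*A) + Real.log (2*A) - 1 + Real.log ((k:ℝ)+1)) :=
    mul_le_mul_of_nonneg_left (by linarith) hApos.le
  have hhalf : A * (((N:ℝ)+1)/(2*A)) = ((N:ℝ)+1)/2 := by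
    field_simp
  have hNbd : (N:ℝ) ≤ 1 + 2*A*Real.log (2*A) + 2*A*Real.log ((k:ℝ)+1) := by
    have h3 : A * (((N:ℝ)+1)/(2*A) + Real.log (2*A) - 1 + Real.log ((k:ℝ)+1)) =
        ((N:ℝ)+1)/2 + A*Real.log (2*A) - A + A*Real.log ((k:ℝ)+1) := by
      rw [mul_add, mul_sub, mul_add, hhalf]; ring
    nlinarith [step1.trans step2]
  have hA1 : Real.log 2 * (2*A) = 8*(d:ℝ) := by
    rw [hAdef]
    field_simp
    ring
  have he2A : 2*A = 8*(d:ℝ)/Real.log 2 := by rw [hAdef]; ring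
  have h2A12 : 2*A ≤ 12*(d:ℝ) := by
    rw [he2A, div_le_iff₀ (by linarith)]
    have hm : 12*(d:ℝ)*(0.6931471803:ℝ) ≤ 12*(d:ℝ)*Real.log 2 :=
      mul_le_mul_of_nonneg_left hlog2.le (by linarith)
    linarith [hm, hd1]
  have h2Aone : (1:ℝ) ≤ 2*A := by
    rw [he2A, le_div_iff₀ (by linarith)]
    linarith [hlog2', hd1]
  have hlogd : Real.log (d:ℝ) ≤ L := Real.log_le_log (by linarith) (by nlinarith)
  have hlogk : Real.log ((k:ℝ)+1) ≤ L := Real.log_le_log (by linarith) (by nlinarith)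
  have hlog2A : Real.log (2*A) ≤ 11 + L := by
    have hc : Real.log (2*A) ≤ Real.log (12*(d:ℝ)) := Real.log_le_log (by linarith) h2A12
    have hm : Real.log (12*(d:ℝ)) = Real.log 12 + Real.log (d:ℝ) :=
      Real.log_mul (by norm_num) (by linarith)
    have h12 : Real.log 12 ≤ 11 := by
      linarith [Real.log_le_sub_one_of_pos (show (0:ℝ) < 12 by norm_num)]
    linarith
  have t1 : 2*A*Real.log (2*A) ≤ 12*(d:ℝ)*(11 + L) := by
    have h0 : 0 ≤ Real.log (2*A) := Real.log_nonneg h2Aone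
    exact mul_le_mul h2A12 hlog2A h0 (by linarith)
  have t2 : 2*A*Real.log ((k:ℝ)+1) ≤ 12*(d:ℝ)*L := by
    have h0 : 0 ≤ Real.log ((k:ℝ)+1) := Real.log_nonneg (by linarith)
    exact mul_le_mul h2A12 hlogk h0 (by linarith)
  have hfinal : (N:ℝ) ≤ 1 + 132*(d:ℝ) + 24*((d:ℝ)*L) := by nlinarith [hNbd, t1, t2]
  have hdL : (1:ℝ)/2 ≤ (d:ℝ)*L := by nlinarith
  calc ((s.card : ℕ):ℝ) = (N:ℝ) := by rw [hNdef]
    _ ≤ 1 + 132*(d:ℝ) + 24*((d:ℝ)*L) := hfinal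
    _ ≤ 300 * (d:ℝ) * L := by nlinarith
end

section
/- Let m ≥ 1 and let f_1, …, f_m : ℝ → ℝ be affine functions. Then there exists a finite set D ⊆ ℝ with |D| ≤ m(m−1)/2 such that the map ρ ↦ {i ∈ [m] : f_i(ρ) = max_{j ∈ [m]} f_j(ρ)} (the set of maximizers) is constant on every connected component of ℝ ∖ D. -/
/-- for `m ≥ 1` affine functions `f₁, …, f_m : ℝ → ℝ`, there is a finite set
`D ⊆ ℝ` with `|D| ≤ m(m−1)/2` such that the set-of-maximizers map
`ρ ↦ {i : fᵢ(ρ) = max_j f_j(ρ)}` is constant on every connected component of `ℝ ∖ D`. -/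
theorem stmt_9 (m : ℕ) (hm : 1 ≤ m) (f : Fin m → ℝ → ℝ)
    (hf : ∀ i, ∃ a b : ℝ, ∀ ρ, f i ρ = a * ρ + b) :
    ∃ D : Finset ℝ, D.card ≤ m * (m - 1) / 2 ∧
      ∀ ρ₁ ρ₂ : ℝ, ρ₁ ≤ ρ₂ → (∀ d ∈ D, ¬ (ρ₁ ≤ d ∧ d ≤ ρ₂)) →
        ∀ i : Fin m, ((∀ j, f j ρ₁ ≤ f i ρ₁) ↔ (∀ j, f j ρ₂ ≤ f i ρ₂)) := by
  choose a b hab using hf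
  have hsymm : ∀ i j : Fin m, (b j - b i) / (a i - a j) = (b i - b j) / (a j - a i) := by
    intro i j
    rcases eq_or_ne (a i) (a j) with h | h
    · rw [h]; ring_nf
    · rw [div_eq_div_iff (by intro hc; apply h; linarith) (by intro hc; apply h; linarith)]
      ring
  set g : Sym2 (Fin m) → ℝ := Sym2.lift ⟨fun i j => (b j - b i) / (a i - a j), hsymm⟩ with hg
  refine ⟨Finset.image (fun s : {s : Sym2 (Fin m) // ¬ s.IsDiag} => g s.1) Finset.univ, ?_, ?_⟩
  · calc (Finset.image (fun s : {s : Sym2 (Fin m) // ¬ s.IsDiag} => g s.1) Finset.univ).card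
        ≤ Fintype.card {s : Sym2 (Fin m) // ¬ s.IsDiag} :=
          le_trans (Finset.card_image_le) (le_of_eq (Finset.card_univ))
      _ = (Fintype.card (Fin m)).choose 2 := Sym2.card_subtype_not_diag
      _ = m * (m - 1) / 2 := by rw [Fintype.card_fin, Nat.choose_two_right]
  · intro ρ₁ ρ₂ hle hD i
    have key : ∀ j k : Fin m, f j ρ₁ ≤ f k ρ₁ ↔ f j ρ₂ ≤ f k ρ₂ := by
      intro j k
      rcases eq_or_ne j k with rfl | hjk
      · simp
      rcases eq_or_ne (a k) (a j) with h | h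
      · simp only [hab, h]
        constructor <;> intro h' <;> linarith
      · set c : ℝ := a k - a j with hc
        have hc0 : c ≠ 0 := sub_ne_zero.mpr h
        set r : ℝ := (b j - b k) / c with hr
        have hrD : r ∈ Finset.image (fun s : {s : Sym2 (Fin m) // ¬ s.IsDiag} => g s.1)
            Finset.univ := by
          refine Finset.mem_image.mpr ⟨⟨s(k, j), by simpa using hjk.symm⟩, Finset.mem_univ _, ?_⟩
          simp [hg, Sym2.lift_mk, hr, hc]
        have hform : ∀ ρ, f k ρ - f j ρ = c * (ρ - r) := by
          intro ρ
          rw [hab, hab, hr]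
          field_simp
          ring
        have hnot := hD r hrD
        have hcase : r < ρ₁ ∨ ρ₂ < r := by
          by_contra hcon
          push_neg at hcon
          exact hnot ⟨hcon.1, hcon.2⟩
        have h1 := hform ρ₁
        have h2 := hform ρ₂
        rcases hcase with hrlt | hrgt
        · rcases lt_or_gt_of_ne hc0 with hcneg | hcpos
          · constructor <;> intro h' <;> nlinarith
          · constructor <;> intro h' <;> nlinarith
        · rcases lt_or_gt_of_ne hc0 with hcneg | hcpos
          · constructor <;> intro h' <;> nlinarith
          · constructor <;> intro h' <;> nlinarith
    constructor <;> intro h' j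
    · exact (key j i).mp (h' j)
    · exact (key j i).mpr (h' j)
end

section
/- Fix n ≥ 2. Let s be any real-valued function on the set of pseudoknot-free foldings of length n, and for ρ ∈ [0,1] and a folding φ define V_ρ(φ) = ρ·|φ| + (1 − ρ)·s(φ). Then there exists a finite set D ⊆ [0,1] with |D| ≤ n² such that the map ρ ↦ {φ : V_ρ(φ) = max_{φ'} V_ρ(φ')} (the set of co-optimal foldings) is constant on every connected component of [0,1] ∖ D. Consequently, if A_ρ is any choice of an optimal folding for each ρ ∈ [0,1] that is constant on every region of [0,1] where the set of co-optimal foldings is constant, then for any real-valued function u on foldings, the map ρ ↦ u(A_ρ) is piecewise constant on [0,1] with at most n² discontinuities. -/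
/-- A pseudoknot-free folding of length `n`: a set of pairs `(i, j)` with `1 ≤ i < j ≤ n`,
every index occurring in at most one pair, and no crossing pairs. -/
def IsFolding (n : ℕ) (φ : Finset (ℕ × ℕ)) : Prop :=
  (∀ p ∈ φ, 1 ≤ p.1 ∧ p.1 < p.2 ∧ p.2 ≤ n) ∧
  (∀ p ∈ φ, ∀ q ∈ φ, p ≠ q → p.1 ≠ q.1 ∧ p.1 ≠ q.2 ∧ p.2 ≠ q.1 ∧ p.2 ≠ q.2) ∧
  (∀ p ∈ φ, ∀ q ∈ φ, ¬ (p.1 < q.1 ∧ q.1 < p.2 ∧ p.2 < q.2))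

/-- The type of pseudoknot-free foldings of length `n`. -/
def Fold (n : ℕ) := {φ : Finset (ℕ × ℕ) // IsFolding n φ}

/-- The parameterized objective `V_ρ(φ) = ρ·|φ| + (1 − ρ)·s(φ)`. -/
noncomputable def Vval {n : ℕ} (s : Fold n → ℝ) (ρ : ℝ) (φ : Fold n) : ℝ :=
  ρ * (φ.1.card : ℝ) + (1 - ρ) * s φ

/-!
For `ρ < 1` a folding is optimal iff its score `s` is the best, `g k`, among the foldings of its
size `k`, and `k` maximizes `ρ k + (1 - ρ) g k` over the sizes that occur. Each such envelope line
is affine in `ρ`, so this condition can only change at `ρ = 1` or where two of the lines cross.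
Sizes lie in `{0, …, n - 1}`, so there are at most `n (n - 1) + 1 ≤ n²` such points.
-/

/-- The zero of `ρ ↦ ρ * p + (1 - ρ) * q`; a junk value when `p = q`, where that map is
constant. -/
noncomputable def crossPoint (p q : ℝ) : ℝ := q / (q - p)

theorem nonneg_iff_of_crossPoint_notMem {p q ρ₁ ρ₂ : ℝ} (h : ρ₁ ≤ ρ₂)
    (hc : crossPoint p q ∉ Set.Icc ρ₁ ρ₂) :
    0 ≤ ρ₁ * p + (1 - ρ₁) * q ↔ 0 ≤ ρ₂ * p + (1 - ρ₂) * q := by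
  rcases eq_or_ne q p with rfl | hqp
  · ring_nf
  have factor : ∀ ρ, ρ * p + (1 - ρ) * q = (p - q) * (ρ - crossPoint p q) := by
    intro ρ
    have : p - q ≠ 0 := sub_ne_zero.2 hqp.symm
    rw [crossPoint, ← neg_sub p q, div_neg]
    field_simp
    ring
  rcases not_and_or.1 hc with hlt | hgt
  · rw [factor, factor, mul_nonneg_iff_of_pos_right (by linarith),
      mul_nonneg_iff_of_pos_right (by linarith)]
  · rw [factor, factor, ← neg_mul_neg, ← neg_mul_neg (p - q), neg_sub, neg_sub,
      mul_nonneg_iff_of_pos_right (by linarith), mul_nonneg_iff_of_pos_right (by linarith)]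

section Envelope

variable {ι : Type*} (a b : ι → ℝ)

noncomputable def fiberSup (k : ℝ) : ℝ := sSup (b '' {i | a i = k})

/-- For `ρ ≤ 1`, the maximum of `ρ * a + (1 - ρ) * b` over the elements with `a = k`. -/
noncomputable def envelopeLine (ρ k : ℝ) : ℝ := ρ * k + (1 - ρ) * fiberSup a b k

variable [Finite ι]

theorem le_fiberSup (i : ι) : b i ≤ fiberSup a b (a i) :=
  le_csSup ((Set.toFinite _).image b).bddAbove ⟨i, rfl, rfl⟩

theorem exists_eq_fiberSup (i : ι) : ∃ j, a j = a i ∧ b j = fiberSup a b (a i) :=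
  (Set.Nonempty.image b ⟨i, (rfl : a i = a i)⟩).csSup_mem ((Set.toFinite _).image b)

theorem optimal_iff_envelopeLine {ρ : ℝ} (hρ : ρ < 1) (i : ι) :
    (∀ j, ρ * a j + (1 - ρ) * b j ≤ ρ * a i + (1 - ρ) * b i) ↔
      b i = fiberSup a b (a i) ∧ ∀ j, envelopeLine a b ρ (a j) ≤ envelopeLine a b ρ (a i) := by
  have hpos : 0 < 1 - ρ := sub_pos.2 hρ
  constructor
  · intro hopt
    obtain ⟨i', hai', hbi'⟩ := exists_eq_fiberSup a b i
    have hsup : fiberSup a b (a i) ≤ b i := by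
      have := hopt i'
      rw [hai', hbi'] at this
      exact le_of_mul_le_mul_left (by linarith) hpos
    refine ⟨le_antisymm (le_fiberSup a b i) hsup, fun j => ?_⟩
    obtain ⟨j', haj', hbj'⟩ := exists_eq_fiberSup a b j
    have := hopt j'
    rw [haj', hbj'] at this
    unfold envelopeLine
    linarith [mul_le_mul_of_nonneg_left (le_fiberSup a b i) hpos.le]
  · rintro ⟨hbi, henv⟩ j
    have := henv j
    unfold envelopeLine at this
    rw [← hbi] at this
    linarith [mul_le_mul_of_nonneg_left (le_fiberSup a b j) hpos.le]

end Envelope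

section Breakpoints

open Finset

variable {ι : Type*} [Fintype ι] (a b : ι → ℝ)

/-- `1` is included because at `ρ = 1` the score `b` no longer breaks ties. -/
noncomputable def breakpoints : Finset ℝ :=
  insert 1 (((univ.image a).offDiag.image fun kk =>
    crossPoint (kk.1 - kk.2) (fiberSup a b kk.1 - fiberSup a b kk.2)).filter (· ∈ Set.Icc 0 1))

theorem breakpoints_subset_Icc : (breakpoints a b : Set ℝ) ⊆ Set.Icc 0 1 := by
  intro d hd
  rw [breakpoints, coe_insert, coe_filter] at hd
  rcases hd with rfl | ⟨-, hd⟩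
  exacts [⟨zero_le_one, le_rfl⟩, hd]

theorem card_breakpoints_le [Nonempty ι] : #(breakpoints a b) ≤ #(univ.image a) ^ 2 := by
  have hpos : 0 < #(univ.image a) := card_pos.2 (univ_nonempty.image a)
  calc #(breakpoints a b) ≤ #(univ.image a).offDiag + 1 := (card_insert_le _ _).trans
        (Nat.add_le_add_right ((card_filter_le _ _).trans card_image_le) 1)
    _ ≤ #(univ.image a) ^ 2 := by
        rw [offDiag_card, sq]
        have := Nat.le_mul_self #(univ.image a)
        omega

variable {a b}

theorem envelopeLine_le_iff_of_notMem_breakpoints {ρ₁ ρ₂ : ℝ} (h₁ : ρ₁ ∈ Set.Icc (0 : ℝ) 1)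
    (h₂ : ρ₂ ∈ Set.Icc (0 : ℝ) 1) (h : ρ₁ ≤ ρ₂) (hD : ∀ d ∈ breakpoints a b, d ∉ Set.Icc ρ₁ ρ₂)
    (i j : ι) :
    envelopeLine a b ρ₁ (a j) ≤ envelopeLine a b ρ₁ (a i) ↔
      envelopeLine a b ρ₂ (a j) ≤ envelopeLine a b ρ₂ (a i) := by
  rcases eq_or_ne (a i) (a j) with hij | hij
  · simp only [hij, le_refl]
  have hdiff : ∀ ρ, envelopeLine a b ρ (a j) ≤ envelopeLine a b ρ (a i) ↔
      0 ≤ ρ * (a i - a j) + (1 - ρ) * (fiberSup a b (a i) - fiberSup a b (a j)) := fun ρ => by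
    rw [← sub_nonneg, envelopeLine, envelopeLine]
    ring_nf
  rw [hdiff, hdiff]
  refine nonneg_iff_of_crossPoint_notMem h fun hc => hD _ ?_ hc
  refine mem_insert_of_mem (mem_filter.2 ⟨mem_image.2 ⟨(a i, a j), ?_, rfl⟩,
    h₁.1.trans hc.1, hc.2.trans h₂.2⟩)
  simp [hij]

theorem optimal_iff_optimal_of_notMem_breakpoints {ρ₁ ρ₂ : ℝ} (h₁ : ρ₁ ∈ Set.Icc (0 : ℝ) 1)
    (h₂ : ρ₂ ∈ Set.Icc (0 : ℝ) 1) (h : ρ₁ ≤ ρ₂) (hD : ∀ d ∈ breakpoints a b, d ∉ Set.Icc ρ₁ ρ₂)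
    (i : ι) :
    (∀ j, ρ₁ * a j + (1 - ρ₁) * b j ≤ ρ₁ * a i + (1 - ρ₁) * b i) ↔
      (∀ j, ρ₂ * a j + (1 - ρ₂) * b j ≤ ρ₂ * a i + (1 - ρ₂) * b i) := by
  have hρ₂ : ρ₂ < 1 :=
    lt_of_le_of_ne h₂.2 fun h1 => hD 1 (mem_insert_self _ _) ⟨h₁.2, h1.ge⟩
  rw [optimal_iff_envelopeLine a b (h.trans_lt hρ₂), optimal_iff_envelopeLine a b hρ₂]
  exact and_congr_right fun _ => forall_congr' fun j =>
    envelopeLine_le_iff_of_notMem_breakpoints h₁ h₂ h hD i j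

end Breakpoints

theorem IsFolding.subset_Icc_product {n : ℕ} {φ : Finset (ℕ × ℕ)} (h : IsFolding n φ) :
    φ ⊆ Finset.Icc 1 n ×ˢ Finset.Icc 1 n := fun p hp => by
  have := h.1 p hp
  simp only [Finset.mem_product, Finset.mem_Icc]
  omega

namespace Fold

instance (n : ℕ) : Finite (Fold n) :=
  ((Finset.Icc 1 n ×ˢ Finset.Icc 1 n).powerset.finite_toSet.subset
    fun _ hφ => Finset.mem_powerset.2 (IsFolding.subset_Icc_product hφ)).to_subtype

noncomputable instance (n : ℕ) : Fintype (Fold n) := Fintype.ofFinite _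

instance (n : ℕ) : Nonempty (Fold n) :=
  ⟨⟨∅, by simp [IsFolding]⟩⟩

/-- Distinct pairs of a folding have distinct left ends, all in `[1, n - 1]`. -/
theorem card_le {n : ℕ} (φ : Fold n) : φ.1.card ≤ n - 1 := by
  have hinj : Set.InjOn Prod.fst (φ.1 : Set (ℕ × ℕ)) := fun p hp q hq hpq => by
    by_contra hne
    exact (φ.2.2.1 p hp q hq hne).1 hpq
  have hmaps : Set.MapsTo Prod.fst (φ.1 : Set (ℕ × ℕ)) (Finset.Icc 1 (n - 1)) := fun p hp => by
    have := φ.2.1 p hp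
    simp only [Finset.coe_Icc, Set.mem_Icc]
    omega
  simpa using Finset.card_le_card_of_injOn Prod.fst hmaps hinj

theorem card_image_card_le {n : ℕ} (hn : 1 ≤ n) :
    (Finset.univ.image fun φ : Fold n => (φ.1.card : ℝ)).card ≤ n :=
  calc _ ≤ ((Finset.range n).image (Nat.cast : ℕ → ℝ)).card := by
        refine Finset.card_le_card fun x hx => ?_
        obtain ⟨φ, -, rfl⟩ := Finset.mem_image.1 hx
        exact Finset.mem_image_of_mem _ (Finset.mem_range.2 (by have := card_le φ; omega))
    _ ≤ n := Finset.card_image_le.trans (Finset.card_range n).le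

end Fold

/-- for any score function `s` on pseudoknot-free foldings of length `n ≥ 2`,
there is a finite `D ⊆ [0,1]` with `|D| ≤ n²` such that the set of co-optimal foldings of
`V_ρ` is constant on every connected component of `[0,1] ∖ D`; consequently, for any
optimal-folding selection `A` that is constant wherever the co-optimal set is constant,
and any utility `u` on foldings, `ρ ↦ u(A_ρ)` is piecewise constant on `[0,1]` with at
most `n²` discontinuities. -/
theorem stmt_10 (n : ℕ) (hn : 2 ≤ n) (s : Fold n → ℝ) :
    (∃ D : Finset ℝ, (↑D : Set ℝ) ⊆ Set.Icc (0 : ℝ) 1 ∧ D.card ≤ n ^ 2 ∧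
      ∀ ρ₁ ∈ Set.Icc (0 : ℝ) 1, ∀ ρ₂ ∈ Set.Icc (0 : ℝ) 1, ρ₁ ≤ ρ₂ →
        (∀ d ∈ D, ¬ (ρ₁ ≤ d ∧ d ≤ ρ₂)) →
        ∀ φ : Fold n,
          ((∀ φ', Vval s ρ₁ φ' ≤ Vval s ρ₁ φ) ↔ (∀ φ', Vval s ρ₂ φ' ≤ Vval s ρ₂ φ))) ∧
    (∀ A : ℝ → Fold n,
      (∀ ρ ∈ Set.Icc (0 : ℝ) 1, ∀ φ', Vval s ρ φ' ≤ Vval s ρ (A ρ)) →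
      (∀ ρ₁ ∈ Set.Icc (0 : ℝ) 1, ∀ ρ₂ ∈ Set.Icc (0 : ℝ) 1,
        (∀ φ : Fold n, (∀ φ', Vval s ρ₁ φ' ≤ Vval s ρ₁ φ) ↔
          (∀ φ', Vval s ρ₂ φ' ≤ Vval s ρ₂ φ)) → A ρ₁ = A ρ₂) →
      ∀ u : Fold n → ℝ,
        ∃ D : Finset ℝ, (↑D : Set ℝ) ⊆ Set.Icc (0 : ℝ) 1 ∧ D.card ≤ n ^ 2 ∧
          ∀ ρ₁ ∈ Set.Icc (0 : ℝ) 1, ∀ ρ₂ ∈ Set.Icc (0 : ℝ) 1, ρ₁ ≤ ρ₂ →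
            (∀ d ∈ D, ¬ (ρ₁ ≤ d ∧ d ≤ ρ₂)) → u (A ρ₁) = u (A ρ₂)) := by
  set D := breakpoints (fun φ : Fold n => (φ.1.card : ℝ)) s
  have hcard : D.card ≤ n ^ 2 := (card_breakpoints_le _ s).trans
    (Nat.pow_le_pow_left (Fold.card_image_card_le (by omega)) 2)
  have hstable : ∀ ρ₁ ∈ Set.Icc (0 : ℝ) 1, ∀ ρ₂ ∈ Set.Icc (0 : ℝ) 1, ρ₁ ≤ ρ₂ →
      (∀ d ∈ D, ¬ (ρ₁ ≤ d ∧ d ≤ ρ₂)) → ∀ φ : Fold n,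
        ((∀ φ', Vval s ρ₁ φ' ≤ Vval s ρ₁ φ) ↔ (∀ φ', Vval s ρ₂ φ' ≤ Vval s ρ₂ φ)) :=
    fun _ h₁ _ h₂ h hD => optimal_iff_optimal_of_notMem_breakpoints h₁ h₂ h hD
  refine ⟨⟨D, breakpoints_subset_Icc _ s, hcard, hstable⟩, fun A _ hA u =>
    ⟨D, breakpoints_subset_Icc _ s, hcard, fun ρ₁ h₁ ρ₂ h₂ h hD => ?_⟩⟩
  exact congrArg u (hA ρ₁ h₁ ρ₂ h₂ (hstable ρ₁ h₁ ρ₂ h₂ h hD))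
end

section
/- Fix n ≥ 2 and reals c_{ij} for all 1 ≤ i < j ≤ n. For each TAD set T define h_T : [0,∞) → ℝ by h_T(ρ) = Σ_{(i,j) ∈ T} c_{ij}·(j − i)^{−ρ}. Then there exists a finite set D ⊆ [0,∞) with |D| ≤ 2n²·4^{n²} such that the map ρ ↦ {T : h_T(ρ) = max_{T'} h_{T'}(ρ)}, where T and T' range over all TAD sets on {1,…,n}, is constant on every connected component of [0,∞) ∖ D. -/
/-!
For TAD sets `T`, `T'` on `{1, …, n}`, the difference `h_T - h_T'` is an exponential sum
`∑ a_p e^{r_p ρ}` indexed by the pairs `p = (i, j)` with `1 ≤ i, j ≤ n`, where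
`r_p = -log (j - i)`. Multiplying such a sum by `e^{-r_q ρ}` and differentiating kills the
`q`-th term, so by Rolle's theorem a sum with `k` terms that is not identically zero has fewer
than `k` zeros. Let `D` be the set of `ρ ≥ 0` at which two different functions `h_T ≠ h_T'`
agree; it has at most `n² · 4^{n²}` points. On an interval avoiding `D`, each difference
`h_T - h_T'` is either identically zero or has constant sign (intermediate value theorem), so
the set of maximizers cannot change.
-/

/-- A TAD set on `{1, …, n}`: pairs `(i₁,j₁), …, (i_t,j_t)` with
`1 ≤ i₁ < j₁ < i₂ < j₂ < … < i_t < j_t ≤ n`. -/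
def IsTADSet (n : ℕ) (T : Finset (ℕ × ℕ)) : Prop :=
  (∀ p ∈ T, 1 ≤ p.1 ∧ p.1 < p.2 ∧ p.2 ≤ n) ∧
  (∀ p ∈ T, ∀ q ∈ T, p ≠ q → (p.2 < q.1 ∨ q.2 < p.1))

/-- `h_T(ρ) = Σ_{(i,j) ∈ T} c_{ij}·(j − i)^{−ρ}`. -/
noncomputable def hTAD (c : ℕ → ℕ → ℝ) (T : Finset (ℕ × ℕ)) (ρ : ℝ) : ℝ :=
  ∑ p ∈ T, c p.1 p.2 * ((p.2 : ℝ) - (p.1 : ℝ)) ^ (-ρ)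

open Finset Real

theorem encard_zeros_le_encard_zeros_deriv_add_one {f : ℝ → ℝ} (hf : Differentiable ℝ f) :
    {x | f x = 0}.encard ≤ {x | deriv f x = 0}.encard + 1 := by
  obtain hinf | hfin := {x | deriv f x = 0}.infinite_or_finite
  · simp [hinf.encard_eq]
  have hZ (Z : Finset ℝ) (hZ : ↑Z ⊆ {x | f x = 0}) : Z.card ≤ hfin.toFinset.card + 1 :=
    card_le_of_interleaved fun x hx y hy hxy _ => by
      obtain ⟨z, hz, hz'⟩ :=
        exists_deriv_eq_zero hxy hf.continuous.continuousOn ((hZ hx).trans (hZ hy).symm)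
      exact ⟨z, hfin.mem_toFinset.2 hz', hz⟩
  rw [hfin.encard_eq_coe_toFinset_card]
  by_contra! h
  obtain ⟨Z, hZsub, hZcard⟩ := Set.exists_subset_encard_eq (Order.add_one_le_of_lt h)
  have hZfin : Z.Finite := Set.finite_of_encard_eq_coe hZcard
  have := hZ hZfin.toFinset (by simpa using hZsub)
  rw [hZfin.encard_eq_coe_toFinset_card] at hZcard
  norm_cast at hZcard
  omega

section ExpSum

variable {ι : Type*}

noncomputable def expSum (s : Finset ι) (a r : ι → ℝ) (x : ℝ) : ℝ :=
  ∑ i ∈ s, a i * exp (r i * x)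

theorem hasDerivAt_expSum (s : Finset ι) (a r : ι → ℝ) (x : ℝ) :
    HasDerivAt (expSum s a r) (expSum s (fun i => a i * r i) r x) x := by
  unfold expSum
  refine HasDerivAt.fun_sum fun i _ => ?_
  have := (((hasDerivAt_id' x).const_mul (r i)).exp).const_mul (a i)
  rw [mul_one] at this
  exact this.congr_deriv (by ring)

theorem differentiable_expSum (s : Finset ι) (a r : ι → ℝ) :
    Differentiable ℝ (expSum s a r) :=
  fun x => (hasDerivAt_expSum s a r x).differentiableAt

theorem expSum_sub_exponent (s : Finset ι) (a r : ι → ℝ) (t x : ℝ) :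
    expSum s a (fun i => r i - t) x = expSum s a r x * exp (-t * x) := by
  simp only [expSum, sum_mul, mul_assoc, ← exp_add, sub_eq_add_neg, add_mul, neg_mul]

theorem expSum_sub (s : Finset ι) (a b r : ι → ℝ) (x : ℝ) :
    expSum s a r x - expSum s b r x = expSum s (a - b) r x := by
  simp only [expSum, ← sum_sub_distrib, Pi.sub_apply, sub_mul]

theorem expSum_eq_of_subset [DecidableEq ι] {s t : Finset ι} (h : s ⊆ t) (a r : ι → ℝ) :
    expSum s a r = expSum t (fun i => if i ∈ s then a i else 0) r := by
  ext x
  simp only [expSum, ite_mul, zero_mul, sum_ite_mem, inter_eq_right.2 h]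

theorem encard_setOf_expSum_eq_zero_lt (s : Finset ι) (a r : ι → ℝ)
    (h : ∃ x, expSum s a r x ≠ 0) : {x | expSum s a r x = 0}.encard < s.card := by
  classical
  induction s using Finset.induction_on generalizing a r with
  | empty => simp [expSum] at h
  | insert j s hj ih =>
    obtain ⟨x₀, hx₀⟩ := h
    set g := expSum (insert j s) a (fun i => r i - r j)
    set g' := expSum s (fun i => a i * (r i - r j)) (fun i => r i - r j)
    have hzeros : {x | expSum (insert j s) a r x = 0} = {x | g x = 0} := by
      ext x
      simp [g, expSum_sub_exponent, exp_ne_zero]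
    have hderiv : deriv g = g' := funext fun x => by
      rw [(hasDerivAt_expSum _ _ _ x).deriv]
      simp [g', expSum, sum_insert hj]
    rw [hzeros, card_insert_of_notMem hj]
    by_cases hg' : ∃ x, g' x ≠ 0
    · calc {x | g x = 0}.encard ≤ {x | g' x = 0}.encard + 1 := by
            rw [← hderiv]
            exact encard_zeros_le_encard_zeros_deriv_add_one (differentiable_expSum _ _ _)
        _ < s.card + 1 := (ENat.add_lt_add_iff_right ENat.one_ne_top).2 (ih _ _ hg')
    · push Not at hg'
      have hg_const (x : ℝ) : g x = g x₀ :=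
        is_const_of_deriv_eq_zero (differentiable_expSum _ _ _)
          (fun y => by rw [hderiv, hg' y]) x x₀
      have hgx₀ : g x₀ ≠ 0 := by simp [g, expSum_sub_exponent, hx₀, exp_ne_zero]
      simp [hg_const, hgx₀]

theorem encard_setOf_expSum_eq_expSum_lt {s : Finset ι} {a b r : ι → ℝ}
    (h : expSum s a r ≠ expSum s b r) :
    {x | expSum s a r x = expSum s b r x}.encard < s.card := by
  simp_rw [← sub_eq_zero (a := expSum s a r _), expSum_sub]
  refine encard_setOf_expSum_eq_zero_lt s _ r ?_
  by_contra! h'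
  exact h (funext fun x => sub_eq_zero.1 ((expSum_sub s a b r x).trans (h' x)))

end ExpSum

theorem IsPreconnected.le_iff_le_of_eq_imp_eq {X α : Type*} [TopologicalSpace X] [LinearOrder α]
    [TopologicalSpace α] [OrderClosedTopology α] {s : Set X} (hs : IsPreconnected s) {a b : X}
    (ha : a ∈ s) (hb : b ∈ s) {f g : X → α} (hf : ContinuousOn f s) (hg : ContinuousOn g s)
    (h : ∀ x ∈ s, f x = g x → f = g) : f a ≤ g a ↔ f b ≤ g b := by
  have key {a b : X} (ha : a ∈ s) (hb : b ∈ s) (hab : f a ≤ g a) : f b ≤ g b := by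
    by_contra! hlt
    obtain ⟨x, hx, hfgx⟩ := hs.intermediate_value₂ ha hb hf hg hab hlt.le
    exact hlt.ne' (congrFun (h x hx hfgx) b)
  exact ⟨key ha hb, key hb ha⟩

theorem IsTADSet.subset_Icc_product {n : ℕ} {T : Finset (ℕ × ℕ)} (hT : IsTADSet n T) :
    T ⊆ Icc 1 n ×ˢ Icc 1 n := fun p hp => by
  obtain ⟨h1, h2, h3⟩ := hT.1 p hp
  simp only [mem_product, mem_Icc]
  omega

theorem hTAD_eq_expSum (c : ℕ → ℕ → ℝ) {T : Finset (ℕ × ℕ)} (hT : ∀ p ∈ T, p.1 < p.2) :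
    hTAD c T = expSum T (fun p => c p.1 p.2) (fun p => -log ((p.2 : ℝ) - p.1)) := by
  ext ρ
  refine sum_congr rfl fun p hp => ?_
  have hpos : (0 : ℝ) < (p.2 : ℝ) - p.1 := sub_pos.2 (by exact_mod_cast hT p hp)
  rw [rpow_def_of_pos hpos, neg_mul_comm]

theorem continuous_hTAD (c : ℕ → ℕ → ℝ) {T : Finset (ℕ × ℕ)} (hT : ∀ p ∈ T, p.1 < p.2) :
    Continuous (hTAD c T) := by
  rw [hTAD_eq_expSum c hT]
  exact (differentiable_expSum _ _ _).continuous

theorem encard_setOf_hTAD_eq_lt (c : ℕ → ℕ → ℝ) {n : ℕ} {T T' : Finset (ℕ × ℕ)}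
    (hT : IsTADSet n T) (hT' : IsTADSet n T') (hne : hTAD c T ≠ hTAD c T') :
    {ρ | hTAD c T ρ = hTAD c T' ρ}.encard < n ^ 2 := by
  classical
  rw [hTAD_eq_expSum c fun p hp => (hT.1 p hp).2.1,
    hTAD_eq_expSum c fun p hp => (hT'.1 p hp).2.1, expSum_eq_of_subset hT.subset_Icc_product,
    expSum_eq_of_subset hT'.subset_Icc_product] at hne ⊢
  have hcard : ((Icc 1 n ×ˢ Icc 1 n).card : ℕ∞) = n ^ 2 := by simp [sq]
  exact hcard ▸ encard_setOf_expSum_eq_expSum_lt hne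

def tadTieSet (n : ℕ) (c : ℕ → ℕ → ℝ) : Set ℝ :=
  {ρ | 0 ≤ ρ ∧ ∃ T T', IsTADSet n T ∧ IsTADSet n T' ∧ hTAD c T ≠ hTAD c T' ∧
    hTAD c T ρ = hTAD c T' ρ}

theorem encard_tadTieSet_le (n : ℕ) (c : ℕ → ℕ → ℝ) :
    (tadTieSet n c).encard ≤ n ^ 2 * 4 ^ (n ^ 2) := by
  set E := Icc 1 n ×ˢ Icc 1 n
  let Z (P : Finset (ℕ × ℕ) × Finset (ℕ × ℕ)) : Set ℝ :=
    {ρ | IsTADSet n P.1 ∧ IsTADSet n P.2 ∧ hTAD c P.1 ≠ hTAD c P.2 ∧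
      hTAD c P.1 ρ = hTAD c P.2 ρ}
  have hsub : tadTieSet n c ⊆ ⋃ P ∈ E.powerset ×ˢ E.powerset, Z P := by
    rintro ρ ⟨-, T, T', hT, hT', hne, heq⟩
    exact Set.mem_biUnion (x := (T, T')) (mem_product.2 ⟨mem_powerset.2 hT.subset_Icc_product,
      mem_powerset.2 hT'.subset_Icc_product⟩) ⟨hT, hT', hne, heq⟩
  have hZ (P : Finset (ℕ × ℕ) × Finset (ℕ × ℕ)) : (Z P).encard ≤ n ^ 2 := by
    by_cases hP : IsTADSet n P.1 ∧ IsTADSet n P.2 ∧ hTAD c P.1 ≠ hTAD c P.2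
    · exact (Set.encard_le_encard fun ρ hρ => hρ.2.2.2).trans
        (encard_setOf_hTAD_eq_lt c hP.1 hP.2.1 hP.2.2).le
    · have hempty : Z P = ∅ :=
        Set.eq_empty_of_forall_notMem fun ρ hρ => hP ⟨hρ.1, hρ.2.1, hρ.2.2.1⟩
      simp [hempty]
  have hcard : (E.powerset ×ˢ E.powerset).card = 4 ^ (n ^ 2) := by
    simp [E, card_product, card_powerset, sq, ← mul_pow]
  calc (tadTieSet n c).encard ≤ ∑ P ∈ E.powerset ×ˢ E.powerset, (Z P).encard :=
        (Set.encard_le_encard hsub).trans (set_encard_biUnion_le _ _)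
    _ ≤ ∑ P ∈ E.powerset ×ˢ E.powerset, (n ^ 2 : ℕ∞) := sum_le_sum fun P _ => hZ P
    _ = n ^ 2 * 4 ^ (n ^ 2) := by rw [sum_const, hcard, nsmul_eq_mul, mul_comm]; push_cast; rfl

theorem stmt_11_general (n : ℕ) (c : ℕ → ℕ → ℝ) :
    ∃ D : Finset ℝ, (↑D : Set ℝ) ⊆ Set.Ici (0 : ℝ) ∧
      D.card ≤ 2 * n ^ 2 * 4 ^ (n ^ 2) ∧
      ∀ ρ₁ ∈ Set.Ici (0 : ℝ), ∀ ρ₂ ∈ Set.Ici (0 : ℝ), ρ₁ ≤ ρ₂ →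
        (∀ d ∈ D, ¬ (ρ₁ ≤ d ∧ d ≤ ρ₂)) →
        ∀ T : Finset (ℕ × ℕ), IsTADSet n T →
          ((∀ T', IsTADSet n T' → hTAD c T' ρ₁ ≤ hTAD c T ρ₁) ↔
           (∀ T', IsTADSet n T' → hTAD c T' ρ₂ ≤ hTAD c T ρ₂)) := by
  have hbound := encard_tadTieSet_le n c
  have hfin : (tadTieSet n c).Finite := Set.finite_of_encard_le_coe hbound
  refine ⟨hfin.toFinset, fun ρ hρ => (hfin.mem_toFinset.1 hρ).1, ?_, ?_⟩
  · rw [hfin.encard_eq_coe_toFinset_card] at hbound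
    calc hfin.toFinset.card ≤ n ^ 2 * 4 ^ (n ^ 2) := by exact_mod_cast hbound
      _ ≤ 2 * n ^ 2 * 4 ^ (n ^ 2) := by rw [mul_assoc]; omega
  · intro ρ₁ hρ₁ ρ₂ _ h12 hD T hT
    have hcont {T : Finset (ℕ × ℕ)} (hT : IsTADSet n T) : Continuous (hTAD c T) :=
      continuous_hTAD c fun p hp => (hT.1 p hp).2.1
    refine forall₂_congr fun T' hT' => isPreconnected_Icc.le_iff_le_of_eq_imp_eq
      (Set.left_mem_Icc.2 h12) (Set.right_mem_Icc.2 h12) (hcont hT').continuousOn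
      (hcont hT).continuousOn fun ρ hρ heq => ?_
    by_contra hne
    exact hD ρ (hfin.mem_toFinset.2 ⟨le_trans hρ₁ hρ.1, T', T, hT', hT, hne, heq⟩) hρ

/-- there is a finite `D ⊆ [0,∞)` with `|D| ≤ 2n²·4^{n²}` such that the
set of maximizers `{T : h_T(ρ) = max_{T'} h_{T'}(ρ)}`, over TAD sets on `{1,…,n}`, is
constant on every connected component of `[0,∞) ∖ D`. -/
theorem stmt_11 (n : ℕ) (hn : 2 ≤ n) (c : ℕ → ℕ → ℝ) :
    ∃ D : Finset ℝ, (↑D : Set ℝ) ⊆ Set.Ici (0 : ℝ) ∧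
      D.card ≤ 2 * n ^ 2 * 4 ^ (n ^ 2) ∧
      ∀ ρ₁ ∈ Set.Ici (0 : ℝ), ∀ ρ₂ ∈ Set.Ici (0 : ℝ), ρ₁ ≤ ρ₂ →
        (∀ d ∈ D, ¬ (ρ₁ ≤ d ∧ d ≤ ρ₂)) →
        ∀ T : Finset (ℕ × ℕ), IsTADSet n T →
          ((∀ T', IsTADSet n T' → hTAD c T' ρ₁ ≤ hTAD c T ρ₁) ↔
           (∀ T', IsTADSet n T' → hTAD c T' ρ₂ ≤ hTAD c T ρ₂)) :=
  stmt_11_general n c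
end

section
/- Fix n ≥ 1 agents and m ≥ 1 alternatives. For ρ ∈ P = {ρ ∈ ℝ^n : ρ_i ≥ 0 for all i, and ρ_i = 0 for some i} and a valuation matrix v ∈ ℝ^{n×m}, let ψ_ρ(v) be the smallest j ∈ [m] maximizing Σ_{i=1}^n ρ_i·v_i(j), and let u_ρ(v) = Σ_{i=1}^n v_i(ψ_ρ(v)) (the social welfare of the neutral affine maximizer with weights ρ). Then for every v ∈ ℝ^{n×m} there exist k ≤ m² vectors a_1, …, a_k ∈ ℝ^n and a real c_b for each bit vector b ∈ {0,1}^k such that for all ρ ∈ P, u_ρ(v) = c_{b(ρ)}, where b(ρ) = (1{a_1·ρ ≤ 0}, …, 1{a_k·ρ ≤ 0}). (In other words, the dual class of U = {u_ρ : ρ ∈ P} is (F, G, m²)-piecewise decomposable, where G consists of homogeneous halfspace indicators u_ρ ↦ 1{a·ρ ≤ 0} and F consists of constant functions.) -/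
attribute [local instance] Classical.propDecidable

/-- The social choice function of a neutral affine maximizer with weights `ρ`: the smallest
alternative `j` maximizing the weighted welfare `Σᵢ ρᵢ·vᵢ(j)`. -/
noncomputable def psi {n m : ℕ} (hm : 0 < m) (ρ : Fin n → ℝ) (v : Fin n → Fin m → ℝ) :
    Fin m :=
  (Finset.univ.filter fun j : Fin m =>
      ∀ j' : Fin m, (∑ i, ρ i * v i j') ≤ ∑ i, ρ i * v i j).min'
    (by
      obtain ⟨j, -, hj⟩ := Finset.exists_max_image (Finset.univ : Finset (Fin m))
        (fun j => ∑ i, ρ i * v i j) ⟨⟨0, hm⟩, Finset.mem_univ _⟩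
      exact ⟨j, Finset.mem_filter.mpr
        ⟨Finset.mem_univ _, fun j' => hj j' (Finset.mem_univ _)⟩⟩)

/-- for every valuation matrix `v`, there are `k ≤ m²` vectors
`a₁, …, a_k ∈ ℝ^n` and constants `c_b` (one per bit vector `b ∈ {0,1}^k`) such that for
every NAM weight vector `ρ` (nonnegative, with some zero entry), the social welfare
`u_ρ(v) = Σᵢ vᵢ(ψ_ρ(v))` equals `c_{b(ρ)}` where `b(ρ) = (1{a₁·ρ ≤ 0}, …, 1{a_k·ρ ≤ 0})`. -/
theorem stmt_13 (n m : ℕ) (hn : 1 ≤ n) (hm : 1 ≤ m) (v : Fin n → Fin m → ℝ) :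
    ∃ k : ℕ, k ≤ m ^ 2 ∧
      ∃ (a : Fin k → Fin n → ℝ) (c : (Fin k → Bool) → ℝ),
        ∀ ρ : Fin n → ℝ, (∀ i, 0 ≤ ρ i) → (∃ i, ρ i = 0) →
          ∀ b : Fin k → Bool,
            (∀ i, b i = true ↔ ∑ j, a i j * ρ j ≤ 0) →
            (∑ i, v i (psi hm ρ v)) = c b := by
  refine ⟨m * m, by rw [sq], ?_⟩
  set e := finProdFinEquiv (m := m) (n := m) with he
  refine ⟨fun p i => v i (e.symm p).2 - v i (e.symm p).1, ?_⟩
  set S : (Fin (m * m) → Bool) → Finset (Fin m) :=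
    fun b => Finset.univ.filter fun j : Fin m => ∀ j', b (e (j, j')) = true with hS
  refine ⟨fun b => if h : (S b).Nonempty then ∑ i, v i ((S b).min' h) else 0, ?_⟩
  intro ρ _ _ b hb
  have key : ∀ j j' : Fin m,
      b (e (j, j')) = true ↔ (∑ i, ρ i * v i j') ≤ ∑ i, ρ i * v i j := by
    intro j j'
    rw [hb]
    simp only [Equiv.symm_apply_apply]
    rw [show (∑ i, (v i j' - v i j) * ρ i)
        = (∑ i, ρ i * v i j') - ∑ i, ρ i * v i j by
      rw [← Finset.sum_sub_distrib]; congr 1; ext i; ring]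
    rw [sub_nonpos]
  have hSeq : S b = Finset.univ.filter fun j : Fin m =>
      ∀ j' : Fin m, (∑ i, ρ i * v i j') ≤ ∑ i, ρ i * v i j := by
    rw [hS]
    apply Finset.filter_congr
    intro j _
    exact forall_congr' fun j' => key j j'
  have hne : (S b).Nonempty := by
    rw [hSeq]
    obtain ⟨j, -, hj⟩ := Finset.exists_max_image (Finset.univ : Finset (Fin m))
      (fun j => ∑ i, ρ i * v i j) ⟨⟨0, hm⟩, Finset.mem_univ _⟩
    exact ⟨j, Finset.mem_filter.mpr
      ⟨Finset.mem_univ _, fun j' => hj j' (Finset.mem_univ _)⟩⟩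
  simp only [dif_pos hne]
  have hpsi : psi hm ρ v = (S b).min' hne := by
    unfold psi
    congr 1
    exact hSeq.symm
  rw [hpsi]
end

section
/- Fix an even integer n ≥ 2 and m = 2 alternatives. Let P = {ρ ∈ ℝ^n : ρ_i ≥ 0 for all i, and ρ_i = 0 for some i}, and for ρ ∈ P and v ∈ ℝ^{n×2} let ψ_ρ(v) be the smallest j ∈ {1,2} maximizing Σ_{i=1}^n ρ_i·v_i(j) and u_ρ(v) = Σ_{i=1}^n v_i(ψ_ρ(v)). Then the class U = {u_ρ : ρ ∈ P} pseudo-shatters a set of n/2 valuation matrices v^(1), …, v^(n/2) ∈ ℝ^{n×2} with witnesses all equal to 1/2; that is, for every subset T ⊆ [n/2] there exists ρ ∈ P such that u_ρ(v^(ℓ)) ≥ 1/2 if and only if ℓ ∈ T. Consequently, the pseudo-dimension of U is at least n/2. -/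
attribute [local instance] Classical.propDecidable

lemma psi_eq_of {n : ℕ} (ρ : Fin n → ℝ) (v : Fin n → Fin 2 → ℝ) (j : Fin 2)
    (h : ∀ j', j' ≠ j → ∑ i, ρ i * v i j' < ∑ i, ρ i * v i j) :
    psi (by norm_num) ρ v = j := by
  unfold psi
  have hset : (Finset.univ.filter fun j0 : Fin 2 =>
      ∀ j' : Fin 2, (∑ i, ρ i * v i j') ≤ ∑ i, ρ i * v i j0) = {j} := by
    ext j0
    simp only [Finset.mem_filter, Finset.mem_univ, true_and, Finset.mem_singleton]
    constructor
    · intro hj0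
      by_contra hne
      exact absurd (hj0 j) (not_le.mpr (h j0 hne))
    · intro he j'
      rw [he]
      rcases eq_or_ne j' j with rfl | hne
      · exact le_refl _
      · exact (h j' hne).le
  simp only [hset, Finset.min'_singleton]

/-- for even `n ≥ 2` and `m = 2` alternatives, the class of NAM social
welfare functions `U = {u_ρ}` pseudo-shatters a set of `n/2` (distinct) valuation
matrices with all witnesses equal to `1/2`: for every subset `T ⊆ [n/2]` there is a
weight vector `ρ` (nonnegative with a zero entry) such that `u_ρ(v^(ℓ)) ≥ 1/2` iff
`ℓ ∈ T`.  Consequently `pdim(U) ≥ n/2`. -/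
theorem stmt_14 (n : ℕ) (hn : 2 ≤ n) (hev : Even n) :
    ∃ vs : Fin (n / 2) → Fin n → Fin 2 → ℝ,
      Function.Injective vs ∧
      ∀ T : Finset (Fin (n / 2)),
        ∃ ρ : Fin n → ℝ, (∀ i, 0 ≤ ρ i) ∧ (∃ i, ρ i = 0) ∧
          ∀ ℓ : Fin (n / 2),
            ((1 : ℝ) / 2 ≤ ∑ i, vs ℓ i (psi (by norm_num) ρ (vs ℓ)) ↔ ℓ ∈ T) := by
  have h2n : 2 ∣ n := hev.two_dvd
  set vs : Fin (n / 2) → Fin n → Fin 2 → ℝ := fun ℓ i j =>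
    if i.val = 2 * ℓ.val ∧ j = 0 then 1
    else if i.val = 2 * ℓ.val + 1 ∧ j = 1 then 1/4 else 0 with hvs
  have ha : ∀ ℓ : Fin (n / 2), 2 * ℓ.val < n := by
    intro ℓ; have := ℓ.isLt; omega
  have hb : ∀ ℓ : Fin (n / 2), 2 * ℓ.val + 1 < n := by
    intro ℓ; have := ℓ.isLt; omega
  -- values of vs at the two columns
  have hv0 : ∀ (ℓ : Fin (n/2)) (i : Fin n),
      vs ℓ i 0 = if i.val = 2 * ℓ.val then 1 else 0 := by
    intro ℓ i
    simp only [hvs]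
    split_ifs with h1 h2 h3 h4 <;> simp_all <;> omega
  have hv1 : ∀ (ℓ : Fin (n/2)) (i : Fin n),
      vs ℓ i 1 = if i.val = 2 * ℓ.val + 1 then 1/4 else 0 := by
    intro ℓ i
    simp only [hvs]
    split_ifs with h1 h2 h3 h4 <;> simp_all <;> omega
  refine ⟨vs, ?_, ?_⟩
  · intro ℓ ℓ' h
    by_contra hne
    have hval : ℓ.val ≠ ℓ'.val := fun he => hne (Fin.ext he)
    have h0 := congrFun (congrFun h ⟨2 * ℓ.val, ha ℓ⟩) 0
    rw [hv0, hv0, if_pos rfl, if_neg (by intro hcon; simp only [Fin.val_mk] at hcon; exact hval (by omega))] at h0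
    norm_num at h0
  · intro T
    set ρ : Fin n → ℝ := fun i =>
      if (⟨i.val / 2, by have := i.isLt; omega⟩ : Fin (n/2)) ∈ T
      then (if i.val % 2 = 0 then 1 else 0)
      else (if i.val % 2 = 0 then 0 else 1) with hρ
    have hρa : ∀ ℓ : Fin (n/2), ρ ⟨2 * ℓ.val, ha ℓ⟩ = if ℓ ∈ T then 1 else 0 := by
      intro ℓ
      simp only [hρ]
      have e1 : (⟨2 * ℓ.val / 2, by have := ha ℓ; omega⟩ : Fin (n/2)) = ℓ := by
        exact Fin.ext (by simp only [Fin.val_mk]; try omega)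
      rw [e1]
      have e2 : 2 * ℓ.val % 2 = 0 := by omega
      simp [e2]
    have hρb : ∀ ℓ : Fin (n/2), ρ ⟨2 * ℓ.val + 1, hb ℓ⟩ = if ℓ ∈ T then 0 else 1 := by
      intro ℓ
      simp only [hρ]
      have e1 : (⟨(2 * ℓ.val + 1) / 2, by have := hb ℓ; omega⟩ : Fin (n/2)) = ℓ := by
        exact Fin.ext (by simp only [Fin.val_mk]; try omega)
      rw [e1]
      have e2 : (2 * ℓ.val + 1) % 2 ≠ 0 := by omega
      simp [e2]
    -- weighted sums
    have hw0 : ∀ ℓ : Fin (n/2), ∑ i, ρ i * vs ℓ i 0 = if ℓ ∈ T then 1 else 0 := by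
      intro ℓ
      rw [← hρa ℓ]
      rw [Finset.sum_eq_single (⟨2 * ℓ.val, ha ℓ⟩ : Fin n)]
      · rw [hv0]; simp
      · intro i _ hi
        rw [hv0]
        rw [if_neg (by intro hcon; exact hi (Fin.ext hcon))]
        ring
      · intro hcon; exact absurd (Finset.mem_univ _) hcon
    have hw1 : ∀ ℓ : Fin (n/2), ∑ i, ρ i * vs ℓ i 1
        = (if ℓ ∈ T then 0 else 1) * (1/4) := by
      intro ℓ
      rw [← hρb ℓ]
      rw [Finset.sum_eq_single (⟨2 * ℓ.val + 1, hb ℓ⟩ : Fin n)]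
      · rw [hv1]; simp
      · intro i _ hi
        rw [hv1]
        rw [if_neg (by intro hcon; exact hi (Fin.ext hcon))]
        ring
      · intro hcon; exact absurd (Finset.mem_univ _) hcon
    -- social welfare sums
    have hs0 : ∀ ℓ : Fin (n/2), ∑ i, vs ℓ i 0 = 1 := by
      intro ℓ
      rw [Finset.sum_eq_single (⟨2 * ℓ.val, ha ℓ⟩ : Fin n)]
      · rw [hv0]; simp
      · intro i _ hi
        rw [hv0, if_neg (by intro hcon; exact hi (Fin.ext hcon))]
      · intro hcon; exact absurd (Finset.mem_univ _) hcon
    have hs1 : ∀ ℓ : Fin (n/2), ∑ i, vs ℓ i 1 = 1/4 := by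
      intro ℓ
      rw [Finset.sum_eq_single (⟨2 * ℓ.val + 1, hb ℓ⟩ : Fin n)]
      · rw [hv1]; simp
      · intro i _ hi
        rw [hv1, if_neg (by intro hcon; exact hi (Fin.ext hcon))]
      · intro hcon; exact absurd (Finset.mem_univ _) hcon
    refine ⟨ρ, ?_, ?_, ?_⟩
    · intro i; simp only [hρ]; split_ifs <;> norm_num
    · by_cases h0 : (⟨0, by omega⟩ : Fin (n/2)) ∈ T
      · refine ⟨⟨1, by omega⟩, ?_⟩
        simp only [hρ]
        have e1 : (⟨(1:ℕ) / 2, by omega⟩ : Fin (n/2)) = ⟨0, by omega⟩ := by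
          exact Fin.ext (by simp only [Fin.val_mk]; try omega)
        rw [e1, if_pos h0]
        norm_num
      · refine ⟨⟨0, by omega⟩, ?_⟩
        simp only [hρ]
        have e1 : (⟨(0:ℕ) / 2, by omega⟩ : Fin (n/2)) = ⟨0, by omega⟩ := by
          exact Fin.ext (by simp only [Fin.val_mk]; try omega)
        rw [e1, if_neg h0]
        norm_num
    · intro ℓ
      by_cases hT : ℓ ∈ T
      · have hpsi : psi (by norm_num) ρ (vs ℓ) = 0 := by
          apply psi_eq_of
          intro j' hj'
          have : j' = 1 := by
            fin_cases j' <;> simp_all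
          rw [this, hw0 ℓ, hw1 ℓ, if_pos hT, if_pos hT]
          norm_num
        rw [hpsi, hs0 ℓ]
        simp [hT]
        norm_num
      · have hpsi : psi (by norm_num) ρ (vs ℓ) = 1 := by
          apply psi_eq_of
          intro j' hj'
          have : j' = 0 := by
            fin_cases j' <;> simp_all
          rw [this, hw0 ℓ, hw1 ℓ, if_neg hT, if_neg hT]
          norm_num
        rw [hpsi, hs1 ℓ]
        simp [hT]
        norm_num
end

section
/- Fix n ≥ 2. For v ∈ [0,∞)^n let v_(1) and v_(2) denote the largest and second-largest entries of v, respectively. For each ρ ≥ 0 define the revenue function u_ρ : [0,∞)^n → ℝ of the anonymous second-price auction with reserve ρ by u_ρ(v) = max(v_(2), ρ) if v_(1) ≥ ρ, and u_ρ(v) = 0 otherwise. Then the class U = {u_ρ : ρ ≥ 0} has pseudo-dimension at most 2. -/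
attribute [local instance] Classical.propDecidable

/-- The largest entry `v_(1)` of `v ∈ ℝ^n` (`n ≥ 2`). -/
noncomputable def top1 (n : ℕ) (hn : 2 ≤ n) (v : Fin n → ℝ) : ℝ :=
  Finset.univ.sup' ⟨⟨0, by omega⟩, Finset.mem_univ _⟩ v

/-- The second-largest entry `v_(2)` of `v ∈ ℝ^n` (with multiplicity):
`v_(2) = max_{i ≠ j} min(vᵢ, v_j)`. -/
noncomputable def top2 (n : ℕ) (hn : 2 ≤ n) (v : Fin n → ℝ) : ℝ :=
  (Finset.univ.filter fun p : Fin n × Fin n => p.1 ≠ p.2).sup'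
    ⟨(⟨0, by omega⟩, ⟨1, by omega⟩),
      Finset.mem_filter.mpr ⟨Finset.mem_univ _, by simp [Fin.ext_iff]⟩⟩
    fun p => min (v p.1) (v p.2)

/-- Revenue of the anonymous second-price auction with reserve `ρ`:
`max(v_(2), ρ)` if `v_(1) ≥ ρ`, and `0` otherwise. -/
noncomputable def uSPA (n : ℕ) (hn : 2 ≤ n) (ρ : ℝ) (v : Fin n → ℝ) : ℝ :=
  if ρ ≤ top1 n hn v then max (top2 n hn v) ρ else 0

/-!
For fixed `v` and threshold `z`, the reserves `ρ` with `z ≤ u_ρ(v)` form an interval, since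
`ρ ↦ u_ρ(v)` is monotone up to `v_(1)` and vanishes beyond it. Intervals cannot realise all sign
patterns on three points: if `ρ₀` realises the all-true pattern and `ρ_v` the pattern that is false
only at `v`, two of the three `ρ_v` lie on the same side of `ρ₀`, and the one nearer to `ρ₀` lies
between `ρ₀` and the other, hence in the interval it must avoid.
-/

section OrdConnected

variable {α : Type*} [LinearOrder α]

theorem Set.OrdConnected.mem_Ioo_of_mem_diff {S T : Set α} (hS : S.OrdConnected)
    (hT : T.OrdConnected) {x y x₀ : α} (h₀S : x₀ ∈ S) (h₀T : x₀ ∈ T)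
    (hx : x ∈ T \ S) (hy : y ∈ S \ T) : x₀ ∈ Set.Ioo (min x y) (max x y) := by
  constructor
  · by_contra! h
    rcases le_total x y with hxy | hxy
    · exact hx.2 (hS.out h₀S hy.1 ⟨h.trans (min_le_left x y), hxy⟩)
    · exact hy.2 (hT.out h₀T hx.1 ⟨h.trans (min_le_right x y), hxy⟩)
  · by_contra! h
    rcases le_total x y with hxy | hxy
    · exact hy.2 (hT.out hx.1 h₀T ⟨hxy, (le_max_right x y).trans h⟩)
    · exact hx.2 (hS.out hy.1 h₀S ⟨hxy, (le_max_left x y).trans h⟩)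

theorem card_le_two_of_ordConnected_of_forall_pattern {ι : Type*} (S : ι → Set α)
    (hS : ∀ i, (S i).OrdConnected) (s : Finset ι)
    (h : ∀ b : ι → Bool, ∃ x, ∀ i ∈ s, x ∈ S i ↔ b i = true) : s.card ≤ 2 := by
  classical
  by_contra! hcard
  obtain ⟨x₀, h₀⟩ := h fun _ => true
  choose x hx using fun j => h fun i => decide (i ≠ j)
  obtain ⟨i, hi, j, hj, hij, hside⟩ :=
    Finset.exists_ne_map_eq_of_card_lt_of_maps_to (t := Finset.univ)
      (f := fun k => decide (x k ≤ x₀)) (by simpa using hcard) fun _ _ => Finset.mem_univ _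
  have hxi : x i ∈ S j \ S i := by
    simpa [hij, Ne.symm hij] using And.intro (hx i j hj) (hx i i hi)
  have hxj : x j ∈ S i \ S j := by
    simpa [hij, Ne.symm hij] using And.intro (hx j i hi) (hx j j hj)
  have hmid := (hS i).mem_Ioo_of_mem_diff (hS j) ((h₀ i hi).2 rfl) ((h₀ j hj).2 rfl) hxi hxj
  by_cases hle : x i ≤ x₀
  · have : x j ≤ x₀ := by simpa [hle] using hside.symm
    exact hmid.2.not_ge (max_le hle this)
  · have : ¬ x j ≤ x₀ := by simpa [hle] using hside.symm
    exact hmid.1.not_ge (le_min (not_le.1 hle).le (not_le.1 this).le)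

end OrdConnected

section SecondPriceAuction

variable {n : ℕ} {hn : 2 ≤ n} {v : Fin n → ℝ}

theorem uSPA_mono_of_le_top1 {ρ₁ ρ₂ : ℝ} (h12 : ρ₁ ≤ ρ₂) (h2 : ρ₂ ≤ top1 n hn v) :
    uSPA n hn ρ₁ v ≤ uSPA n hn ρ₂ v := by
  rw [uSPA, uSPA, if_pos (h12.trans h2), if_pos h2]
  exact max_le_max le_rfl h12

theorem uSPA_of_top1_lt {ρ : ℝ} (h : top1 n hn v < ρ) : uSPA n hn ρ v = 0 :=
  if_neg (not_le.2 h)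

theorem ordConnected_setOf_le_uSPA (z : ℝ) : {ρ | z ≤ uSPA n hn ρ v}.OrdConnected := by
  refine ⟨fun ρ₁ h₁ ρ₃ h₃ ρ₂ ⟨h12, h23⟩ => ?_⟩
  by_cases h2 : ρ₂ ≤ top1 n hn v
  · exact le_trans h₁ (uSPA_mono_of_le_top1 h12 h2)
  · have h2' := not_le.1 h2
    change z ≤ uSPA n hn ρ₃ v at h₃
    rw [uSPA_of_top1_lt (h2'.trans_le h23)] at h₃
    show z ≤ uSPA n hn ρ₂ v
    rwa [uSPA_of_top1_lt h2']

end SecondPriceAuction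

theorem stmt_15_general (n : ℕ) (hn : 2 ≤ n)
    (s : Finset (Fin n → ℝ))
    (hshatter : ∃ z : (Fin n → ℝ) → ℝ, ∀ b : (Fin n → ℝ) → Bool,
      ∃ ρ : ℝ, 0 ≤ ρ ∧ ∀ v ∈ s, (z v ≤ uSPA n hn ρ v ↔ b v = true)) :
    s.card ≤ 2 := by
  obtain ⟨z, hz⟩ := hshatter
  refine card_le_two_of_ordConnected_of_forall_pattern (fun v => {ρ | z v ≤ uSPA n hn ρ v})
    (fun v => ordConnected_setOf_le_uSPA (z v)) s fun b => ?_
  obtain ⟨ρ, -, hρ⟩ := hz b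
  exact ⟨ρ, hρ⟩

/-- the class `U = {u_ρ : ρ ≥ 0}` of anonymous second-price-auction revenue
functions on `[0,∞)^n` has pseudo-dimension at most 2: every pseudo-shattered finite set
of nonnegative valuation vectors has size at most 2. -/
theorem stmt_15 (n : ℕ) (hn : 2 ≤ n)
    (s : Finset (Fin n → ℝ)) (hs : ∀ v ∈ s, ∀ i, 0 ≤ v i)
    (hshatter : ∃ z : (Fin n → ℝ) → ℝ, ∀ b : (Fin n → ℝ) → Bool,
      ∃ ρ : ℝ, 0 ≤ ρ ∧ ∀ v ∈ s, (z v ≤ uSPA n hn ρ v ↔ b v = true)) :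
    s.card ≤ 2 :=
  stmt_15_general n hn s hshatter
end

section
/- Let X be a set, and for each ρ ∈ ℝ let u_ρ : X → ℝ; put U = {u_ρ : ρ ∈ ℝ}. Let k ≥ 1 and suppose that for every instance x ∈ X the function ρ ↦ u_ρ(x) is piecewise constant with at most k discontinuities. Then every set of instances pseudo-shattered by U has size N satisfying 2^N ≤ k·N + 1; in particular pdim(U) = O(ln k). -/
open Finset

/-- Covering lemma: if `f : ℝ → α → Bool` is, in each coordinate `a`, constant on
intervals avoiding a finite breakpoint set `Dx a ⊆ D`, then the range of `f` is covered
by a finset of size at most `(∑ a, (Dx a).card) + 1`. -/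
lemma aux_cover {α : Type*} [Fintype α] [DecidableEq α] (D : Finset ℝ) :
    ∀ (f : ℝ → α → Bool) (Dx : α → Finset ℝ), (∀ a, Dx a ⊆ D) →
    (∀ (a : α) (ρ₁ ρ₂ : ℝ), ρ₁ ≤ ρ₂ → (∀ e ∈ Dx a, ¬(ρ₁ ≤ e ∧ e ≤ ρ₂)) → f ρ₁ a = f ρ₂ a) →
    ∃ T : Finset (α → Bool), (∀ ρ, f ρ ∈ T) ∧ T.card ≤ (∑ a, (Dx a).card) + 1 := by
  classical
  induction D using Finset.strongInduction with
  | _ D ih =>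
    intro f Dx hsub hpw
    rcases D.eq_empty_or_nonempty with hD | hD
    · refine ⟨{f 0}, ?_, by simp⟩
      intro ρ
      have hno : ∀ a, ∀ e ∈ Dx a, False := by
        intro a e he
        have := hsub a he
        simp [hD] at this
      have : f ρ = f 0 := by
        funext a
        rcases le_total ρ 0 with h | h
        · exact hpw a ρ 0 h (fun e he _ => hno a e he)
        · exact (hpw a 0 ρ h (fun e he _ => hno a e he)).symm
      simp [this]
    · have hdmem : D.max' hD ∈ D := D.max'_mem hD
      set d := D.max' hD with hddef
      set D' := D.erase d with hD'def
      have hssub : D' ⊂ D := Finset.erase_ssubset hdmem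
      have hle : ∀ e ∈ D, e ≤ d := fun e he => D.le_max' e he
      have hex : ∃ ρ₀ : ℝ, ρ₀ < d ∧ ∀ e ∈ D', e < ρ₀ := by
        by_cases h : D'.Nonempty
        · have hmax' : D'.max' h < d := by
            have h2 := Finset.mem_erase.mp (D'.max'_mem h)
            exact lt_of_le_of_ne (hle _ h2.2) h2.1
          refine ⟨(D'.max' h + d)/2, by linarith, ?_⟩
          intro e he
          have h1 : e ≤ D'.max' h := D'.le_max' e he
          linarith
        · exact ⟨d - 1, by linarith, fun e he => absurd ⟨e, he⟩ h⟩
      obtain ⟨ρ₀, hρ₀, hlt⟩ := hex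
      set Dx' : α → Finset ℝ := fun a => (Dx a).erase d with hDx'
      set f' : ℝ → α → Bool := fun ρ => if ρ < d then f ρ else f ρ₀ with hf'
      have hsub' : ∀ a, Dx' a ⊆ D' := fun a => Finset.erase_subset_erase d (hsub a)
      -- elements of Dx a other than d lie strictly below ρ₀
      have hbelow : ∀ a, ∀ e ∈ Dx a, e ≠ d → e < ρ₀ := by
        intro a e he hed
        exact hlt e (Finset.mem_erase.mpr ⟨hed, hsub a he⟩)
      have hpw' : ∀ (a : α) (ρ₁ ρ₂ : ℝ), ρ₁ ≤ ρ₂ →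
          (∀ e ∈ Dx' a, ¬(ρ₁ ≤ e ∧ e ≤ ρ₂)) → f' ρ₁ a = f' ρ₂ a := by
        intro a ρ₁ ρ₂ h12 havoid
        by_cases h1 : ρ₁ < d
        · by_cases h2 : ρ₂ < d
          · simp only [hf', if_pos h1, if_pos h2]
            apply hpw a ρ₁ ρ₂ h12
            rintro e he ⟨he1, he2⟩
            have hed : e ≠ d := by rintro rfl; linarith
            exact havoid e (Finset.mem_erase.mpr ⟨hed, he⟩) ⟨he1, he2⟩
          · push_neg at h2
            simp only [hf', if_pos h1, if_neg (not_lt.mpr h2)]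
            rcases le_total ρ₁ ρ₀ with hc | hc
            · apply hpw a ρ₁ ρ₀ hc
              rintro e he ⟨he1, he2⟩
              have hed : e ≠ d := by rintro rfl; linarith
              exact havoid e (Finset.mem_erase.mpr ⟨hed, he⟩) ⟨he1, by linarith⟩
            · symm
              apply hpw a ρ₀ ρ₁ hc
              rintro e he ⟨he1, he2⟩
              have hed : e ≠ d := by rintro rfl; linarith
              have := hbelow a e he hed
              linarith
        · push_neg at h1
          have h2 : ¬ ρ₂ < d := not_lt.mpr (le_trans h1 h12)
          simp only [hf', if_neg (not_lt.mpr h1), if_neg h2]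
      obtain ⟨T', hT', hcard'⟩ := ih D' hssub f' Dx' hsub' hpw'
      have hfρ₀ : f' ρ₀ = f ρ₀ := by simp [hf', if_pos hρ₀]
      have hρ₀T : f ρ₀ ∈ T' := hfρ₀ ▸ hT' ρ₀
      -- coordinates not owning d are constant from ρ₀ onwards
      have h2 : ∀ a, d ∉ Dx a → ∀ r, ρ₀ ≤ r → f ρ₀ a = f r a := by
        intro a hda r hr
        apply hpw a ρ₀ r hr
        rintro e he ⟨he1, he2⟩
        have hed : e ≠ d := fun h => hda (h ▸ he)
        have := hbelow a e he hed
        linarith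
      -- everything strictly right of d is constant
      have h3 : ∀ ρ, d < ρ → f ρ = f (d + 1) := by
        intro ρ hρ; funext a
        have hnb : ∀ (r₁ r₂ : ℝ), d < r₁ → (∀ e ∈ Dx a, ¬(r₁ ≤ e ∧ e ≤ r₂)) := by
          rintro r₁ r₂ hr e he ⟨he1, he2⟩
          have := hle e (hsub a he)
          linarith
        rcases le_total ρ (d+1) with h | h
        · exact hpw a ρ (d+1) h (hnb ρ (d+1) hρ)
        · exact (hpw a (d+1) ρ h (hnb (d+1) ρ (by linarith))).symm
      -- sum accounting
      have hsum : ∀ a, (Dx' a).card + (if d ∈ Dx a then 1 else 0) = (Dx a).card := by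
        intro a
        by_cases h : d ∈ Dx a
        · simp only [if_pos h, hDx', Finset.card_erase_of_mem h]
          exact Nat.sub_add_cancel (Finset.card_pos.mpr ⟨d, h⟩)
        · simp [if_neg h, hDx', Finset.erase_eq_of_notMem h]
      have hsumtot : (∑ a, (Dx' a).card) + (∑ a : α, if d ∈ Dx a then 1 else 0)
          = ∑ a, (Dx a).card := by
        rw [← Finset.sum_add_distrib]
        exact Finset.sum_congr rfl (fun a _ => hsum a)
      by_cases h0 : ∀ a, d ∉ Dx a
      · -- no coordinate owns d : nothing new
        refine ⟨T', ?_, by omega⟩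
        intro ρ
        by_cases hρ : ρ < d
        · have : f' ρ = f ρ := by simp [hf', if_pos hρ]
          exact this ▸ hT' ρ
        · push_neg at hρ
          have : f ρ = f ρ₀ := by
            funext a
            exact (h2 a (h0 a) ρ (by linarith)).symm
          exact this ▸ hρ₀T
      · push_neg at h0
        obtain ⟨a₀, ha₀⟩ := h0
        have hone : 1 ≤ ∑ a : α, if d ∈ Dx a then 1 else 0 := by
          calc 1 = if d ∈ Dx a₀ then 1 else 0 := by rw [if_pos ha₀]
          _ ≤ ∑ a : α, if d ∈ Dx a then 1 else 0 :=
              Finset.single_le_sum (f := fun a => if d ∈ Dx a then 1 else 0) (fun a _ => Nat.zero_le _) (Finset.mem_univ a₀)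
        by_cases huniq : ∀ a, d ∈ Dx a → a = a₀
        · -- exactly one coordinate owns d
          set g : α → Bool := Function.update (f ρ₀) a₀ (!(f ρ₀ a₀)) with hg
          have hmem : ∀ ρ, d ≤ ρ → f ρ = f ρ₀ ∨ f ρ = g := by
            intro ρ hρ
            have hoff : ∀ a, a ≠ a₀ → f ρ a = f ρ₀ a := by
              intro a ha
              have hda : d ∉ Dx a := fun hmem => ha (huniq a hmem)
              exact (h2 a hda ρ (by linarith)).symm
            by_cases hb : f ρ a₀ = f ρ₀ a₀
            · left; funext a
              by_cases ha : a = a₀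
              · subst ha; exact hb
              · exact hoff a ha
            · right; funext a
              by_cases ha : a = a₀
              · subst ha
                simp only [hg, Function.update_self]
                exact Bool.eq_not_iff.mpr hb
              · simp only [hg, Function.update_of_ne ha]
                exact hoff a ha
          refine ⟨insert g T', ?_, ?_⟩
          · intro ρ
            by_cases hρ : ρ < d
            · have : f' ρ = f ρ := by simp [hf', if_pos hρ]
              exact Finset.mem_insert_of_mem (this ▸ hT' ρ)
            · push_neg at hρ
              rcases hmem ρ hρ with h | h
              · exact Finset.mem_insert_of_mem (h ▸ hρ₀T)
              · rw [h]; exact Finset.mem_insert_self g T'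
          · have := Finset.card_insert_le g T'
            omega
        · -- at least two coordinates own d
          push_neg at huniq
          obtain ⟨a₁, ha₁, hne⟩ := huniq
          have htwo : 2 ≤ ∑ a : α, if d ∈ Dx a then 1 else 0 := by
            have hsub2 : ({a₀, a₁} : Finset α) ⊆ Finset.univ := Finset.subset_univ _
            calc (2 : ℕ) = ∑ a ∈ ({a₀, a₁} : Finset α), if d ∈ Dx a then 1 else 0 := by
                  rw [Finset.sum_pair (Ne.symm hne), if_pos ha₀, if_pos ha₁]
            _ ≤ ∑ a : α, if d ∈ Dx a then 1 else 0 :=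
                  Finset.sum_le_sum_of_subset_of_nonneg hsub2 (fun a _ _ => Nat.zero_le _)
          refine ⟨insert (f d) (insert (f (d+1)) T'), ?_, ?_⟩
          · intro ρ
            rcases lt_trichotomy ρ d with hρ | hρ | hρ
            · have : f' ρ = f ρ := by simp [hf', if_pos hρ]
              exact Finset.mem_insert_of_mem (Finset.mem_insert_of_mem (this ▸ hT' ρ))
            · subst hρ; exact Finset.mem_insert_self _ _
            · rw [h3 ρ hρ]
              exact Finset.mem_insert_of_mem (Finset.mem_insert_self _ _)
          · have hc1 := Finset.card_insert_le (f d) (insert (f (d+1)) T')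
            have hc2 := Finset.card_insert_le (f (d+1)) T'
            omega

/-- if each dual function `ρ ↦ u_ρ(x)` is piecewise constant with at most
`k` discontinuities (constant on every connected component of `ℝ ∖ D` for some finite `D`
with `|D| ≤ k`), then every finite set of instances pseudo-shattered by `U = {u_ρ}` has
size `N` satisfying `2^N ≤ k·N + 1`. -/
theorem stmt_17 {X : Type*} (u : ℝ → X → ℝ) (k : ℕ) (hk : 1 ≤ k)
    (hpc : ∀ x : X, ∃ D : Finset ℝ, D.card ≤ k ∧
      ∀ ρ₁ ρ₂ : ℝ, ρ₁ ≤ ρ₂ → (∀ d ∈ D, ¬ (ρ₁ ≤ d ∧ d ≤ ρ₂)) → u ρ₁ x = u ρ₂ x)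
    (s : Finset X)
    (hshatter : ∃ z : X → ℝ, ∀ b : X → Bool, ∃ ρ : ℝ,
      ∀ x ∈ s, (z x ≤ u ρ x ↔ b x = true)) :
    2 ^ s.card ≤ k * s.card + 1 := by
  classical
  obtain ⟨z, hz⟩ := hshatter
  set f : ℝ → ↥s → Bool := fun ρ x => decide (z x.1 ≤ u ρ x.1) with hf
  choose Dc hDcard hDc using hpc
  set Dx : ↥s → Finset ℝ := fun x => Dc x.1 with hDx
  set D : Finset ℝ := Finset.univ.biUnion Dx with hD
  have hsub : ∀ x : ↥s, Dx x ⊆ D :=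
    fun x => Finset.subset_biUnion_of_mem Dx (Finset.mem_univ x)
  have hpw : ∀ (x : ↥s) (ρ₁ ρ₂ : ℝ), ρ₁ ≤ ρ₂ →
      (∀ e ∈ Dx x, ¬(ρ₁ ≤ e ∧ e ≤ ρ₂)) → f ρ₁ x = f ρ₂ x := by
    intro x ρ₁ ρ₂ h12 hav
    have := hDc x.1 ρ₁ ρ₂ h12 hav
    simp [hf, this]
  obtain ⟨T, hT, hTcard⟩ := aux_cover D f Dx hsub hpw
  have hall : ∀ b : ↥s → Bool, b ∈ T := by
    intro b
    obtain ⟨ρ, hρ⟩ := hz (fun x => if h : x ∈ s then b ⟨x, h⟩ else false)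
    have hfb : f ρ = b := by
      funext x
      have hx := hρ x.1 x.2
      simp only [dif_pos x.2] at hx
      simp only [hf]
      cases hb : b x
      · simp only [hb, Bool.false_eq_true, iff_false] at hx
        simp [hx]
      · simp only [hb, iff_true] at hx
        simp [hx]
    exact hfb ▸ hT ρ
  have hcard1 : 2 ^ s.card ≤ T.card := by
    have h : (Finset.univ : Finset (↥s → Bool)).card ≤ T.card :=
      Finset.card_le_card (fun b _ => hall b)
    simpa [Finset.card_univ, Fintype.card_fun, Fintype.card_coe] using h
  have hcard2 : (∑ x : ↥s, (Dx x).card) ≤ k * s.card := by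
    calc ∑ x : ↥s, (Dx x).card ≤ ∑ _x : ↥s, k :=
          Finset.sum_le_sum (fun x _ => hDcard x.1)
    _ = s.card * k := by
          simp [Finset.sum_const, Finset.card_univ, Fintype.card_coe, Nat.smul_one_eq_cast]
    _ = k * s.card := Nat.mul_comm _ _
  omega
end

section
/- Fix n ≥ 2. Let X be any set of problem instances and suppose that for each x ∈ X there is a real-valued function s_x on the set of pseudoknot-free foldings of length n, and for each ρ ∈ [0,1] a value u_ρ(x) ∈ ℝ, with the property that ρ ↦ u_ρ(x) is constant on every subset of [0,1] on which the set of maximizers argmax_φ (ρ·|φ| + (1 − ρ)·s_x(φ)) is constant. Then every set of instances pseudo-shattered by U = {u_ρ : ρ ∈ [0,1]} has size N satisfying 2^N ≤ n²·N + 1; in particular pdim(U) = O(ln n). -/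
section Maximizers

variable {ι : Type*} (w : ι → ℕ) (f : ι → ℝ)

def maximizers (ρ : ℝ) : Set ι :=
  {i | ∀ j, ρ * w j + (1 - ρ) * f j ≤ ρ * w i + (1 - ρ) * f i}

def maximizerWeights (ρ : ℝ) : Set ℕ := w '' maximizers w f ρ

noncomputable def maximizerRank (ρ : ℝ) : ℕ :=
  sInf (maximizerWeights w f ρ) + sSup (maximizerWeights w f ρ)

variable {w f}

theorem weight_le_weight_of_mem_maximizers {ρ₁ ρ₂ : ℝ} (h12 : ρ₁ < ρ₂) (h2 : ρ₂ ≤ 1) {i j : ι}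
    (hi : i ∈ maximizers w f ρ₁) (hj : j ∈ maximizers w f ρ₂) : w i ≤ w j := by
  by_contra! hlt
  have hw : (w j : ℝ) < w i := by exact_mod_cast hlt
  have e1 := hi j
  have e2 := hj i
  -- The two optimality conditions force `f j - f i ≤ w j - w i < 0`, and then `ρ₂ ≤ 1`
  -- makes `i` strictly better than `j` at `ρ₂`.
  have hf : f j - f i ≤ w j - w i := by nlinarith
  nlinarith [mul_nonneg (sub_nonneg.2 h2) (sub_nonneg.2 hf)]

variable [Finite ι]

theorem bddAbove_maximizerWeights (ρ : ℝ) : BddAbove (maximizerWeights w f ρ) :=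
  ((Set.toFinite (maximizers w f ρ)).image w).bddAbove

theorem weight_eq_of_sInf_eq_sSup {ρ : ℝ} {k : ℕ} (hinf : sInf (maximizerWeights w f ρ) = k)
    (hsup : sSup (maximizerWeights w f ρ) = k) {i : ι} (hi : i ∈ maximizers w f ρ) : w i = k :=
  le_antisymm (hsup ▸ le_csSup (bddAbove_maximizerWeights ρ) ⟨i, hi, rfl⟩)
    (hinf ▸ Nat.sInf_le ⟨i, hi, rfl⟩)

variable [Nonempty ι]

theorem maximizers_nonempty (ρ : ℝ) : (maximizers w f ρ).Nonempty :=
  Finite.exists_max (fun i => ρ * w i + (1 - ρ) * f i)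

theorem maximizerWeights_nonempty (ρ : ℝ) : (maximizerWeights w f ρ).Nonempty :=
  (maximizers_nonempty ρ).image w

theorem sInf_maximizerWeights_le_sSup (ρ : ℝ) :
    sInf (maximizerWeights w f ρ) ≤ sSup (maximizerWeights w f ρ) :=
  csInf_le_csSup (maximizerWeights_nonempty ρ) (OrderBot.bddBelow _) (bddAbove_maximizerWeights ρ)

theorem sSup_maximizerWeights_le_sInf {ρ₁ ρ₂ : ℝ} (h12 : ρ₁ < ρ₂) (h2 : ρ₂ ≤ 1) :
    sSup (maximizerWeights w f ρ₁) ≤ sInf (maximizerWeights w f ρ₂) := by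
  refine csSup_le (maximizerWeights_nonempty ρ₁) fun _ ⟨i, hi, hwi⟩ => ?_
  refine le_csInf (maximizerWeights_nonempty ρ₂) fun _ ⟨j, hj, hwj⟩ => ?_
  exact hwi ▸ hwj ▸ weight_le_weight_of_mem_maximizers h12 h2 hi hj

theorem maximizers_subset_of_weight_eq {ρ₁ ρ₂ : ℝ} (h1 : ρ₁ < 1) (h2 : ρ₂ ≤ 1) {k : ℕ}
    (hk₁ : ∀ i ∈ maximizers w f ρ₁, w i = k) (hk₂ : ∀ i ∈ maximizers w f ρ₂, w i = k) :
    maximizers w f ρ₁ ⊆ maximizers w f ρ₂ := by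
  intro i hi j
  obtain ⟨m, hm⟩ := maximizers_nonempty (w := w) (f := f) ρ₂
  have hwi : (w i : ℝ) = k := by exact_mod_cast hk₁ i hi
  have hwm : (w m : ℝ) = k := by exact_mod_cast hk₂ m hm
  have hfm : f m ≤ f i := by nlinarith [hi m]
  nlinarith [hm j, mul_nonneg (sub_nonneg.2 h2) (sub_nonneg.2 hfm)]

theorem maximizerRank_le {m : ℕ} (hm : ∀ i, w i ≤ m) (ρ : ℝ) :
    maximizerRank w f ρ ≤ 2 * m := by
  obtain ⟨i, -, hi⟩ := Nat.sSup_mem (maximizerWeights_nonempty (w := w) (f := f) ρ)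
    (bddAbove_maximizerWeights ρ)
  have := sInf_maximizerWeights_le_sSup (w := w) (f := f) ρ
  have := hm i
  unfold maximizerRank
  omega

theorem monotoneOn_maximizerRank : MonotoneOn (maximizerRank w f) (Set.Iic 1) := by
  intro ρ₁ _ ρ₂ h2 h12
  rcases h12.eq_or_lt with rfl | hlt
  · rfl
  have := sSup_maximizerWeights_le_sInf (w := w) (f := f) hlt h2
  have := sInf_maximizerWeights_le_sSup (w := w) (f := f) ρ₁
  have := sInf_maximizerWeights_le_sSup (w := w) (f := f) ρ₂
  unfold maximizerRank
  omega

theorem maximizerRank_lt_of_maximizers_ne {ρ₁ ρ₂ : ℝ} (h12 : ρ₁ < ρ₂) (h2 : ρ₂ < 1)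
    (hne : maximizers w f ρ₁ ≠ maximizers w f ρ₂) :
    maximizerRank w f ρ₁ < maximizerRank w f ρ₂ := by
  by_contra! hle
  have hmid := sSup_maximizerWeights_le_sInf (w := w) (f := f) h12 h2.le
  have h₁ := sInf_maximizerWeights_le_sSup (w := w) (f := f) ρ₁
  have h₂ := sInf_maximizerWeights_le_sSup (w := w) (f := f) ρ₂
  unfold maximizerRank at hle
  have hk₁ : ∀ i ∈ maximizers w f ρ₁, w i = sInf (maximizerWeights w f ρ₁) :=
    fun i hi => weight_eq_of_sInf_eq_sSup rfl (by omega) hi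
  have hk₂ : ∀ i ∈ maximizers w f ρ₂, w i = sInf (maximizerWeights w f ρ₁) :=
    fun i hi => weight_eq_of_sInf_eq_sSup (by omega) (by omega) hi
  exact hne <| (maximizers_subset_of_weight_eq (h12.trans h2) h2.le hk₁ hk₂).antisymm
    (maximizers_subset_of_weight_eq h2 (h12.trans h2).le hk₂ hk₁)

theorem sum_maximizerRank_le {X : Type*} (s : Finset X) (fs : X → ι → ℝ) {m : ℕ}
    (hm : ∀ i, w i ≤ m) (ρ : ℝ) : ∑ x ∈ s, maximizerRank w (fs x) ρ ≤ s.card * (2 * m) := by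
  simpa using Finset.sum_le_sum fun x _ => maximizerRank_le (f := fs x) hm ρ

theorem sum_maximizerRank_lt {X : Type*} {s : Finset X} {fs : X → ι → ℝ} {ρ₁ ρ₂ : ℝ}
    (h12 : ρ₁ < ρ₂) (h2 : ρ₂ < 1) (hne : ∃ x ∈ s, maximizers w (fs x) ρ₁ ≠ maximizers w (fs x) ρ₂) :
    ∑ x ∈ s, maximizerRank w (fs x) ρ₁ < ∑ x ∈ s, maximizerRank w (fs x) ρ₂ := by
  obtain ⟨x, hx, hne⟩ := hne
  exact Finset.sum_lt_sum
    (fun x _ => monotoneOn_maximizerRank (h12.trans h2).le (Set.mem_Iic.2 h2.le) h12.le)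
    ⟨x, hx, maximizerRank_lt_of_maximizers_ne h12 h2 hne⟩

end Maximizers

theorem Finset.card_le_of_strictMonoOn {α : Type*} [LinearOrder α] {T : Finset α} {t : α}
    (hT : ∀ a ∈ T, a ≤ t) {G : α → ℕ} {B : ℕ} (hG : StrictMonoOn G {a | a ∈ T ∧ a < t})
    (hB : ∀ a, G a ≤ B) : T.card ≤ B + 2 := by
  classical
  have hbelow : (T.filter (· < t)).card ≤ B + 1 := by
    simpa using Finset.card_le_card_of_injOn (t := Finset.range (B + 1)) G
      (fun a _ => Finset.mem_range.2 (Nat.lt_succ_of_le (hB a)))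
      (hG.injOn.mono fun a ha => by simpa using ha)
  have hsub : T ⊆ T.filter (· < t) ∪ {t} := fun a ha => by
    rcases (hT a ha).lt_or_eq with h | h <;> simp [ha, h]
  calc T.card ≤ (T.filter (· < t) ∪ {t}).card := Finset.card_le_card hsub
    _ ≤ (T.filter (· < t)).card + 1 := Finset.card_union_le _ _
    _ ≤ B + 2 := by omega

theorem Fold.card_le_s18 {n : ℕ} (φ : Fold n) : φ.1.card ≤ n - 1 := by
  obtain ⟨φ, hbounds, hdisjoint, -⟩ := φ
  have hinj : Set.InjOn Prod.fst (φ : Set (ℕ × ℕ)) := fun p hp q hq hpq => by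
    by_contra hne
    exact (hdisjoint p hp q hq hne).1 hpq
  have hsub : φ.image Prod.fst ⊆ Finset.Icc 1 (n - 1) := by
    simp only [Finset.image_subset_iff, Finset.mem_Icc]
    intro p hp
    have := hbounds p hp
    omega
  calc φ.card = (φ.image Prod.fst).card := (Finset.card_image_of_injOn hinj).symm
    _ ≤ (Finset.Icc 1 (n - 1)).card := Finset.card_le_card hsub
    _ = n - 1 := by simp

instance (n : ℕ) : Finite (Fold n) := by
  refine Set.Finite.to_subtype
    ((Finset.Icc 1 n ×ˢ Finset.Icc 1 n).powerset.finite_toSet.subset fun φ hφ => ?_)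
  simp only [Finset.coe_powerset, Set.mem_preimage, Set.mem_powerset_iff, Finset.coe_subset]
  intro p hp
  have := hφ.1 p hp
  simp only [Finset.mem_product, Finset.mem_Icc]
  omega

instance (n : ℕ) : Nonempty (Fold n) :=
  ⟨⟨∅, by simp [IsFolding]⟩⟩

theorem two_pow_le_of_le_mul_pred {n N : ℕ} (hn : 2 ≤ n) (h : 2 ^ N ≤ N * (2 * (n - 1)) + 2) :
    2 ^ N ≤ n ^ 2 * N + 1 := by
  rcases N.eq_zero_or_pos with rfl | hN
  · simp
  obtain ⟨m, rfl⟩ := Nat.exists_eq_add_of_le hn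
  rw [show 2 + m - 1 = m + 1 by omega] at h
  nlinarith [Nat.zero_le (m * m * N)]

/-- if for each instance `x` the utility `ρ ↦ u_ρ(x)` is constant on every
subset of `[0,1]` on which the set of maximizers of `ρ·|φ| + (1 − ρ)·s_x(φ)` is constant,
then every finite set of instances pseudo-shattered by `U = {u_ρ : ρ ∈ [0,1]}` has size
`N` satisfying `2^N ≤ n²·N + 1`. -/
theorem stmt_18 {X : Type*} (n : ℕ) (hn : 2 ≤ n)
    (sx : X → Fold n → ℝ) (u : ℝ → X → ℝ)
    (hconst : ∀ x : X, ∀ ρ₁ ∈ Set.Icc (0 : ℝ) 1, ∀ ρ₂ ∈ Set.Icc (0 : ℝ) 1,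
      (∀ φ : Fold n,
        (∀ φ', Vval (sx x) ρ₁ φ' ≤ Vval (sx x) ρ₁ φ) ↔
        (∀ φ', Vval (sx x) ρ₂ φ' ≤ Vval (sx x) ρ₂ φ)) →
      u ρ₁ x = u ρ₂ x)
    (s : Finset X)
    (hshatter : ∃ z : X → ℝ, ∀ b : X → Bool, ∃ ρ ∈ Set.Icc (0 : ℝ) 1,
      ∀ x ∈ s, (z x ≤ u ρ x ↔ b x = true)) :
    2 ^ s.card ≤ n ^ 2 * s.card + 1 := by
  classical
  set w : Fold n → ℕ := fun φ => φ.1.card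
  obtain ⟨z, hz⟩ := hshatter
  choose ρ hρ hpattern using fun c : s → Bool => hz fun x => if h : x ∈ s then c ⟨x, h⟩ else false
  have hsep : ∀ c₁ c₂, c₁ ≠ c₂ →
      ∃ x ∈ s, maximizers w (sx x) (ρ c₁) ≠ maximizers w (sx x) (ρ c₂) := by
    intro c₁ c₂ hne
    by_contra! hsame
    refine hne (funext fun ⟨x, hx⟩ => Bool.eq_iff_iff.2 ?_)
    have hu := hconst x _ (hρ c₁) _ (hρ c₂) (Set.ext_iff.1 (hsame x hx))
    have h₁ := hpattern c₁ x hx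
    rw [hu] at h₁
    simpa [hx] using h₁.symm.trans (hpattern c₂ x hx)
  have hinj : Function.Injective ρ := fun c₁ c₂ h => by
    by_contra hne
    obtain ⟨x, -, hx⟩ := hsep c₁ c₂ hne
    exact hx (h ▸ rfl)
  have hcount := Finset.card_le_of_strictMonoOn (T := Finset.univ.image ρ) (t := 1)
    (G := fun r => ∑ x ∈ s, maximizerRank w (sx x) r) (B := s.card * (2 * (n - 1)))
    (by simp only [Finset.mem_image]; rintro _ ⟨c, -, rfl⟩; exact (hρ c).2)
    (by
      rintro _ ⟨ha, -⟩ _ ⟨hb, hb1⟩ hab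
      obtain ⟨c₁, -, rfl⟩ := Finset.mem_image.1 ha
      obtain ⟨c₂, -, rfl⟩ := Finset.mem_image.1 hb
      exact sum_maximizerRank_lt hab hb1 (hsep c₁ c₂ fun h => hab.ne (h ▸ rfl)))
    (sum_maximizerRank_le s sx Fold.card_le_s18)
  rw [Finset.card_image_of_injective _ hinj, Finset.card_univ, Fintype.card_fun,
    Fintype.card_bool, Fintype.card_coe] at hcount
  exact two_pow_le_of_le_mul_pred hn hcount
end

section
/- Fix n ≥ 2. Let X be any set of problem instances and suppose that for each x ∈ X there are reals c^x_{ij} for all 1 ≤ i < j ≤ n, and for each ρ ≥ 0 a value u_ρ(x) ∈ ℝ, with the property that ρ ↦ u_ρ(x) is constant on every subset of [0,∞) on which the set of maximizers argmax_T Σ_{(i,j)∈T} c^x_{ij}·(j−i)^{−ρ}, over all TAD sets T on {1,…,n}, is constant. Then every set of instances pseudo-shattered by U = {u_ρ : ρ ≥ 0} has size N satisfying 2^N ≤ (2n²·4^{n²})·N + 1; in particular pdim(U) = O(n²). -/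
/-!
Fix an instance and two candidate sets `T, T'`. Writing `(j - i)^(-ρ) = exp (-ρ log (j - i))`,
the difference `h_T(ρ) - h_T'(ρ)` is an exponential sum with at most `n²` terms, so by Rolle's
theorem it either vanishes identically or has at most `n²` zeros. Let `W` collect these zeros
over the `N` instances and the `4^(n²)` pairs `T, T'`. On each of the `2|W| + 1` cells into which
`W` cuts `ℝ`, no comparison `h_T' ≤ h_T` changes, so every set of maximizers and hence every
utility is constant there. Pseudo-shattering needs `2^N` parameters with pairwise different
behaviour, so `2^N ≤ 2|W| + 1`.
-/

open Finset Real

theorem exists_card_le_card_add_one_of_hasDerivAt {g g' : ℝ → ℝ}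
    (hg : ∀ x, HasDerivAt g (g' x) x) {Z : Finset ℝ} (hZ : ∀ x ∈ Z, g x = 0) :
    ∃ Z' : Finset ℝ, (∀ y ∈ Z', g' y = 0) ∧ Z.card ≤ Z'.card + 1 := by
  classical
  have hRolle : ∀ p ∈ (Z ×ˢ Z).filter (fun p => p.1 < p.2), ∃ y ∈ Set.Ioo p.1 p.2, g' y = 0 := by
    intro p hp
    simp only [Finset.mem_filter, Finset.mem_product] at hp
    exact exists_hasDerivAt_eq_zero hp.2 (fun x _ => (hg x).continuousAt.continuousWithinAt)
      (by rw [hZ _ hp.1.1, hZ _ hp.1.2]) fun x _ => hg x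
  choose! r hr hr' using hRolle
  refine ⟨((Z ×ˢ Z).filter (fun p => p.1 < p.2)).image r, ?_, card_le_of_interleaved ?_⟩
  · simp only [Finset.mem_image]
    rintro y ⟨p, hp, rfl⟩
    exact hr' p hp
  · intro x hx y hy hxy _
    have hp : (x, y) ∈ (Z ×ˢ Z).filter (fun p => p.1 < p.2) := by simp [hx, hy, hxy]
    exact ⟨r (x, y), mem_image_of_mem r hp, hr _ hp⟩

theorem hasDerivAt_sum_mul_exp {ι : Type*} (s : Finset ι) (a t : ι → ℝ) (x : ℝ) :
    HasDerivAt (fun x => ∑ i ∈ s, a i * exp (t i * x)) (∑ i ∈ s, a i * t i * exp (t i * x)) x := by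
  refine HasDerivAt.fun_sum fun i _ => ?_
  have := (((hasDerivAt_id x).const_mul (t i)).exp).const_mul (a i)
  simpa [mul_comm, mul_left_comm, mul_assoc] using this

theorem card_lt_card_of_sum_mul_exp_eq_zero {ι : Type*} {s : Finset ι} (hs : s.Nonempty)
    {a t : ι → ℝ} (ha : ∀ i ∈ s, a i ≠ 0) (ht : Set.InjOn t s) {Z : Finset ℝ}
    (hZ : ∀ x ∈ Z, ∑ i ∈ s, a i * exp (t i * x) = 0) : Z.card < s.card := by
  classical
  induction s using Finset.induction_on generalizing a t Z with
  | empty => exact absurd hs Finset.not_nonempty_empty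
  | insert i₀ s hi₀ ih =>
    rcases s.eq_empty_or_nonempty with rfl | hs'
    · have : Z = ∅ := Finset.eq_empty_of_forall_notMem fun x hx => by
        simpa [ha i₀ (mem_insert_self _ _), exp_ne_zero] using hZ x hx
      simp [this]
    -- dividing by `exp (t i₀ * x)` makes the `i₀` term constant, so it dies on differentiation
    have hg : ∀ x ∈ Z, ∑ i ∈ insert i₀ s, a i * exp ((t i - t i₀) * x) = 0 := fun x hx => by
      have : ∑ i ∈ insert i₀ s, a i * exp ((t i - t i₀) * x) =
          (∑ i ∈ insert i₀ s, a i * exp (t i * x)) * exp (-(t i₀ * x)) := by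
        rw [Finset.sum_mul]
        refine sum_congr rfl fun i _ => ?_
        rw [mul_assoc, ← exp_add]
        ring_nf
      rw [this, hZ x hx, zero_mul]
    obtain ⟨Z', hg', hcard⟩ := exists_card_le_card_add_one_of_hasDerivAt
      (hasDerivAt_sum_mul_exp _ a (fun i => t i - t i₀)) hg
    have hZ' : ∀ y ∈ Z', ∑ i ∈ s, a i * (t i - t i₀) * exp ((t i - t i₀) * y) = 0 := by
      intro y hy
      simpa [Finset.sum_insert hi₀] using hg' y hy
    have hne : ∀ i ∈ s, t i ≠ t i₀ := fun i hi h =>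
      hi₀ (ht (mem_insert_of_mem hi) (mem_insert_self _ _) h ▸ hi)
    have := ih hs' (a := fun i => a i * (t i - t i₀)) (t := fun i => t i - t i₀)
      (fun i hi => mul_ne_zero (ha i (mem_insert_of_mem hi)) (sub_ne_zero.2 (hne i hi)))
      (fun i hi j hj h => ht (mem_insert_of_mem hi) (mem_insert_of_mem hj) (by simpa using h))
      hZ'
    rw [card_insert_of_notMem hi₀]
    omega

theorem sum_mul_exp_eq_zero_or_exists_finset {ι : Type*} (s : Finset ι) (a t : ι → ℝ) :
    (∀ x, ∑ i ∈ s, a i * exp (t i * x) = 0) ∨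
      ∃ Z : Finset ℝ, Z.card ≤ s.card ∧ ∀ x, ∑ i ∈ s, a i * exp (t i * x) = 0 → x ∈ Z := by
  classical
  set b : ℝ → ℝ := fun τ => ∑ i ∈ s with t i = τ, a i
  set E := (s.image t).filter (fun τ => b τ ≠ 0)
  have hgroup : ∀ x, ∑ i ∈ s, a i * exp (t i * x) = ∑ τ ∈ E, b τ * exp (τ * x) := fun x => by
    rw [sum_filter_of_ne fun τ _ h => left_ne_zero_of_mul h]
    refine (sum_image' _ fun i _ => ?_).symm
    rw [sum_mul]
    exact sum_congr rfl fun j hj => by rw [(Finset.mem_filter.1 hj).2]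
  simp only [hgroup]
  rcases E.eq_empty_or_nonempty with hE | hE
  · left
    simp [hE]
  right
  have hlt : ∀ Z : Finset ℝ, (∀ x ∈ Z, ∑ τ ∈ E, b τ * exp (τ * x) = 0) → Z.card < E.card :=
    fun Z hZ => card_lt_card_of_sum_mul_exp_eq_zero hE (fun τ hτ => (Finset.mem_filter.1 hτ).2)
      (Set.injOn_id _) hZ
  have hfin : {x | ∑ τ ∈ E, b τ * exp (τ * x) = 0}.Finite := by
    by_contra hinf
    obtain ⟨Z, hZ, hZcard⟩ := Set.Infinite.exists_subset_card_eq hinf E.card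
    exact (hlt Z hZ).ne hZcard
  refine ⟨hfin.toFinset, ?_, fun x hx => hfin.mem_toFinset.2 hx⟩
  calc hfin.toFinset.card ≤ E.card := (hlt _ fun x hx => hfin.mem_toFinset.1 hx).le
    _ ≤ (s.image t).card := card_filter_le _ _
    _ ≤ s.card := card_image_le

theorem zero_le_iff_zero_le_of_forall_ne_zero {f : ℝ → ℝ} {x y : ℝ}
    (hf : ContinuousOn f (Set.uIcc x y)) (h0 : ∀ z ∈ Set.uIcc x y, f z ≠ 0) :
    0 ≤ f x ↔ 0 ≤ f y := by
  have hx := h0 x Set.left_mem_uIcc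
  have hy := h0 y Set.right_mem_uIcc
  have hivt : (0 : ℝ) ∉ Set.uIcc (f x) (f y) := fun h => by
    obtain ⟨z, hz, hz0⟩ := intermediate_value_uIcc hf h
    exact h0 z hz hz0
  rw [Set.mem_uIcc] at hivt
  grind

theorem exists_finset_zero_le_sum_mul_exp_iff {ι : Type*} (s : Finset ι) (a t : ι → ℝ) :
    ∃ Z : Finset ℝ, Z.card ≤ s.card ∧ ∀ x y, (∀ z ∈ Z, z ∉ Set.uIcc x y) →
      (0 ≤ ∑ i ∈ s, a i * exp (t i * x) ↔ 0 ≤ ∑ i ∈ s, a i * exp (t i * y)) := by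
  rcases sum_mul_exp_eq_zero_or_exists_finset s a t with h | ⟨Z, hZcard, hZ⟩
  · exact ⟨∅, by simp, fun x y _ => by simp [h]⟩
  refine ⟨Z, hZcard, fun x y hxy => ?_⟩
  exact zero_le_iff_zero_le_of_forall_ne_zero (f := fun x => ∑ i ∈ s, a i * exp (t i * x))
    (by fun_prop) fun z hz h => hxy z (hZ z h) hz

/-- `x` lies in the `cellIndex Z x`-th, counting from `0` and from the left, of the `2 * #Z + 1`
cells (the points of `Z` and the open intervals between them) into which `Z` cuts `ℝ`. -/
noncomputable def cellIndex (Z : Finset ℝ) (x : ℝ) : ℕ :=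
  #{z ∈ Z | z < x} + #{z ∈ Z | z ≤ x}

theorem cellIndex_lt (Z : Finset ℝ) (x : ℝ) : cellIndex Z x < 2 * Z.card + 1 := by
  have h₁ := card_filter_le Z (· < x)
  have h₂ := card_filter_le Z (· ≤ x)
  unfold cellIndex
  omega

theorem forall_notMem_Icc_of_cellIndex_eq {Z : Finset ℝ} {x y : ℝ} (hxy : x < y)
    (h : cellIndex Z x = cellIndex Z y) : ∀ z ∈ Z, z ∉ Set.Icc x y := by
  have h₁ : {z ∈ Z | z < x} ⊆ {z ∈ Z | z ≤ x} := monotone_filter_right _ fun _ _ => le_of_lt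
  have h₂ : {z ∈ Z | z ≤ x} ⊆ {z ∈ Z | z < y} :=
    monotone_filter_right _ fun _ _ hz => hz.trans_lt hxy
  have h₃ : {z ∈ Z | z < y} ⊆ {z ∈ Z | z ≤ y} := monotone_filter_right _ fun _ _ => le_of_lt
  have hc₁ := card_le_card h₁
  have hc₂ := card_le_card h₂
  have hc₃ := card_le_card h₃
  unfold cellIndex at h
  have heq : {z ∈ Z | z < x} = {z ∈ Z | z ≤ y} :=
    eq_of_subset_of_card_le (h₁.trans (h₂.trans h₃)) (by omega)
  intro z hz ⟨hxz, hzy⟩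
  have : z ∈ {z ∈ Z | z < x} := heq ▸ mem_filter.2 ⟨hz, hzy⟩
  exact (mem_filter.1 this).2.not_ge hxz

theorem eq_or_forall_notMem_uIcc_of_cellIndex_eq {Z : Finset ℝ} {x y : ℝ}
    (h : cellIndex Z x = cellIndex Z y) : x = y ∨ ∀ z ∈ Z, z ∉ Set.uIcc x y := by
  rcases lt_trichotomy x y with hxy | hxy | hxy
  · exact .inr (by rw [Set.uIcc_of_le hxy.le]; exact forall_notMem_Icc_of_cellIndex_eq hxy h)
  · exact .inl hxy
  · exact .inr (by rw [Set.uIcc_of_ge hxy.le]; exact forall_notMem_Icc_of_cellIndex_eq hxy h.symm)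

def tadPairs (n : ℕ) : Finset (ℕ × ℕ) :=
  (Icc 1 n ×ˢ Icc 1 n).filter fun p => p.1 < p.2

theorem card_tadPairs_le (n : ℕ) : (tadPairs n).card ≤ n ^ 2 :=
  (card_filter_le _ _).trans (by simp [sq])

theorem IsTADSet.subset_tadPairs {n : ℕ} {T : Finset (ℕ × ℕ)} (hT : IsTADSet n T) :
    T ⊆ tadPairs n := fun p hp => by
  obtain ⟨h₁, h₂, h₃⟩ := hT.1 p hp
  simp only [tadPairs, mem_filter, mem_product, mem_Icc]
  omega

theorem hTAD_eq_sum_mul_exp (c : ℕ → ℕ → ℝ) {T U : Finset (ℕ × ℕ)} (hTU : T ⊆ U)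
    (hU : ∀ p ∈ U, p.1 < p.2) (ρ : ℝ) :
    hTAD c T ρ = ∑ p ∈ U,
      (if p ∈ T then c p.1 p.2 else 0) * exp (-log ((p.2 : ℝ) - p.1) * ρ) := by
  classical
  simp only [ite_mul, zero_mul]
  rw [sum_ite_mem, inter_eq_right.2 hTU, hTAD]
  refine sum_congr rfl fun p hp => ?_
  have hpos : (0 : ℝ) < (p.2 : ℝ) - p.1 := sub_pos.2 (Nat.cast_lt.2 (hU p (hTU hp)))
  rw [rpow_def_of_pos hpos, neg_mul, mul_neg]

theorem exists_finset_hTAD_le_iff (c : ℕ → ℕ → ℝ) {T T' U : Finset (ℕ × ℕ)} (hT : T ⊆ U)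
    (hT' : T' ⊆ U) (hU : ∀ p ∈ U, p.1 < p.2) :
    ∃ Z : Finset ℝ, Z.card ≤ U.card ∧ ∀ ρ₁ ρ₂, (∀ z ∈ Z, z ∉ Set.uIcc ρ₁ ρ₂) →
      (hTAD c T' ρ₁ ≤ hTAD c T ρ₁ ↔ hTAD c T' ρ₂ ≤ hTAD c T ρ₂) := by
  classical
  obtain ⟨Z, hZcard, hZ⟩ := exists_finset_zero_le_sum_mul_exp_iff U
    (fun p => (if p ∈ T then c p.1 p.2 else 0) - (if p ∈ T' then c p.1 p.2 else 0))
    (fun p => -log ((p.2 : ℝ) - p.1))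
  have hdiff : ∀ ρ, hTAD c T' ρ ≤ hTAD c T ρ ↔ 0 ≤ ∑ p ∈ U,
      ((if p ∈ T then c p.1 p.2 else 0) - (if p ∈ T' then c p.1 p.2 else 0)) *
        exp (-log ((p.2 : ℝ) - p.1) * ρ) := fun ρ => by
    rw [← sub_nonneg, hTAD_eq_sum_mul_exp c hT hU, hTAD_eq_sum_mul_exp c hT' hU,
      ← sum_sub_distrib]
    simp only [sub_mul]
  exact ⟨Z, hZcard, fun ρ₁ ρ₂ h => by rw [hdiff, hdiff]; exact hZ ρ₁ ρ₂ h⟩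

def IsTADMaximizer (n : ℕ) (c : ℕ → ℕ → ℝ) (T : Finset (ℕ × ℕ)) (ρ : ℝ) : Prop :=
  ∀ T', IsTADSet n T' → hTAD c T' ρ ≤ hTAD c T ρ

theorem exists_finset_isTADMaximizer_iff (n : ℕ) (c : ℕ → ℕ → ℝ) :
    ∃ Z : Finset ℝ, Z.card ≤ n ^ 2 * 4 ^ n ^ 2 ∧ ∀ ρ₁ ρ₂, (∀ z ∈ Z, z ∉ Set.uIcc ρ₁ ρ₂) →
      ∀ T, IsTADSet n T → (IsTADMaximizer n c T ρ₁ ↔ IsTADMaximizer n c T ρ₂) := by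
  classical
  set P := tadPairs n
  have hP : ∀ p ∈ P, p.1 < p.2 := fun p hp => (mem_filter.1 hp).2
  have hpair : ∀ TT' ∈ P.powerset ×ˢ P.powerset, ∃ Z : Finset ℝ, Z.card ≤ P.card ∧
      ∀ ρ₁ ρ₂, (∀ z ∈ Z, z ∉ Set.uIcc ρ₁ ρ₂) →
        (hTAD c TT'.2 ρ₁ ≤ hTAD c TT'.1 ρ₁ ↔ hTAD c TT'.2 ρ₂ ≤ hTAD c TT'.1 ρ₂) := by
    intro TT' h
    simp only [mem_product, mem_powerset] at h
    exact exists_finset_hTAD_le_iff c h.1 h.2 hP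
  choose! Z hZcard hZ using hpair
  refine ⟨(P.powerset ×ˢ P.powerset).biUnion Z, ?_, fun ρ₁ ρ₂ hρ T hT => ?_⟩
  · calc _ ≤ (P.powerset ×ˢ P.powerset).card * P.card := card_biUnion_le_card_mul _ _ _ hZcard
      _ = 4 ^ P.card * P.card := by simp [card_product, ← mul_pow]
      _ ≤ 4 ^ n ^ 2 * n ^ 2 :=
        Nat.mul_le_mul (Nat.pow_le_pow_right (by norm_num) (card_tadPairs_le n))
          (card_tadPairs_le n)
      _ = n ^ 2 * 4 ^ n ^ 2 := mul_comm _ _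
  have hTT' : ∀ T', IsTADSet n T' → (T, T') ∈ P.powerset ×ˢ P.powerset := fun T' hT' => by
    simp [hT.subset_tadPairs, hT'.subset_tadPairs, P]
  exact forall₂_congr fun T' hT' =>
    hZ (T, T') (hTT' T' hT') ρ₁ ρ₂ fun z hz => hρ z (mem_biUnion.2 ⟨_, hTT' T' hT', hz⟩)

theorem stmt_19_general {X : Type*} (n : ℕ)
    (c : X → ℕ → ℕ → ℝ) (u : ℝ → X → ℝ)
    (hconst : ∀ x : X, ∀ ρ₁ ∈ Set.Ici (0 : ℝ), ∀ ρ₂ ∈ Set.Ici (0 : ℝ),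
      (∀ T : Finset (ℕ × ℕ), IsTADSet n T →
        ((∀ T', IsTADSet n T' → hTAD (c x) T' ρ₁ ≤ hTAD (c x) T ρ₁) ↔
         (∀ T', IsTADSet n T' → hTAD (c x) T' ρ₂ ≤ hTAD (c x) T ρ₂))) →
      u ρ₁ x = u ρ₂ x)
    (s : Finset X)
    (hshatter : ∃ z : X → ℝ, ∀ b : X → Bool, ∃ ρ ∈ Set.Ici (0 : ℝ),
      ∀ x ∈ s, (z x ≤ u ρ x ↔ b x = true)) :
    2 ^ s.card ≤ (2 * n ^ 2 * 4 ^ (n ^ 2)) * s.card + 1 := by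
  classical
  obtain ⟨z, hz⟩ := hshatter
  choose ρ hρ₀ hρ using hz
  choose Z hZcard hZ using fun x => exists_finset_isTADMaximizer_iff n (c x)
  set W := s.biUnion Z
  have hu : ∀ b b', cellIndex W (ρ b) = cellIndex W (ρ b') → ∀ x ∈ s, u (ρ b) x = u (ρ b') x := by
    intro b b' h x hx
    rcases eq_or_forall_notMem_uIcc_of_cellIndex_eq h with h | h
    · rw [h]
    exact hconst x _ (hρ₀ b) _ (hρ₀ b') (hZ x _ _ fun w hw => h w (mem_biUnion.2 ⟨x, hx, hw⟩))
  have hmem : ∀ A : Finset X, ∀ x ∈ s, (z x ≤ u (ρ fun y => decide (y ∈ A)) x ↔ x ∈ A) :=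
    fun A x hx => by simpa using hρ (fun y => decide (y ∈ A)) x hx
  have hinj :
      Set.InjOn (fun A : Finset X => cellIndex W (ρ fun y => decide (y ∈ A))) s.powerset := by
    intro A hA B hB h
    ext x
    by_cases hx : x ∈ s
    · rw [← hmem A x hx, ← hmem B x hx, hu _ _ h x hx]
    · exact iff_of_false (fun h => hx (mem_powerset.1 hA h)) fun h => hx (mem_powerset.1 hB h)
  calc 2 ^ s.card = s.powerset.card := (card_powerset s).symm
    _ ≤ (range (2 * W.card + 1)).card :=
      card_le_card_of_injOn _ (fun A _ => mem_range.2 (cellIndex_lt W _)) hinj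
    _ ≤ 2 * (s.card * (n ^ 2 * 4 ^ n ^ 2)) + 1 := by
      rw [card_range]
      gcongr
      exact card_biUnion_le_card_mul s Z _ fun x _ => hZcard x
    _ = 2 * n ^ 2 * 4 ^ n ^ 2 * s.card + 1 := by ring

/-- if for each instance `x` the utility `ρ ↦ u_ρ(x)` is constant on every
subset of `[0,∞)` on which the set of maximizers of `T ↦ Σ_{(i,j)∈T} c^x_{ij}·(j−i)^{−ρ}`
(over all TAD sets on `{1,…,n}`) is constant, then every finite set of instances
pseudo-shattered by `U = {u_ρ : ρ ≥ 0}` has size `N` satisfying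
`2^N ≤ (2n²·4^{n²})·N + 1`. -/
theorem stmt_19 {X : Type*} (n : ℕ) (hn : 2 ≤ n)
    (c : X → ℕ → ℕ → ℝ) (u : ℝ → X → ℝ)
    (hconst : ∀ x : X, ∀ ρ₁ ∈ Set.Ici (0 : ℝ), ∀ ρ₂ ∈ Set.Ici (0 : ℝ),
      (∀ T : Finset (ℕ × ℕ), IsTADSet n T →
        ((∀ T', IsTADSet n T' → hTAD (c x) T' ρ₁ ≤ hTAD (c x) T ρ₁) ↔
         (∀ T', IsTADSet n T' → hTAD (c x) T' ρ₂ ≤ hTAD (c x) T ρ₂))) →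
      u ρ₁ x = u ρ₂ x)
    (s : Finset X)
    (hshatter : ∃ z : X → ℝ, ∀ b : X → Bool, ∃ ρ ∈ Set.Ici (0 : ℝ),
      ∀ x ∈ s, (z x ≤ u ρ x ↔ b x = true)) :
    2 ^ s.card ≤ (2 * n ^ 2 * 4 ^ (n ^ 2)) * s.card + 1 :=
  stmt_19_general n c u hconst s hshatter
end
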